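/- arXiv:math/0308009 — 6 statements merged into one kernel-verified Lean document; each statement's English description precedes it below -/
import Mathlib

section
/- Let χ:[0,∞)→ℝ be measurable with χ(t)=1 for 0 ≤ t ≤ 1 and 0 ≤ χ(t) ≤ 1 for all t, and let σ be the corresponding solution of the integral equation. Then for every u ≥ 0 and every even integer n ≥ 0, ∑_{j=0}^{n} ((−1)^j / j!)·I_j(u;χ) ≥ σ(u) ≥ ∑_{j=0}^{n+1} ((−1)^j / j!)·I_j(u;χ). -/
open MeasureTheory Filter Real

noncomputable section

/-- `χ` is measurable, equals `1` on `[0,1]`, and takes values in `[0,1]` on `[0,∞)`. -/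
def ChiOK (χ : ℝ → ℝ) : Prop :=
  Measurable χ ∧ (∀ t, 0 ≤ t → t ≤ 1 → χ t = 1) ∧ (∀ t, 0 ≤ t → χ t ∈ Set.Icc (0:ℝ) 1)

/-- `σ` is the (unique) continuous solution of `u σ(u) = ∫_0^u χ(t) σ(u-t) dt` with
`σ = 1` on `[0,1]`. -/
def IsSoln (χ σ : ℝ → ℝ) : Prop :=
  ContinuousOn σ (Set.Ici 0) ∧ (∀ u, 0 ≤ u → u ≤ 1 → σ u = 1) ∧
    ∀ u, 1 < u → u * σ u = ∫ t in (0:ℝ)..u, χ t * σ (u - t)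

/-- `E(u) = exp(∫_0^u (1-χ(t))/t dt)`. -/
def Efn (χ : ℝ → ℝ) (u : ℝ) : ℝ := Real.exp (∫ t in (0:ℝ)..u, (1 - χ t) / t)

/-- `I_j(u;χ) = ∫_{t_1,…,t_j ≥ 1, t_1+⋯+t_j ≤ u} ∏_i (1-χ(t_i))/t_i dt`, with
`I_0(u;χ) = 1`. -/
def Ifn (χ : ℝ → ℝ) : ℕ → ℝ → ℝ
  | 0, _ => 1
  | (j+1), u => ∫ t in {t : Fin (j+1) → ℝ | (∀ i, 1 ≤ t i) ∧ ∑ i, t i ≤ u},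
      ∏ i, (1 - χ (t i)) / t i

namespace GS

variable {χ : ℝ → ℝ}

/-- The integration region. -/
def reg (m : ℕ) (u : ℝ) : Set (Fin m → ℝ) := {x | (∀ i, 1 ≤ x i) ∧ ∑ i, x i ≤ u}

/-- Product integrand. -/
def Ff (χ : ℝ → ℝ) (m : ℕ) (x : Fin m → ℝ) : ℝ := ∏ i, (1 - χ (x i)) / x i

/-- The set-integral version of `Ifn`. -/
def Iprim (χ : ℝ → ℝ) (m : ℕ) (u : ℝ) : ℝ := ∫ x in reg m u, Ff χ m x

lemma Ifn_succ (j : ℕ) (u : ℝ) : Ifn χ (j+1) u = Iprim χ (j+1) u := rfl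

def Gg (χ : ℝ → ℝ) (j : ℕ) (x : Fin (j+1) → ℝ) : ℝ :=
  (1 - χ (x (Fin.last j))) * ∏ i : Fin j, (1 - χ (x i.castSucc)) / x i.castSucc

def Jint (χ : ℝ → ℝ) (j : ℕ) (t : ℝ) : ℝ := ∫ x in reg (j+1) t, Gg χ j x

lemma q_nonneg (hχ : ChiOK χ) {t : ℝ} (ht : 0 ≤ t) : 0 ≤ 1 - χ t :=
  sub_nonneg.2 (hχ.2.2 t ht).2

lemma q_le_one (hχ : ChiOK χ) {t : ℝ} (ht : 0 ≤ t) : 1 - χ t ≤ 1 := by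
  have := (hχ.2.2 t ht).1; linarith

lemma q_eq_zero (hχ : ChiOK χ) {t : ℝ} (h0 : 0 ≤ t) (h1 : t ≤ 1) : 1 - χ t = 0 := by
  rw [hχ.2.1 t h0 h1]; ring

lemma g_nonneg (hχ : ChiOK χ) {t : ℝ} (ht : 1 ≤ t) : 0 ≤ (1 - χ t) / t :=
  div_nonneg (q_nonneg hχ (by linarith)) (by linarith)

lemma g_le_one (hχ : ChiOK χ) {t : ℝ} (ht : 1 ≤ t) : (1 - χ t) / t ≤ 1 := by
  rw [div_le_one (by linarith)]
  exact (q_le_one hχ (by linarith)).trans ht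

lemma measurableSet_reg (m : ℕ) (u : ℝ) : MeasurableSet (reg m u) := by
  have h1 : MeasurableSet {x : Fin m → ℝ | ∀ i, 1 ≤ x i} := by
    have : {x : Fin m → ℝ | ∀ i, 1 ≤ x i} = ⋂ i, {x : Fin m → ℝ | 1 ≤ x i} := by
      ext x; simp
    rw [this]
    exact MeasurableSet.iInter fun i => measurableSet_le measurable_const (measurable_pi_apply i)
  have h2 : MeasurableSet {x : Fin m → ℝ | ∑ i, x i ≤ u} :=
    measurableSet_le (Finset.measurable_sum _ fun i _ => measurable_pi_apply i) measurable_const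
  exact h1.inter h2

lemma mem_reg_le {m : ℕ} {u : ℝ} {x : Fin m → ℝ} (hx : x ∈ reg m u) (k : Fin m) :
    x k ≤ u := by
  obtain ⟨h1, h2⟩ := hx
  calc x k ≤ ∑ i, x i := Finset.single_le_sum (f := fun i => x i)
        (fun i _ => by linarith [h1 i]) (Finset.mem_univ k)
    _ ≤ u := h2

lemma reg_subset_Icc (m : ℕ) (u : ℝ) : reg m u ⊆ Set.Icc 1 (fun _ => u) := by
  intro x hx
  constructor
  · intro i; exact hx.1 i
  · intro i; exact mem_reg_le hx i

lemma reg_mono {m : ℕ} {u v : ℝ} (h : u ≤ v) : reg m u ⊆ reg m v :=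
  fun x hx => ⟨hx.1, hx.2.trans h⟩

lemma volume_Icc_lt_top {m : ℕ} (a b : Fin m → ℝ) : volume (Set.Icc a b) < ⊤ := by
  rw [← Set.pi_univ_Icc]
  rw [volume_pi_pi]
  exact WithTop.prod_lt_top fun i _ => (Real.volume_Icc (a := a i) (b := b i)) ▸ ENNReal.ofReal_lt_top

lemma volume_reg_lt_top (m : ℕ) (u : ℝ) : volume (reg m u) < ⊤ :=
  lt_of_le_of_lt (measure_mono (reg_subset_Icc m u)) (volume_Icc_lt_top _ _)

lemma reg_empty {m : ℕ} {u : ℝ} (h : u < 0) : reg m u = ∅ := by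
  ext x
  simp only [reg, Set.mem_setOf_eq, Set.mem_empty_iff_false, iff_false, not_and]
  intro h1 h2
  have : (0:ℝ) ≤ ∑ i, x i := Finset.sum_nonneg fun i _ => by linarith [h1 i]
  linarith

lemma one_le_sum_of_mem {m : ℕ} {u : ℝ} {x : Fin (m+1) → ℝ} (hx : x ∈ reg (m+1) u) :
    1 ≤ ∑ i, x i := by
  calc (1:ℝ) ≤ x 0 := hx.1 0
    _ ≤ ∑ i, x i := Finset.single_le_sum (f := fun i => x i)
        (fun i _ => by linarith [hx.1 i]) (Finset.mem_univ 0)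

lemma reg_succ_empty {m : ℕ} {u : ℝ} (h : u < 1) : reg (m+1) u = ∅ := by
  ext x
  simp only [Set.mem_empty_iff_false, iff_false]
  intro hx
  have := one_le_sum_of_mem hx
  have := hx.2
  linarith

lemma integrableOn_reg {m : ℕ} {u C : ℝ} {ψ : (Fin m → ℝ) → ℝ}
    (hm : Measurable ψ) (hb : ∀ x ∈ reg m u, |ψ x| ≤ C) :
    IntegrableOn ψ (reg m u) := by
  have hC : IntegrableOn (fun _ => C) (reg m u) :=
    integrableOn_const (volume_reg_lt_top m u).ne
  refine Integrable.mono' hC hm.aestronglyMeasurable.restrict ?_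
  refine (ae_restrict_iff' (measurableSet_reg m u)).2 ?_
  exact Filter.Eventually.of_forall fun x hx => by simpa using hb x hx

lemma Ff_nonneg (hχ : ChiOK χ) {m : ℕ} {x : Fin m → ℝ} (hx : ∀ i, (1:ℝ) ≤ x i) :
    0 ≤ Ff χ m x :=
  Finset.prod_nonneg fun i _ => g_nonneg hχ (hx i)

lemma Ff_le_one (hχ : ChiOK χ) {m : ℕ} {x : Fin m → ℝ} (hx : ∀ i, (1:ℝ) ≤ x i) :
    Ff χ m x ≤ 1 :=
  Finset.prod_le_one (fun i _ => g_nonneg hχ (hx i)) (fun i _ => g_le_one hχ (hx i))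

lemma measurable_Ff (hχ : ChiOK χ) (m : ℕ) : Measurable (Ff χ m) :=
  Finset.measurable_prod _ fun i _ =>
    ((measurable_const.sub (hχ.1.comp (measurable_pi_apply i))).div (measurable_pi_apply i))

lemma Gg_nonneg (hχ : ChiOK χ) {j : ℕ} {x : Fin (j+1) → ℝ} (hx : ∀ i, (1:ℝ) ≤ x i) :
    0 ≤ Gg χ j x :=
  mul_nonneg (q_nonneg hχ (by linarith [hx (Fin.last j)]))
    (Finset.prod_nonneg fun i _ => g_nonneg hχ (hx i.castSucc))

lemma Gg_le_one (hχ : ChiOK χ) {j : ℕ} {x : Fin (j+1) → ℝ} (hx : ∀ i, (1:ℝ) ≤ x i) :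
    Gg χ j x ≤ 1 := by
  have h1 : (1 - χ (x (Fin.last j))) ≤ 1 := q_le_one hχ (by linarith [hx (Fin.last j)])
  have h2 : ∏ i : Fin j, (1 - χ (x i.castSucc)) / x i.castSucc ≤ 1 :=
    Finset.prod_le_one (fun i _ => g_nonneg hχ (hx i.castSucc))
      (fun i _ => g_le_one hχ (hx i.castSucc))
  have h3 : 0 ≤ ∏ i : Fin j, (1 - χ (x i.castSucc)) / x i.castSucc :=
    Finset.prod_nonneg fun i _ => g_nonneg hχ (hx i.castSucc)
  calc Gg χ j x ≤ 1 * 1 := by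
        exact mul_le_mul h1 h2 h3 (by norm_num)
    _ = 1 := by norm_num

lemma measurable_Gg (hχ : ChiOK χ) (j : ℕ) : Measurable (Gg χ j) :=
  ((measurable_const.sub (hχ.1.comp (measurable_pi_apply _)))).mul
    (Finset.measurable_prod _ fun i _ =>
      (measurable_const.sub (hχ.1.comp (measurable_pi_apply _))).div (measurable_pi_apply _))

lemma integrableOn_Ff (hχ : ChiOK χ) (m : ℕ) (u : ℝ) : IntegrableOn (Ff χ m) (reg m u) :=
  integrableOn_reg (measurable_Ff hχ m) (fun x hx => by
    rw [abs_of_nonneg (Ff_nonneg hχ hx.1)]; exact Ff_le_one hχ hx.1)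

lemma integrableOn_Gg (hχ : ChiOK χ) (j : ℕ) (u : ℝ) : IntegrableOn (Gg χ j) (reg (j+1) u) :=
  integrableOn_reg (measurable_Gg hχ j) (fun x hx => by
    rw [abs_of_nonneg (Gg_nonneg hχ hx.1)]; exact Gg_le_one hχ hx.1)

lemma Iprim_nonneg (hχ : ChiOK χ) (m : ℕ) (u : ℝ) : 0 ≤ Iprim χ m u :=
  setIntegral_nonneg (measurableSet_reg m u) (fun x hx => Ff_nonneg hχ hx.1)

lemma Jint_nonneg (hχ : ChiOK χ) (j : ℕ) (t : ℝ) : 0 ≤ Jint χ j t :=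
  setIntegral_nonneg (measurableSet_reg _ _) (fun x hx => Gg_nonneg hχ hx.1)

lemma Iprim_mono (hχ : ChiOK χ) (m : ℕ) : Monotone (Iprim χ m) := by
  intro u v huv
  refine setIntegral_mono_set (integrableOn_Ff hχ m v) ?_ (HasSubset.Subset.eventuallyLE (reg_mono huv))
  refine (ae_restrict_iff' (measurableSet_reg m v)).2 ?_
  exact Filter.Eventually.of_forall fun x hx => Ff_nonneg hχ hx.1

lemma Jint_mono (hχ : ChiOK χ) (j : ℕ) : Monotone (Jint χ j) := by
  intro u v huv
  refine setIntegral_mono_set (integrableOn_Gg hχ j v) ?_ (HasSubset.Subset.eventuallyLE (reg_mono huv))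
  refine (ae_restrict_iff' (measurableSet_reg _ v)).2 ?_
  exact Filter.Eventually.of_forall fun x hx => Gg_nonneg hχ hx.1

lemma measurable_Iprim (hχ : ChiOK χ) (m : ℕ) : Measurable (Iprim χ m) :=
  (Iprim_mono hχ m).measurable

lemma measurable_Jint (hχ : ChiOK χ) (j : ℕ) : Measurable (Jint χ j) :=
  (Jint_mono hχ j).measurable

lemma Iprim_zero {m : ℕ} {u : ℝ} (h : u < 0) : Iprim χ m u = 0 := by
  rw [Iprim, reg_empty h, Measure.restrict_empty, integral_zero_measure]

lemma Iprim_succ_zero {m : ℕ} {u : ℝ} (h : u < 1) : Iprim χ (m+1) u = 0 := by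
  rw [Iprim, reg_succ_empty h, Measure.restrict_empty, integral_zero_measure]

lemma Jint_zero {j : ℕ} {t : ℝ} (h : t < 1) : Jint χ j t = 0 := by
  rw [Jint, reg_succ_empty h, Measure.restrict_empty, integral_zero_measure]

lemma reg_zero_eq {u : ℝ} (h : 0 ≤ u) : reg 0 u = Set.univ := by
  ext x
  simp [reg, h]

lemma Iprim_zero_eq {u : ℝ} (h : 0 ≤ u) : Iprim χ 0 u = 1 := by
  rw [Iprim, reg_zero_eq h]
  rw [Measure.restrict_univ]
  have : Ff χ 0 = fun _ => (1:ℝ) := by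
    funext x; simp [Ff]
  rw [this, integral_const]
  rw [volume_pi, measureReal_def, Measure.pi_univ]
  simp

lemma Iprim_eq_Ifn (j : ℕ) {u : ℝ} (h : 0 ≤ u) : Iprim χ j u = Ifn χ j u := by
  cases j with
  | zero => rw [Iprim_zero_eq h]; rfl
  | succ m => rfl

lemma stepC (hχ : ChiOK χ) (j : ℕ) (u : ℝ) :
    Iprim χ (j+1) u = (j+1 : ℝ) * ∫ x in reg (j+1) u, Gg χ j x * (∑ i, x i)⁻¹ := by
  classical
  set W : Fin (j+1) → ℝ := fun k => ∫ x in reg (j+1) u, Ff χ (j+1) x * x k * (∑ i, x i)⁻¹ with hW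
  have hsum_pos : ∀ x ∈ reg (j+1) u, (0:ℝ) < ∑ i, x i := fun x hx =>
    lt_of_lt_of_le zero_lt_one (one_le_sum_of_mem hx)
  have hbd : ∀ (k : Fin (j+1)), ∀ x ∈ reg (j+1) u,
      |Ff χ (j+1) x * x k * (∑ i, x i)⁻¹| ≤ 1 := by
    intro k x hx
    have hpos := hsum_pos x hx
    have h1 : 0 ≤ x k := le_trans zero_le_one (hx.1 k)
    have h2 : x k ≤ ∑ i, x i := Finset.single_le_sum (f := fun i => x i)
      (fun i _ => le_trans zero_le_one (hx.1 i)) (Finset.mem_univ k)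
    have hfr : x k * (∑ i, x i)⁻¹ ≤ 1 := by
      rw [← div_eq_mul_inv, div_le_one hpos]; exact h2
    have hfr0 : 0 ≤ x k * (∑ i, x i)⁻¹ := mul_nonneg h1 (inv_nonneg.2 hpos.le)
    rw [mul_assoc, abs_of_nonneg (mul_nonneg (Ff_nonneg hχ hx.1) hfr0)]
    exact mul_le_one₀ (Ff_le_one hχ hx.1) hfr0 hfr
  have hmeask : ∀ k : Fin (j+1), Measurable (fun x : Fin (j+1) → ℝ =>
      Ff χ (j+1) x * x k * (∑ i, x i)⁻¹) := fun k =>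
    ((measurable_Ff hχ (j+1)).mul (measurable_pi_apply k)).mul
      ((Finset.measurable_sum _ fun i _ => measurable_pi_apply i).inv)
  have intgk : ∀ k : Fin (j+1), IntegrableOn (fun x => Ff χ (j+1) x * x k * (∑ i, x i)⁻¹)
      (reg (j+1) u) := fun k => integrableOn_reg (hmeask k) (hbd k)
  have hWk : ∀ k, W k = W (Fin.last j) := by
    intro k
    set pp : Equiv.Perm (Fin (j+1)) := Equiv.swap (Fin.last j) k with hpp
    have mp := volume_measurePreserving_piCongrLeft (fun _ : Fin (j+1) => ℝ) pp
    set τ := MeasurableEquiv.piCongrLeft (fun _ : Fin (j+1) => ℝ) pp with hτ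
    have happ : ∀ (x : Fin (j+1) → ℝ) (a : Fin (j+1)), τ x a = x (pp.symm a) := by
      intro x a
      conv_lhs => rw [show a = pp (pp.symm a) by simp]
      rw [hτ, MeasurableEquiv.coe_piCongrLeft]
      exact Equiv.piCongrLeft_apply_apply _ _ _ _
    have hpre : τ ⁻¹' reg (j+1) u = reg (j+1) u := by
      ext x
      simp only [Set.mem_preimage]
      constructor
      · rintro ⟨ha, hb⟩
        constructor
        · intro b
          have := ha (pp b)
          rwa [happ, Equiv.symm_apply_apply] at this
        · calc ∑ i, x i = ∑ i, x (pp.symm i) := (Equiv.sum_comp pp.symm x).symm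
            _ = ∑ i, τ x i := by simp only [happ]
            _ ≤ u := hb
      · rintro ⟨ha, hb⟩
        constructor
        · intro b; rw [happ]; exact ha _
        · calc ∑ i, τ x i = ∑ i, x (pp.symm i) := by simp only [happ]
            _ = ∑ i, x i := Equiv.sum_comp pp.symm x
            _ ≤ u := hb
    have comp_eq : ∀ x : Fin (j+1) → ℝ,
        (fun y : Fin (j+1) → ℝ => Ff χ (j+1) y * y (Fin.last j) * (∑ i, y i)⁻¹) (τ x)
        = Ff χ (j+1) x * x k * (∑ i, x i)⁻¹ := by
      intro x
      have e1 : Ff χ (j+1) (τ x) = Ff χ (j+1) x := by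
        unfold Ff
        simp only [happ]
        exact Equiv.prod_comp pp.symm (fun a => (1 - χ (x a)) / x a)
      have e2 : τ x (Fin.last j) = x k := by
        rw [happ]
        congr 1
        rw [hpp, Equiv.symm_swap, Equiv.swap_apply_left]
      have e3 : ∑ i, τ x i = ∑ i, x i := by
        simp only [happ]; exact Equiv.sum_comp pp.symm x
      simp only [e1, e2, e3]
    have := mp.setIntegral_preimage_emb τ.measurableEmbedding
      (fun y : Fin (j+1) → ℝ => Ff χ (j+1) y * y (Fin.last j) * (∑ i, y i)⁻¹) (reg (j+1) u)
    rw [hpre] at this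
    rw [hW]
    simp only
    rw [← this]
    exact setIntegral_congr_fun (measurableSet_reg _ _) (fun x _ => (comp_eq x).symm)
  have hsplit : Iprim χ (j+1) u = ∑ k : Fin (j+1), W k := by
    rw [Iprim, hW, ← integral_finset_sum _ (fun k _ => intgk k)]
    apply setIntegral_congr_fun (measurableSet_reg _ _)
    intro x hx
    have hpos := hsum_pos x hx
    have : ∀ k : Fin (j+1), Ff χ (j+1) x * x k * (∑ i, x i)⁻¹
        = (Ff χ (j+1) x * (∑ i, x i)⁻¹) * x k := fun k => by ring
    simp only [this]
    rw [← Finset.mul_sum, mul_assoc, inv_mul_cancel₀ hpos.ne', mul_one]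
  have hconst : ∑ k : Fin (j+1), W k = (j+1 : ℝ) * W (Fin.last j) := by
    rw [Finset.sum_congr rfl (fun k _ => hWk k), Finset.sum_const, Finset.card_univ,
      Fintype.card_fin, nsmul_eq_mul]
    norm_num
  have hlast : W (Fin.last j) = ∫ x in reg (j+1) u, Gg χ j x * (∑ i, x i)⁻¹ := by
    rw [hW]
    apply setIntegral_congr_fun (measurableSet_reg _ _)
    intro x hx
    have hne : x (Fin.last j) ≠ 0 := by
      have := hx.1 (Fin.last j); positivity
    have : Ff χ (j+1) x * x (Fin.last j) = Gg χ j x := by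
      unfold Ff Gg
      rw [Fin.prod_univ_castSucc]
      rw [mul_assoc, div_mul_cancel₀ _ hne, mul_comm]
    simp only
    rw [← this]
  rw [hsplit, hconst, hlast]

set_option maxHeartbeats 1000000 in
lemma stepA (hχ : ChiOK χ) (j : ℕ) {t : ℝ} (ht : 1 ≤ t) :
    Jint χ j t = ∫ s in (1:ℝ)..t, (1 - χ s) * Ifn χ j (t - s) := by
  classical
  set E : Set (ℝ × (Fin j → ℝ)) :=
    {z | 1 ≤ z.1 ∧ (∀ i, 1 ≤ z.2 i) ∧ z.1 + ∑ i, z.2 i ≤ t} with hE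
  set φ : ℝ × (Fin j → ℝ) → ℝ :=
    fun z => (1 - χ z.1) * ∏ i, (1 - χ (z.2 i)) / z.2 i with hφ
  have hEmeas : MeasurableSet E := by
    have hrw : E = ({z : ℝ × (Fin j → ℝ) | 1 ≤ z.1} ∩
        (⋂ i, {z : ℝ × (Fin j → ℝ) | 1 ≤ z.2 i})) ∩
        {z : ℝ × (Fin j → ℝ) | z.1 + ∑ i, z.2 i ≤ t} := by
      ext z; simp [hE, and_assoc]
    rw [hrw]
    have m1 : MeasurableSet {z : ℝ × (Fin j → ℝ) | 1 ≤ z.1} :=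
      measurableSet_le (measurable_const : Measurable fun _ : ℝ × (Fin j → ℝ) => (1:ℝ))
        measurable_fst
    have m2 : ∀ i : Fin j, MeasurableSet {z : ℝ × (Fin j → ℝ) | 1 ≤ z.2 i} := fun i =>
      measurableSet_le (measurable_const : Measurable fun _ : ℝ × (Fin j → ℝ) => (1:ℝ))
        ((measurable_pi_apply i).comp measurable_snd)
    have m3 : MeasurableSet {z : ℝ × (Fin j → ℝ) | z.1 + ∑ i, z.2 i ≤ t} :=
      measurableSet_le (measurable_fst.add
        (Finset.measurable_sum _ fun i _ => (measurable_pi_apply i).comp measurable_snd))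
        (measurable_const : Measurable fun _ : ℝ × (Fin j → ℝ) => t)
    exact (m1.inter (MeasurableSet.iInter m2)).inter m3
  have hφmeas : Measurable φ := by
    refine (measurable_const.sub (hχ.1.comp measurable_fst)).mul ?_
    exact Finset.measurable_prod _ fun i _ =>
      (measurable_const.sub (hχ.1.comp ((measurable_pi_apply i).comp measurable_snd))).div
        ((measurable_pi_apply i).comp measurable_snd)
  have mp := volume_preserving_piFinSuccAbove (fun _ : Fin (j+1) => ℝ) (Fin.last j)
  set e := MeasurableEquiv.piFinSuccAbove (fun _ : Fin (j+1) => ℝ) (Fin.last j) with he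
  have happ : ∀ x : Fin (j+1) → ℝ, e x = (x (Fin.last j), fun k => x k.castSucc) := by
    intro x
    have htail : (fun k : Fin j => x ((Fin.last j).succAbove k)) = fun k : Fin j => x k.castSucc := by
      funext k
      exact congrArg x (Fin.succAbove_last_apply k)
    rw [he, Prod.ext_iff]
    constructor
    · rfl
    · rw [← htail]; rfl
  have hptwise : ∀ x : Fin (j+1) → ℝ,
      Set.indicator E φ (e x) = Set.indicator (reg (j+1) t) (Gg χ j) x := by
    intro x
    rw [happ]
    have hmem : ((x (Fin.last j), fun k : Fin j => x k.castSucc) ∈ E) ↔ x ∈ reg (j+1) t := by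
      simp only [hE, Set.mem_setOf_eq, reg]
      rw [Fin.sum_univ_castSucc (f := fun i => x i)]
      rw [Fin.forall_fin_succ' (P := fun i => 1 ≤ x i)]
      constructor
      · rintro ⟨h1, h2, h3⟩; exact ⟨⟨h2, h1⟩, by linarith⟩
      · rintro ⟨⟨h2, h1⟩, h3⟩; exact ⟨h1, h2, by linarith⟩
    rw [Set.indicator_apply, Set.indicator_apply]
    by_cases hmx : x ∈ reg (j+1) t
    · rw [if_pos (hmem.2 hmx), if_pos hmx]; rfl
    · rw [if_neg (fun hc => hmx (hmem.1 hc)), if_neg hmx]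
  have h1 : Jint χ j t = ∫ z, Set.indicator E φ z := by
    rw [Jint, ← integral_indicator (measurableSet_reg _ _)]
    rw [← mp.integral_comp' (Set.indicator E φ)]
    exact (integral_congr_ae (Filter.Eventually.of_forall hptwise)).symm
  -- integrability on the product space
  set box : Set (ℝ × (Fin j → ℝ)) :=
    Set.Icc (1:ℝ) t ×ˢ Set.Icc (1 : Fin j → ℝ) (fun _ => t) with hbox
  have hboxfin : (volume : Measure (ℝ × (Fin j → ℝ))) box < ⊤ := by
    rw [hbox, Measure.volume_eq_prod, Measure.prod_prod]
    exact ENNReal.mul_lt_top (Real.volume_Icc ▸ ENNReal.ofReal_lt_top) (volume_Icc_lt_top _ _)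
  have hboxmeas : MeasurableSet box := measurableSet_Icc.prod measurableSet_Icc
  have hbound : ∀ z, |Set.indicator E φ z| ≤ Set.indicator box (fun _ => (1:ℝ)) z := by
    intro z
    by_cases hz : z ∈ E
    · obtain ⟨hz1, hz2, hz3⟩ := id hz
      have hsnn : (0:ℝ) ≤ ∑ i, z.2 i := Finset.sum_nonneg fun i _ => by linarith [hz2 i]
      have hzbox : z ∈ box := by
        refine ⟨⟨hz1, by linarith⟩, ?_, ?_⟩
        · intro i; exact hz2 i
        · intro i
          have : z.2 i ≤ ∑ k, z.2 k := Finset.single_le_sum (f := fun k => z.2 k)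
            (fun k _ => by linarith [hz2 k]) (Finset.mem_univ i)
          simp only
          linarith
      rw [Set.indicator_of_mem hz, Set.indicator_of_mem hzbox]
      have hq0 : 0 ≤ 1 - χ z.1 := q_nonneg hχ (by linarith)
      have hq1 : 1 - χ z.1 ≤ 1 := q_le_one hχ (by linarith)
      have hp0 : 0 ≤ ∏ i, (1 - χ (z.2 i)) / z.2 i :=
        Finset.prod_nonneg fun i _ => g_nonneg hχ (hz2 i)
      have hp1 : ∏ i, (1 - χ (z.2 i)) / z.2 i ≤ 1 :=
        Finset.prod_le_one (fun i _ => g_nonneg hχ (hz2 i)) (fun i _ => g_le_one hχ (hz2 i))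
      rw [hφ, abs_of_nonneg (mul_nonneg hq0 hp0)]
      exact mul_le_one₀ hq1 hp0 hp1
    · rw [Set.indicator_of_notMem hz]
      simp only [abs_zero]
      exact Set.indicator_apply_nonneg (fun _ => zero_le_one)
  have hInt : Integrable (Set.indicator E φ) := by
    refine Integrable.mono' ?_ ((hφmeas.indicator hEmeas).aestronglyMeasurable) (Filter.Eventually.of_forall hbound)
    exact (integrableOn_const hboxfin.ne).integrable_indicator hboxmeas
  have hFub : ∫ z, Set.indicator E φ z
      = ∫ s, ∫ y, Set.indicator E φ (s, y) := by
    rw [Measure.volume_eq_prod] at hInt ⊢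
    exact integral_prod _ hInt
  have h3 : ∀ s : ℝ, (∫ y, Set.indicator E φ (s, y))
      = Set.indicator (Set.Ici (1:ℝ)) (fun s' => (1 - χ s') * Iprim χ j (t - s')) s := by
    intro s
    by_cases hs : (1:ℝ) ≤ s
    · have hyw : ∀ y : Fin j → ℝ, Set.indicator E φ (s, y)
          = Set.indicator (reg j (t - s)) (fun y => (1 - χ s) * Ff χ j y) y := by
        intro y
        have hmem : ((s, y) ∈ E) ↔ y ∈ reg j (t - s) := by
          simp only [hE, Set.mem_setOf_eq, reg, hs, true_and]
          constructor
          · rintro ⟨h1, h2⟩; exact ⟨h1, by linarith⟩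
          · rintro ⟨h1, h2⟩; exact ⟨h1, by linarith⟩
        rw [Set.indicator_apply, Set.indicator_apply]
        by_cases hy : y ∈ reg j (t - s)
        · rw [if_pos (hmem.2 hy), if_pos hy]; rfl
        · rw [if_neg (fun hc => hy (hmem.1 hc)), if_neg hy]
      rw [integral_congr_ae (Filter.Eventually.of_forall hyw)]
      rw [integral_indicator (measurableSet_reg _ _)]
      rw [MeasureTheory.integral_const_mul]
      rw [Set.indicator_of_mem (show s ∈ Set.Ici (1:ℝ) from hs)]
      rfl
    · have hyz : ∀ y : Fin j → ℝ, Set.indicator E φ (s, y) = 0 := by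
        intro y
        exact Set.indicator_of_notMem (fun hc => hs hc.1) _
      rw [integral_congr_ae (Filter.Eventually.of_forall hyz)]
      rw [integral_zero, Set.indicator_of_notMem (show s ∉ Set.Ici (1:ℝ) from hs)]
  have h4 : (∫ s, Set.indicator (Set.Ici (1:ℝ)) (fun s' => (1 - χ s') * Iprim χ j (t - s')) s)
      = ∫ s in Set.Ioc (1:ℝ) t, (1 - χ s) * Iprim χ j (t - s) := by
    rw [integral_indicator measurableSet_Ici]
    refine setIntegral_eq_of_subset_of_forall_diff_eq_zero measurableSet_Ici ?_ ?_
    · exact fun s hs => le_of_lt hs.1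
    · intro s hs
      obtain ⟨hs1, hs2⟩ := hs
      by_cases hseq : s = 1
      · rw [hseq, q_eq_zero hχ (by norm_num) le_rfl, zero_mul]
      · have hs1' : 1 < s := lt_of_le_of_ne hs1 (Ne.symm hseq)
        have hst : t < s := by
          by_contra hc
          exact hs2 ⟨hs1', not_lt.1 hc⟩
        rw [Iprim_zero (by linarith), mul_zero]
  have h5 : (∫ s in Set.Ioc (1:ℝ) t, (1 - χ s) * Iprim χ j (t - s))
      = ∫ s in (1:ℝ)..t, (1 - χ s) * Iprim χ j (t - s) :=
    (intervalIntegral.integral_of_le ht).symm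
  have h6 : (∫ s in (1:ℝ)..t, (1 - χ s) * Iprim χ j (t - s))
      = ∫ s in (1:ℝ)..t, (1 - χ s) * Ifn χ j (t - s) := by
    apply intervalIntegral.integral_congr
    intro s hs
    rw [Set.uIcc_of_le ht] at hs
    have hts : (0:ℝ) ≤ t - s := by linarith [hs.2]
    show (1 - χ s) * Iprim χ j (t - s) = (1 - χ s) * Ifn χ j (t - s)
    rw [Iprim_eq_Ifn j hts]
  rw [h1, hFub]
  rw [integral_congr_ae (Filter.Eventually.of_forall h3), h4, h5, h6]

set_option maxHeartbeats 1000000 in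
lemma stepB (hχ : ChiOK χ) (j : ℕ) {u : ℝ} (hu : 1 ≤ u) :
    ∫ t in (1:ℝ)..u, Jint χ j t / t ^ 2
      = (∫ x in reg (j+1) u, Gg χ j x * (∑ i, x i)⁻¹) - Jint χ j u / u := by
  classical
  set B : Set (ℝ × (Fin (j+1) → ℝ)) :=
    {z | (1 < z.1 ∧ z.1 ≤ u) ∧ (∀ i, 1 ≤ z.2 i) ∧ ∑ i, z.2 i ≤ z.1} with hB
  set ψ : ℝ × (Fin (j+1) → ℝ) → ℝ := fun z => Gg χ j z.2 / z.1 ^ 2 with hψ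
  have hBmeas : MeasurableSet B := by
    have m1 : MeasurableSet {z : ℝ × (Fin (j+1) → ℝ) | 1 < z.1} :=
      measurableSet_lt (measurable_const : Measurable fun _ : ℝ × (Fin (j+1) → ℝ) => (1:ℝ))
        measurable_fst
    have m2 : MeasurableSet {z : ℝ × (Fin (j+1) → ℝ) | z.1 ≤ u} :=
      measurableSet_le measurable_fst
        (measurable_const : Measurable fun _ : ℝ × (Fin (j+1) → ℝ) => u)
    have m3 : ∀ i : Fin (j+1), MeasurableSet {z : ℝ × (Fin (j+1) → ℝ) | 1 ≤ z.2 i} := fun i =>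
      measurableSet_le (measurable_const : Measurable fun _ : ℝ × (Fin (j+1) → ℝ) => (1:ℝ))
        ((measurable_pi_apply i).comp measurable_snd)
    have m4 : MeasurableSet {z : ℝ × (Fin (j+1) → ℝ) | ∑ i, z.2 i ≤ z.1} :=
      measurableSet_le (Finset.measurable_sum _ fun i _ =>
        (measurable_pi_apply i).comp measurable_snd) measurable_fst
    have hrw : B = ((({z : ℝ × (Fin (j+1) → ℝ) | 1 < z.1} ∩ {z | z.1 ≤ u}) ∩
        (⋂ i, {z : ℝ × (Fin (j+1) → ℝ) | 1 ≤ z.2 i})) ∩ {z | ∑ i, z.2 i ≤ z.1}) := by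
      ext z; simp [hB, and_assoc]
    rw [hrw]
    exact (((m1.inter m2).inter (MeasurableSet.iInter m3)).inter m4)
  have hψmeas : Measurable ψ :=
    ((measurable_Gg hχ j).comp measurable_snd).div (measurable_fst.pow_const 2)
  set box : Set (ℝ × (Fin (j+1) → ℝ)) :=
    Set.Icc (1:ℝ) u ×ˢ Set.Icc (1 : Fin (j+1) → ℝ) (fun _ => u) with hbox
  have hboxfin : (volume : Measure (ℝ × (Fin (j+1) → ℝ))) box < ⊤ := by
    rw [hbox, Measure.volume_eq_prod, Measure.prod_prod]
    exact ENNReal.mul_lt_top (Real.volume_Icc ▸ ENNReal.ofReal_lt_top) (volume_Icc_lt_top _ _)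
  have hboxmeas : MeasurableSet box := measurableSet_Icc.prod measurableSet_Icc
  have hbound : ∀ z, |Set.indicator B ψ z| ≤ Set.indicator box (fun _ => (1:ℝ)) z := by
    intro z
    by_cases hz : z ∈ B
    · obtain ⟨⟨hz1, hz2⟩, hz3, hz4⟩ := id hz
      have hzbox : z ∈ box := by
        refine ⟨⟨le_of_lt hz1, hz2⟩, fun i => hz3 i, fun i => ?_⟩
        have : z.2 i ≤ ∑ k, z.2 k := Finset.single_le_sum (f := fun k => z.2 k)
          (fun k _ => by linarith [hz3 k]) (Finset.mem_univ i)
        simp only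
        linarith
      rw [Set.indicator_of_mem hz, Set.indicator_of_mem hzbox, hψ]
      have h2 : (1:ℝ) ≤ z.1 ^ 2 := by nlinarith
      have hg0 := Gg_nonneg hχ hz3
      have hg1 := Gg_le_one hχ hz3
      rw [abs_of_nonneg (div_nonneg hg0 (by linarith))]
      rw [div_le_one (by linarith)]
      linarith
    · rw [Set.indicator_of_notMem hz]
      simp only [abs_zero]
      exact Set.indicator_apply_nonneg (fun _ => zero_le_one)
  have hInt : Integrable (Set.indicator B ψ) := by
    refine Integrable.mono' ?_ ((hψmeas.indicator hBmeas).aestronglyMeasurable)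
      (Filter.Eventually.of_forall hbound)
    exact (integrableOn_const hboxfin.ne).integrable_indicator hboxmeas
  -- left side as double integral
  have hLHS : ∫ t in (1:ℝ)..u, Jint χ j t / t ^ 2
      = ∫ t : ℝ, ∫ y : Fin (j+1) → ℝ, Set.indicator B ψ (t, y) := by
    rw [intervalIntegral.integral_of_le hu, ← integral_indicator measurableSet_Ioc]
    apply integral_congr_ae
    apply Filter.Eventually.of_forall
    intro t
    show Set.indicator (Set.Ioc (1:ℝ) u) (fun t => Jint χ j t / t ^ 2) t
      = ∫ y : Fin (j+1) → ℝ, Set.indicator B ψ (t, y)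
    by_cases htm : t ∈ Set.Ioc (1:ℝ) u
    · have hyw : ∀ y : Fin (j+1) → ℝ, Set.indicator B ψ (t, y)
          = Set.indicator (reg (j+1) t) (fun y => Gg χ j y / t ^ 2) y := by
        intro y
        have hmem : ((t, y) ∈ B) ↔ y ∈ reg (j+1) t := by
          constructor
          · rintro ⟨_, h2, h3⟩; exact ⟨h2, h3⟩
          · rintro ⟨h2, h3⟩; exact ⟨⟨htm.1, htm.2⟩, h2, h3⟩
        rw [Set.indicator_apply, Set.indicator_apply]
        by_cases hy : y ∈ reg (j+1) t
        · rw [if_pos (hmem.2 hy), if_pos hy]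
        · rw [if_neg (fun hc => hy (hmem.1 hc)), if_neg hy]
      rw [Set.indicator_of_mem htm]
      rw [integral_congr_ae (Filter.Eventually.of_forall hyw)]
      rw [integral_indicator (measurableSet_reg _ _), MeasureTheory.integral_div]
      rfl
    · have hyz : ∀ y : Fin (j+1) → ℝ, Set.indicator B ψ (t, y) = 0 := by
        intro y
        refine Set.indicator_of_notMem (fun hc => htm ?_) _
        exact ⟨hc.1.1, hc.1.2⟩
      rw [Set.indicator_of_notMem htm]
      rw [integral_congr_ae (Filter.Eventually.of_forall hyz), integral_zero]
  -- swap
  have hswap : (∫ t : ℝ, ∫ y : Fin (j+1) → ℝ, Set.indicator B ψ (t, y))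
      = ∫ y : Fin (j+1) → ℝ, ∫ t : ℝ, Set.indicator B ψ (t, y) := by
    rw [Measure.volume_eq_prod] at hInt
    exact integral_integral_swap hInt
  -- inner integral evaluation
  have hinner : ∀ x : Fin (j+1) → ℝ, (∫ t : ℝ, Set.indicator B ψ (t, x))
      = Set.indicator (reg (j+1) u) (fun x => Gg χ j x * ((∑ i, x i)⁻¹ - u⁻¹)) x := by
    intro x
    by_cases hA : ∀ i, (1:ℝ) ≤ x i
    · have hT1 : (1:ℝ) ≤ ∑ i, x i := by
        calc (1:ℝ) ≤ x 0 := hA 0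
          _ ≤ ∑ i, x i := Finset.single_le_sum (f := fun i => x i)
            (fun i _ => by linarith [hA i]) (Finset.mem_univ 0)
      have hptw : ∀ t : ℝ, Set.indicator B ψ (t, x)
          = Set.indicator (Set.Ioc (1:ℝ) u ∩ Set.Ici (∑ i, x i))
            (fun t => Gg χ j x / t ^ 2) t := by
        intro t
        have hmem : ((t, x) ∈ B) ↔ t ∈ Set.Ioc (1:ℝ) u ∩ Set.Ici (∑ i, x i) := by
          constructor
          · rintro ⟨⟨h1, h2⟩, _, h4⟩; exact ⟨⟨h1, h2⟩, h4⟩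
          · rintro ⟨⟨h1, h2⟩, h4⟩; exact ⟨⟨h1, h2⟩, hA, h4⟩
        rw [Set.indicator_apply, Set.indicator_apply]
        by_cases htm : t ∈ Set.Ioc (1:ℝ) u ∩ Set.Ici (∑ i, x i)
        · rw [if_pos (hmem.2 htm), if_pos htm]
        · rw [if_neg (fun hc => htm (hmem.1 hc)), if_neg htm]
      rw [integral_congr_ae (Filter.Eventually.of_forall hptw)]
      rw [integral_indicator (measurableSet_Ioc.inter measurableSet_Ici)]
      by_cases hTu : ∑ i, x i ≤ u
      · have hsets : ((Set.Ioc (1:ℝ) u ∩ Set.Ici (∑ i, x i) : Set ℝ)) =ᵐ[volume]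
            (Set.Ioc (∑ i, x i) u : Set ℝ) := by
          rw [MeasureTheory.ae_eq_set]
          constructor
          · refine measure_mono_null ?_ (Real.volume_singleton (a := ∑ i, x i))
            rintro a ⟨⟨⟨ha1, ha2⟩, ha3⟩, hna⟩
            simp only [Set.mem_Ioc, not_and, not_le] at hna
            have hnlt : ¬ (∑ i, x i) < a := fun hlt => absurd (hna hlt) (not_lt.2 ha2)
            exact le_antisymm (not_lt.1 hnlt) ha3
          · refine measure_mono_null ?_ (measure_empty (μ := (volume : Measure ℝ)))
            rintro a ⟨⟨ha1, ha2⟩, hna⟩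
            exact absurd ⟨⟨lt_of_le_of_lt hT1 ha1, ha2⟩, le_of_lt ha1⟩ hna
        rw [setIntegral_congr_set hsets]
        have heval : ∫ t in Set.Ioc (∑ i, x i) u, Gg χ j x / t ^ 2
            = Gg χ j x * ((∑ i, x i)⁻¹ - u⁻¹) := by
          rw [← intervalIntegral.integral_of_le hTu]
          have hder : ∀ t ∈ Set.uIcc (∑ i, x i) u,
              HasDerivAt (fun r : ℝ => -(Gg χ j x) * r⁻¹) (Gg χ j x / t ^ 2) t := by
            intro t htm
            rw [Set.uIcc_of_le hTu] at htm
            have hpos : (0:ℝ) < t := lt_of_lt_of_le (lt_of_lt_of_le zero_lt_one hT1) htm.1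
            have hne : t ≠ 0 := ne_of_gt hpos
            have := (hasDerivAt_inv hne).const_mul (-(Gg χ j x))
            exact this.congr_deriv (by ring)
          have hii : IntervalIntegrable (fun t => Gg χ j x / t ^ 2) volume (∑ i, x i) u := by
            apply ContinuousOn.intervalIntegrable
            apply ContinuousOn.div continuousOn_const (continuousOn_pow 2)
            intro t htm
            rw [Set.uIcc_of_le hTu] at htm
            have hpos : (0:ℝ) < t := lt_of_lt_of_le (lt_of_lt_of_le zero_lt_one hT1) htm.1
            exact pow_ne_zero 2 (ne_of_gt hpos)
          rw [intervalIntegral.integral_eq_sub_of_hasDerivAt hder hii]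
          field_simp
          ring
        rw [heval]
        rw [Set.indicator_of_mem (show x ∈ reg (j+1) u from ⟨hA, hTu⟩)]
      · have hempty : Set.Ioc (1:ℝ) u ∩ Set.Ici (∑ i, x i) = ∅ := by
          ext t
          simp only [Set.mem_inter_iff, Set.mem_Ioc, Set.mem_Ici, Set.mem_empty_iff_false,
            iff_false, not_and]
          rintro ⟨h1, h2⟩ h3
          exact hTu (by linarith)
        rw [hempty, Measure.restrict_empty, integral_zero_measure]
        rw [Set.indicator_of_notMem (fun hc => hTu hc.2)]
    · have hz : ∀ t : ℝ, Set.indicator B ψ (t, x) = 0 := fun t =>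
        Set.indicator_of_notMem (fun hc => hA hc.2.1) _
      rw [integral_congr_ae (Filter.Eventually.of_forall hz), integral_zero]
      rw [Set.indicator_of_notMem (fun hc => hA hc.1)]
  -- finish
  have hfin : (∫ x : Fin (j+1) → ℝ, Set.indicator (reg (j+1) u)
      (fun x => Gg χ j x * ((∑ i, x i)⁻¹ - u⁻¹)) x)
      = (∫ x in reg (j+1) u, Gg χ j x * (∑ i, x i)⁻¹) - Jint χ j u / u := by
    rw [integral_indicator (measurableSet_reg _ _)]
    have hsplit : ∀ x ∈ reg (j+1) u, Gg χ j x * ((∑ i, x i)⁻¹ - u⁻¹)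
        = Gg χ j x * (∑ i, x i)⁻¹ - Gg χ j x * u⁻¹ := fun x _ => by ring
    rw [setIntegral_congr_fun (measurableSet_reg _ _) hsplit]
    have hint1 : IntegrableOn (fun x : Fin (j+1) → ℝ => Gg χ j x * (∑ i, x i)⁻¹)
        (reg (j+1) u) := by
      refine integrableOn_reg (C := 1) (((measurable_Gg hχ j)).mul
        ((Finset.measurable_sum _ fun i _ => measurable_pi_apply i).inv)) ?_
      intro x hx
      have hT : (1:ℝ) ≤ ∑ i, x i := one_le_sum_of_mem hx
      have h0 : 0 ≤ Gg χ j x * (∑ i, x i)⁻¹ :=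
        mul_nonneg (Gg_nonneg hχ hx.1) (inv_nonneg.2 (by linarith))
      rw [abs_of_nonneg h0]
      calc Gg χ j x * (∑ i, x i)⁻¹ ≤ 1 * 1 := by
            apply mul_le_mul (Gg_le_one hχ hx.1) ?_ (inv_nonneg.2 (by linarith)) zero_le_one
            rw [inv_le_one_iff₀]; right; exact hT
        _ = 1 := by norm_num
    have hint2 : IntegrableOn (fun x : Fin (j+1) → ℝ => Gg χ j x * u⁻¹) (reg (j+1) u) := by
      refine integrableOn_reg (C := 1) ((measurable_Gg hχ j).mul measurable_const) ?_
      intro x hx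
      have h0 : 0 ≤ Gg χ j x * u⁻¹ :=
        mul_nonneg (Gg_nonneg hχ hx.1) (inv_nonneg.2 (by linarith))
      rw [abs_of_nonneg h0]
      calc Gg χ j x * u⁻¹ ≤ 1 * 1 := by
            apply mul_le_mul (Gg_le_one hχ hx.1) ?_ (inv_nonneg.2 (by linarith)) zero_le_one
            rw [inv_le_one_iff₀]; right; exact hu
        _ = 1 := by norm_num
    rw [integral_sub hint1 hint2]
    congr 1
    rw [MeasureTheory.integral_mul_const, div_eq_mul_inv]
    rfl
  rw [hLHS, hswap]
  rw [integral_congr_ae (Filter.Eventually.of_forall hinner), hfin]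

lemma key (hχ : ChiOK χ) (j : ℕ) {u : ℝ} (hu : 1 ≤ u) :
    Jint χ j u / u + ∫ t in (1:ℝ)..u, Jint χ j t / t ^ 2 = Ifn χ (j+1) u / ((j:ℝ)+1) := by
  rw [stepB hχ j hu, Ifn_succ, stepC hχ j u]
  have hne : ((j:ℝ)+1) ≠ 0 := by positivity
  field_simp
  ring

lemma II_of_bdd {f : ℝ → ℝ} {a b C : ℝ} (hab : a ≤ b)
    (hm : AEStronglyMeasurable f (volume.restrict (Set.Ioc a b)))
    (hb : ∀ x ∈ Set.Ioc a b, |f x| ≤ C) :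
    IntervalIntegrable f volume a b := by
  rw [intervalIntegrable_iff_integrableOn_Ioc_of_le hab]
  refine Integrable.mono' (g := fun _ => C) ?_ hm ?_
  · exact integrableOn_const (by rw [Real.volume_Ioc]; exact ENNReal.ofReal_lt_top.ne)
  · exact (ae_restrict_iff' measurableSet_Ioc).2
      (Filter.Eventually.of_forall fun x hx => by simpa using hb x hx)

lemma measurable_Ifn (hχ : ChiOK χ) (j : ℕ) : Measurable (Ifn χ j) := by
  cases j with
  | zero => exact measurable_const
  | succ m =>
      have : Ifn χ (m+1) = Iprim χ (m+1) := funext fun u => Ifn_succ m u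
      rw [this]; exact measurable_Iprim hχ (m+1)

lemma monotone_Ifn (hχ : ChiOK χ) (j : ℕ) : Monotone (Ifn χ j) := by
  cases j with
  | zero => exact monotone_const
  | succ m =>
      have : Ifn χ (m+1) = Iprim χ (m+1) := funext fun u => Ifn_succ m u
      rw [this]; exact Iprim_mono hχ (m+1)

lemma Ifn_nonneg (hχ : ChiOK χ) (j : ℕ) (u : ℝ) : 0 ≤ Ifn χ j u := by
  cases j with
  | zero => exact zero_le_one
  | succ m => rw [Ifn_succ]; exact Iprim_nonneg hχ (m+1) u

lemma Ifn_succ_zero (j : ℕ) {u : ℝ} (hu : u < 1) : Ifn χ (j+1) u = 0 := by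
  rw [Ifn_succ]; exact Iprim_succ_zero hu

/-- The operator kernel `H`. -/
def HH (χ f : ℝ → ℝ) (t : ℝ) : ℝ := ∫ s in (1:ℝ)..t, (1 - χ s) * f (t - s)

/-- The operator `L`. -/
def LL (χ f : ℝ → ℝ) (u : ℝ) : ℝ := HH χ f u / u + ∫ t in (1:ℝ)..u, HH χ f t / t ^ 2

/-- Partial sums of the inclusion-exclusion series. -/
def Sp (χ : ℝ → ℝ) (n : ℕ) (v : ℝ) : ℝ :=
  ∑ j ∈ Finset.range (n+1), (-1:ℝ)^j / (Nat.factorial j) * Ifn χ j v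

lemma HH_nonneg (hχ : ChiOK χ) {f : ℝ → ℝ} (hf : ∀ v, 0 ≤ v → 0 ≤ f v) {t : ℝ}
    (ht : 1 ≤ t) : 0 ≤ HH χ f t := by
  refine intervalIntegral.integral_nonneg ht ?_
  intro s hs
  refine mul_nonneg (q_nonneg hχ (by linarith [hs.1])) (hf _ (by linarith [hs.2]))

lemma LL_nonneg (hχ : ChiOK χ) {f : ℝ → ℝ} (hf : ∀ v, 0 ≤ v → 0 ≤ f v) {u : ℝ}
    (hu : 1 ≤ u) : 0 ≤ LL χ f u := by
  refine add_nonneg (div_nonneg (HH_nonneg hχ hf hu) (by linarith)) ?_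
  refine intervalIntegral.integral_nonneg hu ?_
  intro t htm
  exact div_nonneg (HH_nonneg hχ hf htm.1) (by positivity)

lemma LL_mono (hχ : ChiOK χ) {f g : ℝ → ℝ} (hfg : ∀ v, 0 ≤ v → f v ≤ g v) {u : ℝ}
    (hu : 1 ≤ u)
    (hif : ∀ t, 1 ≤ t → t ≤ u → IntervalIntegrable (fun s => (1 - χ s) * f (t - s)) volume 1 t)
    (hig : ∀ t, 1 ≤ t → t ≤ u → IntervalIntegrable (fun s => (1 - χ s) * g (t - s)) volume 1 t)
    (hIf : IntervalIntegrable (fun t => HH χ f t / t ^ 2) volume 1 u)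
    (hIg : IntervalIntegrable (fun t => HH χ g t / t ^ 2) volume 1 u) :
    LL χ f u ≤ LL χ g u := by
  have hHH : ∀ t, 1 ≤ t → t ≤ u → HH χ f t ≤ HH χ g t := by
    intro t h1 h2
    refine intervalIntegral.integral_mono_on h1 (hif t h1 h2) (hig t h1 h2) ?_
    intro s hs
    exact mul_le_mul_of_nonneg_left (hfg _ (by linarith [hs.2])) (q_nonneg hχ (by linarith [hs.1]))
  refine add_le_add ?_ ?_
  · exact (div_le_div_iff_of_pos_right (by linarith : (0:ℝ) < u)).2 (hHH u hu le_rfl)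
  · refine intervalIntegral.integral_mono_on hu hIf hIg ?_
    intro t htm
    have ht0 : (0:ℝ) < t ^ 2 := by nlinarith [htm.1]
    exact (div_le_div_iff_of_pos_right ht0).2 (hHH t htm.1 htm.2)

lemma II_HH_term (hχ : ChiOK χ) (j : ℕ) {t : ℝ} (ht : 1 ≤ t) :
    IntervalIntegrable (fun s => (1 - χ s) * Ifn χ j (t - s)) volume 1 t := by
  refine II_of_bdd (C := Ifn χ j t) ht ?_ ?_
  · exact ((measurable_const.sub hχ.1).mul
      ((measurable_Ifn hχ j).comp (measurable_const.sub measurable_id))).aestronglyMeasurable.restrict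
  · intro s hs
    have h0s : (0:ℝ) ≤ s := by linarith [hs.1]
    have hnn : 0 ≤ Ifn χ j (t - s) := Ifn_nonneg hχ j _
    have hmono : Ifn χ j (t - s) ≤ Ifn χ j t := monotone_Ifn hχ j (by linarith [hs.1])
    rw [abs_mul, abs_of_nonneg hnn]
    calc |1 - χ s| * Ifn χ j (t - s) ≤ 1 * Ifn χ j t := by
          refine mul_le_mul ?_ hmono hnn zero_le_one
          rw [abs_le]
          constructor
          · linarith [q_nonneg hχ h0s]
          · exact q_le_one hχ h0s
      _ = Ifn χ j t := one_mul _

lemma II_Jint_div (hχ : ChiOK χ) (j : ℕ) {u : ℝ} (hu : 1 ≤ u) :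
    IntervalIntegrable (fun t => Jint χ j t / t ^ 2) volume 1 u := by
  refine II_of_bdd (C := Jint χ j u) hu ?_ ?_
  · exact ((measurable_Jint hχ j).div ((measurable_id.pow_const 2))).aestronglyMeasurable.restrict
  · intro t htm
    have h1t : (1:ℝ) ≤ t := le_of_lt htm.1
    have hnn : 0 ≤ Jint χ j t := Jint_nonneg hχ j t
    have ht2 : (1:ℝ) ≤ t ^ 2 := by nlinarith
    rw [abs_of_nonneg (div_nonneg hnn (by positivity))]
    calc Jint χ j t / t ^ 2 ≤ Jint χ j t / 1 := by gcongr
      _ = Jint χ j t := div_one _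
      _ ≤ Jint χ j u := Jint_mono hχ j htm.2

lemma HH_Sp (hχ : ChiOK χ) (n : ℕ) {t : ℝ} (ht : 1 ≤ t) :
    HH χ (Sp χ n) t
      = ∑ j ∈ Finset.range (n+1), (-1:ℝ)^j / (Nat.factorial j) * Jint χ j t := by
  rw [HH]
  have hcongr : Set.EqOn (fun s => (1 - χ s) * Sp χ n (t - s))
      (fun s => ∑ j ∈ Finset.range (n+1),
        (-1:ℝ)^j / (Nat.factorial j) * ((1 - χ s) * Ifn χ j (t - s)))
      (Set.uIcc (1:ℝ) t) := by
    intro s _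
    simp only [Sp, Finset.mul_sum]
    refine Finset.sum_congr rfl fun j _ => by ring
  rw [intervalIntegral.integral_congr hcongr]
  rw [intervalIntegral.integral_finset_sum
    (fun j _ => (II_HH_term hχ j ht).const_mul _)]
  refine Finset.sum_congr rfl fun j _ => ?_
  rw [intervalIntegral.integral_const_mul, ← stepA hχ j ht]

lemma II_HHSp (hχ : ChiOK χ) (n : ℕ) {u : ℝ} (hu : 1 ≤ u) :
    IntervalIntegrable (fun t => HH χ (Sp χ n) t / t ^ 2) volume 1 u := by
  rw [intervalIntegrable_iff_integrableOn_Ioc_of_le hu]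
  have hnice : IntervalIntegrable (fun t => (∑ j ∈ Finset.range (n+1),
      (-1:ℝ)^j / (Nat.factorial j) * Jint χ j t) / t ^ 2) volume 1 u := by
    refine II_of_bdd (C := ∑ j ∈ Finset.range (n+1), Jint χ j u) hu ?_ ?_
    · refine Measurable.aestronglyMeasurable ?_ |>.restrict
      exact (Finset.measurable_sum _ fun j _ =>
        (measurable_const.mul (measurable_Jint hχ j))).div (measurable_id.pow_const 2)
    · intro t htm
      have h1t : (1:ℝ) ≤ t := le_of_lt htm.1
      have ht2 : (1:ℝ) ≤ t ^ 2 := by nlinarith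
      rw [abs_div, abs_of_nonneg (by positivity : (0:ℝ) ≤ t ^ 2)]
      calc |∑ j ∈ Finset.range (n+1), (-1:ℝ)^j / (Nat.factorial j) * Jint χ j t| / t ^ 2
          ≤ |∑ j ∈ Finset.range (n+1), (-1:ℝ)^j / (Nat.factorial j) * Jint χ j t| / 1 := by
            gcongr
        _ = |∑ j ∈ Finset.range (n+1), (-1:ℝ)^j / (Nat.factorial j) * Jint χ j t| := div_one _
        _ ≤ ∑ j ∈ Finset.range (n+1), |(-1:ℝ)^j / (Nat.factorial j) * Jint χ j t| :=
            Finset.abs_sum_le_sum_abs _ _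
        _ ≤ ∑ j ∈ Finset.range (n+1), Jint χ j u := by
            refine Finset.sum_le_sum fun j _ => ?_
            rw [abs_mul]
            have hfac : |(-1:ℝ)^j / (Nat.factorial j)| ≤ 1 := by
              rw [abs_div, abs_pow, abs_neg, abs_one, one_pow]
              rw [div_le_one (by positivity)]
              rw [abs_of_nonneg (by positivity : (0:ℝ) ≤ (Nat.factorial j : ℝ))]
              exact_mod_cast Nat.one_le_iff_ne_zero.2 (Nat.factorial_ne_zero j)
            have hJnn : 0 ≤ Jint χ j t := Jint_nonneg hχ j t
            calc |(-1:ℝ)^j / (Nat.factorial j)| * |Jint χ j t|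
                ≤ 1 * |Jint χ j t| := mul_le_mul_of_nonneg_right hfac (abs_nonneg _)
              _ = Jint χ j t := by rw [one_mul, abs_of_nonneg hJnn]
              _ ≤ Jint χ j u := Jint_mono hχ j htm.2
  rw [intervalIntegrable_iff_integrableOn_Ioc_of_le hu] at hnice
  refine hnice.congr_fun ?_ measurableSet_Ioc
  intro t htm
  simp only
  rw [HH_Sp hχ n (le_of_lt htm.1)]

lemma LL_Sp (hχ : ChiOK χ) (n : ℕ) {u : ℝ} (hu : 1 ≤ u) :
    LL χ (Sp χ n) u = 1 - Sp χ (n+1) u := by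
  have h1 : HH χ (Sp χ n) u / u = ∑ j ∈ Finset.range (n+1),
      (-1:ℝ)^j / (Nat.factorial j) * (Jint χ j u / u) := by
    rw [HH_Sp hχ n hu, Finset.sum_div]
    exact Finset.sum_congr rfl fun j _ => by ring
  have h2 : (∫ t in (1:ℝ)..u, HH χ (Sp χ n) t / t ^ 2)
      = ∑ j ∈ Finset.range (n+1), (-1:ℝ)^j / (Nat.factorial j)
          * ∫ t in (1:ℝ)..u, Jint χ j t / t ^ 2 := by
    have hcongr : Set.EqOn (fun t => HH χ (Sp χ n) t / t ^ 2)
        (fun t => ∑ j ∈ Finset.range (n+1),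
          (-1:ℝ)^j / (Nat.factorial j) * (Jint χ j t / t ^ 2)) (Set.uIcc (1:ℝ) u) := by
      intro t htm
      rw [Set.uIcc_of_le hu] at htm
      simp only
      rw [HH_Sp hχ n htm.1, Finset.sum_div]
      exact Finset.sum_congr rfl fun j _ => by ring
    rw [intervalIntegral.integral_congr hcongr]
    rw [intervalIntegral.integral_finset_sum
      (fun j _ => (II_Jint_div hχ j hu).const_mul _)]
    exact Finset.sum_congr rfl fun j _ => intervalIntegral.integral_const_mul _ _
  rw [LL, h1, h2, ← Finset.sum_add_distrib]
  have h3 : ∀ j ∈ Finset.range (n+1),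
      (-1:ℝ)^j / (Nat.factorial j) * (Jint χ j u / u)
        + (-1:ℝ)^j / (Nat.factorial j) * ∫ t in (1:ℝ)..u, Jint χ j t / t ^ 2
      = -((-1:ℝ)^(j+1) / (Nat.factorial (j+1)) * Ifn χ (j+1) u) := by
    intro j _
    rw [← mul_add, key hχ j hu]
    have hfac : (Nat.factorial (j+1) : ℝ) = ((j:ℝ)+1) * (Nat.factorial j : ℝ) := by
      rw [Nat.factorial_succ]; push_cast; ring
    have hne1 : (Nat.factorial j : ℝ) ≠ 0 := by positivity
    have hne2 : ((j:ℝ)+1) ≠ 0 := by positivity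
    rw [pow_succ, hfac]
    field_simp
    all_goals
      left
      ring
  rw [Finset.sum_congr rfl h3]
  have h4 : Sp χ (n+1) u = 1 + ∑ j ∈ Finset.range (n+1),
      (-1:ℝ)^(j+1) / (Nat.factorial (j+1)) * Ifn χ (j+1) u := by
    rw [Sp, Finset.sum_range_succ' (fun k => (-1:ℝ)^k / (Nat.factorial k) * Ifn χ k u) (n+1)]
    have : (-1:ℝ)^0 / (Nat.factorial 0) * Ifn χ 0 u = 1 := by
      simp [Ifn]
    rw [this, add_comm]
  rw [h4, Finset.sum_neg_distrib]
  ring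

section Sigma

variable {σ' : ℝ → ℝ}

lemma II_mul_cont {φ f : ℝ → ℝ} (hφm : Measurable φ) (hφb : ∀ s, 0 ≤ s → |φ s| ≤ 1)
    (hf : Continuous f) {a b : ℝ} (h0 : 0 ≤ a) (hab : a ≤ b) :
    IntervalIntegrable (fun s => φ s * f s) volume a b := by
  rw [intervalIntegrable_iff_integrableOn_Ioc_of_le hab]
  refine Integrable.bdd_mul (c := 1) (hf.integrableOn_Ioc) hφm.aestronglyMeasurable.restrict ?_
  refine (ae_restrict_iff' measurableSet_Ioc).2 (Filter.Eventually.of_forall fun s hs => ?_)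
  rw [Real.norm_eq_abs]
  exact hφb s (by linarith [hs.1])

lemma q_abs_le_one (hχ : ChiOK χ) : ∀ s, 0 ≤ s → |1 - χ s| ≤ 1 := by
  intro s hs
  rw [abs_le]
  constructor
  · linarith [q_nonneg hχ hs]
  · exact q_le_one hχ hs

lemma chi_abs_le_one (hχ : ChiOK χ) : ∀ s, 0 ≤ s → |χ s| ≤ 1 := by
  intro s hs
  rw [abs_le]
  constructor
  · linarith [(hχ.2.2 s hs).1]
  · exact (hχ.2.2 s hs).2

lemma M_hasDeriv (hc : Continuous σ') (t : ℝ) :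
    HasDerivAt (fun r => ∫ s in (0:ℝ)..r, (1 - σ' s)) (1 - σ' t) t := by
  have hcont : Continuous (fun s => 1 - σ' s) := continuous_const.sub hc
  exact intervalIntegral.integral_hasDerivAt_right (hcont.intervalIntegrable _ _)
    (hcont.stronglyMeasurableAtFilter _ _) hcont.continuousAt

lemma HH_sigma_eq (hχ : ChiOK χ) (hc : Continuous σ') (h1 : ∀ v, v ≤ 1 → σ' v = 1)
    (heq : ∀ w, 1 < w → w * σ' w = ∫ t in (0:ℝ)..w, χ t * σ' (w - t)) {t : ℝ} (ht : 0 ≤ t) :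
    HH χ σ' t = t * (1 - σ' t) - ∫ s in (0:ℝ)..t, (1 - σ' s) := by
  rcases le_or_gt t 1 with hle | hgt
  · have hHH0 : HH χ σ' t = 0 := by
      rw [HH]
      have : Set.EqOn (fun s => (1 - χ s) * σ' (t - s)) (fun _ => (0:ℝ)) (Set.uIcc 1 t) := by
        intro s hs
        rw [Set.uIcc_of_ge hle] at hs
        have h0s : 0 ≤ s := le_trans ht hs.1
        simp only
        rw [q_eq_zero hχ h0s hs.2, zero_mul]
      rw [intervalIntegral.integral_congr this, intervalIntegral.integral_zero]
    have hM0 : (∫ s in (0:ℝ)..t, (1 - σ' s)) = 0 := by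
      have : Set.EqOn (fun s => 1 - σ' s) (fun _ => (0:ℝ)) (Set.uIcc 0 t) := by
        intro s hs
        rw [Set.uIcc_of_le ht] at hs
        simp only
        rw [h1 s (le_trans hs.2 hle)]
        ring
      rw [intervalIntegral.integral_congr this, intervalIntegral.integral_zero]
    rw [hHH0, hM0, h1 t hle]
    ring
  · have hval := heq t hgt
    have hcomp : Continuous fun s => σ' (t - s) := hc.comp (continuous_const.sub continuous_id)
    have hsub : Set.EqOn (fun s => χ s * σ' (t - s))
        (fun s => σ' (t - s) - (1 - χ s) * σ' (t - s)) (Set.uIcc 0 t) := by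
      intro s _; simp only; ring
    have hii1 : IntervalIntegrable (fun s => σ' (t - s)) volume 0 t :=
      hcomp.intervalIntegrable _ _
    have hiiq : ∀ a b : ℝ, 0 ≤ a → a ≤ b →
        IntervalIntegrable (fun s => (1 - χ s) * σ' (t - s)) volume a b := fun a b h0 hab =>
      II_mul_cont (measurable_const.sub hχ.1) (q_abs_le_one hχ) hcomp h0 hab
    rw [intervalIntegral.integral_congr hsub] at hval
    rw [intervalIntegral.integral_sub hii1 (hiiq 0 t le_rfl (by linarith))] at hval
    rw [intervalIntegral.integral_comp_sub_left (fun s => σ' s) t] at hval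
    have hzero : t - t = 0 := by ring
    rw [hzero, sub_zero] at hval
    have hsig : (∫ s in (0:ℝ)..t, σ' s) = t - ∫ s in (0:ℝ)..t, (1 - σ' s) := by
      have hEq : Set.EqOn (fun s : ℝ => σ' s) (fun s => 1 - (1 - σ' s)) (Set.uIcc 0 t) := by
        intro s _; simp only; ring
      rw [intervalIntegral.integral_congr hEq]
      rw [intervalIntegral.integral_sub (f := fun _ => (1:ℝ)) (g := fun s => 1 - σ' s)
        (intervalIntegrable_const)
        ((continuous_const.sub hc).intervalIntegrable _ _ :
          IntervalIntegrable (fun s => 1 - σ' s) volume 0 t)]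
      rw [intervalIntegral.integral_const]
      simp
    rw [hsig] at hval
    have hsplit : (∫ s in (0:ℝ)..t, (1 - χ s) * σ' (t - s))
        = (∫ s in (0:ℝ)..1, (1 - χ s) * σ' (t - s))
          + ∫ s in (1:ℝ)..t, (1 - χ s) * σ' (t - s) :=
      (intervalIntegral.integral_add_adjacent_intervals (hiiq 0 1 le_rfl zero_le_one)
        (hiiq 1 t zero_le_one (by linarith))).symm
    have hzero1 : (∫ s in (0:ℝ)..1, (1 - χ s) * σ' (t - s)) = 0 := by
      have : Set.EqOn (fun s => (1 - χ s) * σ' (t - s)) (fun _ => (0:ℝ))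
          (Set.uIcc (0:ℝ) 1) := by
        intro s hs
        rw [Set.uIcc_of_le zero_le_one] at hs
        simp only
        rw [q_eq_zero hχ hs.1 hs.2, zero_mul]
      rw [intervalIntegral.integral_congr this, intervalIntegral.integral_zero]
    rw [hsplit, hzero1, zero_add] at hval
    rw [HH]
    linarith [hval]

lemma sigma_LL (hχ : ChiOK χ) (hc : Continuous σ') (h1 : ∀ v, v ≤ 1 → σ' v = 1)
    (heq : ∀ w, 1 < w → w * σ' w = ∫ t in (0:ℝ)..w, χ t * σ' (w - t)) {u : ℝ} (hu : 1 ≤ u) :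
    σ' u = 1 - LL χ σ' u := by
  set M : ℝ → ℝ := fun r => ∫ s in (0:ℝ)..r, (1 - σ' s) with hM
  have hMd : ∀ t, HasDerivAt M (1 - σ' t) t := M_hasDeriv hc
  have hMc : Continuous M := continuous_iff_continuousAt.2 fun t => (hMd t).continuousAt
  have hM1 : M 1 = 0 := by
    rw [hM]
    simp only
    have : Set.EqOn (fun s => 1 - σ' s) (fun _ => (0:ℝ)) (Set.uIcc (0:ℝ) 1) := by
      intro s hs
      rw [Set.uIcc_of_le zero_le_one] at hs
      simp only
      rw [h1 s hs.2]; ring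
    rw [intervalIntegral.integral_congr this, intervalIntegral.integral_zero]
  have hFTC : (∫ t in (1:ℝ)..u, (t * (1 - σ' t) - M t) / t ^ 2) = M u / u - M 1 / 1 := by
    have hder : ∀ t ∈ Set.uIcc (1:ℝ) u,
        HasDerivAt (fun r => M r / r) ((t * (1 - σ' t) - M t) / t ^ 2) t := by
      intro t htm
      rw [Set.uIcc_of_le hu] at htm
      have hne : t ≠ 0 := by intro h0; rw [h0] at htm; linarith [htm.1]
      have := (hMd t).div (hasDerivAt_id t) hne
      exact this.congr_deriv (by simp only [id_eq, mul_one]; ring)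
    have hii : IntervalIntegrable (fun t => (t * (1 - σ' t) - M t) / t ^ 2) volume 1 u := by
      apply ContinuousOn.intervalIntegrable
      apply ContinuousOn.div
      · exact ((continuous_id.mul (continuous_const.sub hc)).sub hMc).continuousOn
      · exact (continuous_pow 2).continuousOn
      · intro t htm
        rw [Set.uIcc_of_le hu] at htm
        exact pow_ne_zero 2 (by intro h0; rw [h0] at htm; linarith [htm.1])
    rw [intervalIntegral.integral_eq_sub_of_hasDerivAt hder hii]
  have hHc : (∫ t in (1:ℝ)..u, HH χ σ' t / t ^ 2)
      = ∫ t in (1:ℝ)..u, (t * (1 - σ' t) - M t) / t ^ 2 := by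
    apply intervalIntegral.integral_congr
    intro t htm
    rw [Set.uIcc_of_le hu] at htm
    simp only
    rw [HH_sigma_eq hχ hc h1 heq (by linarith [htm.1] : (0:ℝ) ≤ t)]
  have hu0 : u ≠ 0 := by linarith
  rw [LL, hHc, hFTC, hM1, HH_sigma_eq hχ hc h1 heq (by linarith : (0:ℝ) ≤ u)]
  field_simp
  simp only [hM]
  ring

lemma sigma_pos (hχ : ChiOK χ) (hc : Continuous σ') (h1 : ∀ v, v ≤ 1 → σ' v = 1)
    (heq : ∀ w, 1 < w → w * σ' w = ∫ t in (0:ℝ)..w, χ t * σ' (w - t)) :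
    ∀ v, 0 < σ' v := by
  by_contra hcon
  push_neg at hcon
  obtain ⟨v, hv⟩ := hcon
  have hv1 : 1 < v := by
    by_contra hvle
    rw [h1 v (not_lt.1 hvle)] at hv; linarith
  have hz : ∃ c ∈ Set.Icc (0:ℝ) v, σ' c = 0 := by
    have hmem : (0:ℝ) ∈ Set.Icc (σ' v) (σ' 0) := ⟨hv, by rw [h1 0 zero_le_one]; norm_num⟩
    obtain ⟨c, hc1, hc2⟩ := intermediate_value_Icc' (by linarith : (0:ℝ) ≤ v)
      hc.continuousOn hmem
    exact ⟨c, hc1, hc2⟩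
  set K := {w : ℝ | w ∈ Set.Icc (0:ℝ) v ∧ σ' w = 0} with hK
  have hKne : K.Nonempty := by
    obtain ⟨c, hc1, hc2⟩ := hz; exact ⟨c, hc1, hc2⟩
  have hKclosed : IsClosed K := by
    have : K = Set.Icc (0:ℝ) v ∩ {w | σ' w = 0} := rfl
    rw [this]
    exact isClosed_Icc.inter (isClosed_eq hc continuous_const)
  have hKbdd : BddBelow K := ⟨0, fun w hw => hw.1.1⟩
  set c := sInf K with hc0
  have hcK : c ∈ K := hKclosed.csInf_mem hKne hKbdd
  have hge : ∀ w, 0 ≤ w → w < c → 0 < σ' w := by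
    intro w hw0 hwc
    rcases lt_or_ge 0 (σ' w) with h | h
    · exact h
    · exfalso
      have hmem : (0:ℝ) ∈ Set.Icc (σ' w) (σ' 0) := ⟨h, by rw [h1 0 zero_le_one]; norm_num⟩
      obtain ⟨d, hd1, hd2⟩ := intermediate_value_Icc' hw0 hc.continuousOn hmem
      have hdK : d ∈ K := ⟨⟨hd1.1, le_trans hd1.2 (le_trans (le_of_lt hwc) hcK.1.2)⟩, hd2⟩
      have := csInf_le hKbdd hdK
      rw [← hc0] at this
      linarith [hd1.2]
  have hc1lt : 1 < c := by
    rcases le_or_gt c 1 with h | h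
    · exfalso
      have := h1 c h
      rw [hcK.2] at this
      norm_num at this
    · exact h
  have hval := heq c hc1lt
  rw [hcK.2, mul_zero] at hval
  have hcomp : Continuous fun s => σ' (c - s) := hc.comp (continuous_const.sub continuous_id)
  have hii1 : IntervalIntegrable (fun s => χ s * σ' (c - s)) volume 0 1 :=
    II_mul_cont hχ.1 (chi_abs_le_one hχ) hcomp le_rfl zero_le_one
  have hii2 : IntervalIntegrable (fun s => χ s * σ' (c - s)) volume 1 c :=
    II_mul_cont hχ.1 (chi_abs_le_one hχ) hcomp zero_le_one (le_of_lt hc1lt)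
  rw [← intervalIntegral.integral_add_adjacent_intervals hii1 hii2] at hval
  have hpos1 : 0 < ∫ s in (0:ℝ)..1, χ s * σ' (c - s) := by
    have hcg : Set.EqOn (fun s => χ s * σ' (c - s)) (fun s => σ' (c - s))
        (Set.uIcc (0:ℝ) 1) := by
      intro s hs
      rw [Set.uIcc_of_le zero_le_one] at hs
      simp only
      rw [hχ.2.1 s hs.1 hs.2, one_mul]
    rw [intervalIntegral.integral_congr hcg]
    rw [intervalIntegral.integral_comp_sub_left (fun s => σ' s) c]
    have honelt : c - 1 < c - 0 := by linarith
    apply intervalIntegral.intervalIntegral_pos_of_pos_on (hc.intervalIntegrable _ _) ?_ honelt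
    intro x hx
    exact hge x (by linarith [hx.1]) (by linarith [hx.2])
  have hpos2 : 0 ≤ ∫ s in (1:ℝ)..c, χ s * σ' (c - s) := by
    apply intervalIntegral.integral_nonneg (le_of_lt hc1lt)
    intro s hs
    have h0s : (0:ℝ) ≤ s := by linarith [hs.1]
    refine mul_nonneg (hχ.2.2 s h0s).1 ?_
    exact le_of_lt (hge (c - s) (by linarith [hs.2]) (by linarith [hs.1]))
  linarith

lemma II_HHsigma (hχ : ChiOK χ) (hc : Continuous σ') (h1 : ∀ v, v ≤ 1 → σ' v = 1)
    (heq : ∀ w, 1 < w → w * σ' w = ∫ t in (0:ℝ)..w, χ t * σ' (w - t)) {u : ℝ} (hu : 1 ≤ u) :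
    IntervalIntegrable (fun t => HH χ σ' t / t ^ 2) volume 1 u := by
  have hMc : Continuous (fun r => ∫ s in (0:ℝ)..r, (1 - σ' s)) :=
    continuous_iff_continuousAt.2 fun t => (M_hasDeriv hc t).continuousAt
  have hnice : IntervalIntegrable
      (fun t => (t * (1 - σ' t) - ∫ s in (0:ℝ)..t, (1 - σ' s)) / t ^ 2) volume 1 u := by
    apply ContinuousOn.intervalIntegrable
    apply ContinuousOn.div
    · exact ((continuous_id.mul (continuous_const.sub hc)).sub hMc).continuousOn
    · exact (continuous_pow 2).continuousOn
    · intro t htm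
      rw [Set.uIcc_of_le hu] at htm
      exact pow_ne_zero 2 (by intro h0; rw [h0] at htm; linarith [htm.1])
  rw [intervalIntegrable_iff_integrableOn_Ioc_of_le hu] at hnice ⊢
  refine hnice.congr_fun ?_ measurableSet_Ioc
  intro t htm
  simp only
  rw [HH_sigma_eq hχ hc h1 heq (by linarith [htm.1] : (0:ℝ) ≤ t)]

lemma measurable_Sp (hχ : ChiOK χ) (n : ℕ) : Measurable (Sp χ n) :=
  Finset.measurable_sum _ fun j _ => measurable_const.mul (measurable_Ifn hχ j)

lemma Sp_bound (hχ : ChiOK χ) (n : ℕ) {w t : ℝ} (hw : w ≤ t) :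
    |Sp χ n w| ≤ ∑ j ∈ Finset.range (n+1), Ifn χ j t := by
  calc |Sp χ n w| ≤ ∑ j ∈ Finset.range (n+1), |(-1:ℝ)^j / (Nat.factorial j) * Ifn χ j w| :=
        Finset.abs_sum_le_sum_abs _ _
    _ ≤ ∑ j ∈ Finset.range (n+1), Ifn χ j t := by
        refine Finset.sum_le_sum fun j _ => ?_
        rw [abs_mul]
        have hfac : |(-1:ℝ)^j / (Nat.factorial j)| ≤ 1 := by
          rw [abs_div, abs_pow, abs_neg, abs_one, one_pow]
          rw [div_le_one (by positivity)]
          rw [abs_of_nonneg (by positivity : (0:ℝ) ≤ (Nat.factorial j : ℝ))]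
          exact_mod_cast Nat.one_le_iff_ne_zero.2 (Nat.factorial_ne_zero j)
        calc |(-1:ℝ)^j / (Nat.factorial j)| * |Ifn χ j w|
            ≤ 1 * |Ifn χ j w| := mul_le_mul_of_nonneg_right hfac (abs_nonneg _)
          _ = Ifn χ j w := by rw [one_mul, abs_of_nonneg (Ifn_nonneg hχ j w)]
          _ ≤ Ifn χ j t := monotone_Ifn hχ j hw

lemma II_HH_Sp_term (hχ : ChiOK χ) (n : ℕ) {t : ℝ} (ht : 1 ≤ t) :
    IntervalIntegrable (fun s => (1 - χ s) * Sp χ n (t - s)) volume 1 t := by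
  refine II_of_bdd (C := ∑ j ∈ Finset.range (n+1), Ifn χ j t) ht ?_ ?_
  · exact ((measurable_const.sub hχ.1).mul
      ((measurable_Sp hχ n).comp (measurable_const.sub measurable_id))).aestronglyMeasurable.restrict
  · intro s hs
    have h0s : (0:ℝ) ≤ s := by linarith [hs.1]
    rw [abs_mul]
    calc |1 - χ s| * |Sp χ n (t - s)| ≤ 1 * (∑ j ∈ Finset.range (n+1), Ifn χ j t) := by
          refine mul_le_mul (q_abs_le_one hχ s h0s) (Sp_bound hχ n (by linarith [hs.1]))
            (abs_nonneg _) zero_le_one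
      _ = ∑ j ∈ Finset.range (n+1), Ifn χ j t := one_mul _

lemma main_ind (hχ : ChiOK χ) (hc : Continuous σ') (h1 : ∀ v, v ≤ 1 → σ' v = 1)
    (heq : ∀ w, 1 < w → w * σ' w = ∫ t in (0:ℝ)..w, χ t * σ' (w - t)) :
    ∀ n : ℕ, ∀ v : ℝ, 0 ≤ v → 0 ≤ (-1:ℝ)^n * (Sp χ n v - σ' v) := by
  have hpos := sigma_pos hχ hc h1 heq
  have hLLσ : ∀ w, 1 ≤ w → σ' w = 1 - LL χ σ' w := fun w hw => sigma_LL hχ hc h1 heq hw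
  have hSp1 : ∀ n : ℕ, ∀ v : ℝ, v < 1 → Sp χ n v = 1 := by
    intro n v h1v
    rw [Sp, Finset.sum_range_succ' (fun k => (-1:ℝ)^k / (Nat.factorial k) * Ifn χ k v) n]
    have hzero : ∀ j ∈ Finset.range n,
        (-1:ℝ)^(j+1) / (Nat.factorial (j+1)) * Ifn χ (j+1) v = 0 := fun j _ => by
      rw [Ifn_succ_zero j h1v, mul_zero]
    rw [Finset.sum_congr rfl hzero, Finset.sum_const_zero, zero_add]
    simp [Ifn]
  intro n
  induction n with
  | zero =>
      intro v hv
      rcases lt_or_ge v 1 with h | h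
      · rw [hSp1 0 v h, h1 v (le_of_lt h)]
        simp
      · have hSp0 : Sp χ 0 v = 1 := by
          rw [Sp]
          simp [Ifn]
        rw [hSp0]
        simp only [pow_zero, one_mul]
        have hLn := LL_nonneg hχ (fun w _ => le_of_lt (hpos w)) h
        have := hLLσ v h
        linarith
  | succ n ih =>
      intro v hv
      rcases lt_or_ge v 1 with h | h
      · rw [hSp1 (n+1) v h, h1 v (le_of_lt h)]
        simp
      · have hSrec : Sp χ (n+1) v = 1 - LL χ (Sp χ n) v := by
          rw [LL_Sp hχ n h]; ring
        have hσrec := hLLσ v h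
        have hifσ : ∀ t, 1 ≤ t → t ≤ v →
            IntervalIntegrable (fun s => (1 - χ s) * σ' (t - s)) volume 1 t := fun t h1t _ =>
          II_mul_cont (measurable_const.sub hχ.1) (q_abs_le_one hχ)
            (hc.comp (continuous_const.sub continuous_id)) zero_le_one h1t
        have hifS : ∀ t, 1 ≤ t → t ≤ v →
            IntervalIntegrable (fun s => (1 - χ s) * Sp χ n (t - s)) volume 1 t :=
          fun t h1t _ => II_HH_Sp_term hχ n h1t
        have hIfσ := II_HHsigma hχ hc h1 heq h
        have hIfS := II_HHSp hχ n h
        rcases Nat.even_or_odd n with he | ho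
        · have hs : ∀ w, 0 ≤ w → σ' w ≤ Sp χ n w := by
            intro w hw
            have := ih w hw
            rw [he.neg_one_pow] at this
            linarith
          have hLL : LL χ σ' v ≤ LL χ (Sp χ n) v :=
            LL_mono hχ hs h hifσ hifS hIfσ hIfS
          have hneg : (-1:ℝ)^(n+1) = -1 := by
            rw [pow_succ, he.neg_one_pow]; ring
          rw [hneg, hSrec, hσrec]
          linarith
        · have hs : ∀ w, 0 ≤ w → Sp χ n w ≤ σ' w := by
            intro w hw
            have := ih w hw
            rw [ho.neg_one_pow] at this
            linarith
          have hLL : LL χ (Sp χ n) v ≤ LL χ σ' v :=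
            LL_mono hχ hs h hifS hifσ hIfS hIfσ
          have hneg : (-1:ℝ)^(n+1) = 1 := by
            rw [pow_succ, ho.neg_one_pow]; ring
          rw [hneg, hSrec, hσrec]
          linarith

end Sigma

end GS

/-- The inclusion-exclusion inequalities (2.5) of Granville–Soundararajan, "The number
of unsieved integers up to x": for every `u ≥ 0` and every even `n ≥ 0`,
`∑_{j=0}^n (-1)^j I_j(u;χ)/j! ≥ σ(u) ≥ ∑_{j=0}^{n+1} (-1)^j I_j(u;χ)/j!`. -/
theorem inclusion_exclusion (χ σ : ℝ → ℝ) (hχ : ChiOK χ) (hσ : IsSoln χ σ)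
    (u : ℝ) (hu : 0 ≤ u) (n : ℕ) (hn : Even n) :
    σ u ≤ ∑ j ∈ Finset.range (n + 1), (-1 : ℝ) ^ j / j.factorial * Ifn χ j u ∧
    ∑ j ∈ Finset.range (n + 2), (-1 : ℝ) ^ j / j.factorial * Ifn χ j u ≤ σ u := by
  obtain ⟨hcontOn, hone, heq0⟩ := hσ
  set σ₁ : ℝ → ℝ := fun v => σ (max v 0) with hσ1
  have hc : Continuous σ₁ :=
    hcontOn.comp_continuous (continuous_id.max continuous_const) (fun v => Set.mem_Ici.2 (le_max_right _ _))
  have h1 : ∀ v, v ≤ 1 → σ₁ v = 1 := fun v hv =>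
    hone _ (le_max_right _ _) (max_le hv zero_le_one)
  have hagree : ∀ v, 0 ≤ v → σ₁ v = σ v := by
    intro v hv
    rw [hσ1]
    simp only
    rw [max_eq_left hv]
  have heq : ∀ w, 1 < w → w * σ₁ w = ∫ t in (0:ℝ)..w, χ t * σ₁ (w - t) := by
    intro w hw
    rw [hagree w (by linarith), heq0 w hw]
    apply intervalIntegral.integral_congr
    intro s hs
    rw [Set.uIcc_of_le (by linarith : (0:ℝ) ≤ w)] at hs
    simp only
    rw [hagree (w - s) (by linarith [hs.2])]
  have hmain := GS.main_ind hχ hc h1 heq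
  have hSpn : GS.Sp χ n u
      = ∑ j ∈ Finset.range (n + 1), (-1 : ℝ) ^ j / j.factorial * Ifn χ j u := rfl
  have hSpn1 : GS.Sp χ (n+1) u
      = ∑ j ∈ Finset.range (n + 2), (-1 : ℝ) ^ j / j.factorial * Ifn χ j u := rfl
  have hσu : σ₁ u = σ u := hagree u hu
  constructor
  · have h := hmain n u hu
    rw [hn.neg_one_pow, one_mul, hSpn, hσu] at h
    linarith
  · have h := hmain (n+1) u hu
    have hodd : (-1:ℝ)^(n+1) = -1 := by rw [pow_succ, hn.neg_one_pow]; ring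
    rw [hodd, hSpn1, hσu] at h
    linarith
end
end

section
/- Let χ and χ̂ be measurable functions on [0,∞) with χ(t) = χ̂(t) = 1 for 0 ≤ t ≤ 1 and |χ(t)| ≤ 1, |χ̂(t)| ≤ 1 for all t, and let σ and σ̂ be the corresponding solutions of the integral equation. Then for every u ≥ 0, σ̂(u) = σ(u) + ∑_{j=1}^{∞} (1/j!) ∫_{t_1,…,t_j ≥ 1, t_1+⋯+t_j ≤ u} ∏_{i=1}^{j} (χ̂(t_i) − χ(t_i))/t_i · σ(u − t_1 − ⋯ − t_j) dt_1⋯dt_j. -/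
/-!
Extend `σ`, `χ`, `χ̂` by zero to negative arguments, write `*` for convolution on `ℝ` and
`g(t) = 1_{t ≥ 1} (χ̂(t) - χ(t)) / t`. The `j`-fold integral is `(g*)^j σ`, which vanishes for
`u < j`, so once `u < N + 1` the right-hand side is the finite sum `T = ∑_{j ≤ N} (g*)^j σ / j!`.

Multiplication by the variable is a derivation for convolution, `u (g * F) = (t g) * F + g * (u F)`,
and convolutions commute; starting from `u σ = χ * σ` this gives
`u (g*)^{j+1} σ = χ * (g*)^{j+1} σ + (j + 1) (t g) * (g*)^j σ`, and summing,
`u T = (χ + t g) * T = χ̂ * T` below `N + 1`. Hence `D = σ̂ - T` vanishes below `1` and solves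
`u D = χ̂ * D`. Only `t ∈ [0, v - 1]` contributes to `(χ̂ * D)(v)`, so
`|D(v)| ≤ (1 - 1/X) sup_{(-∞, X]} |D|` for `v ≤ X`; iterating this contraction gives `D = 0`.
-/

open MeasureTheory Filter Real

noncomputable section

def ChiOKC (χ : ℝ → ℂ) : Prop :=
  Measurable χ ∧ (∀ t : ℝ, 0 ≤ t → t ≤ 1 → χ t = 1) ∧ (∀ t : ℝ, 0 ≤ t → ‖χ t‖ ≤ 1)

def IsSolnC (χ σ : ℝ → ℂ) : Prop :=
  ContinuousOn σ (Set.Ici 0) ∧ (∀ u : ℝ, 0 ≤ u → u ≤ 1 → σ u = 1) ∧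
    ∀ u : ℝ, 1 < u → (u : ℂ) * σ u = ∫ t in (0:ℝ)..u, χ t * σ (u - t)

def Jfn (χ χh : ℝ → ℂ) (σ : ℝ → ℂ) (j : ℕ) (u : ℝ) : ℂ :=
  ∫ t in {t : Fin j → ℝ | (∀ i, 1 ≤ t i) ∧ ∑ i, t i ≤ u},
    (∏ i, (χh (t i) - χ (t i)) / ((t i : ℝ) : ℂ)) * σ (u - ∑ i, t i)

namespace IntegralEquation

theorem integrable_of_norm_le_of_eq_zero_off {α E : Type*} [MeasurableSpace α]
    [TopologicalSpace α] [T2Space α] [OpensMeasurableSpace α] [NormedAddCommGroup E]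
    {μ : Measure α} [IsFiniteMeasureOnCompacts μ] {f : α → E} {s : Set α} (hs : IsCompact s)
    (hf : AEStronglyMeasurable f μ) {M : ℝ} (hM : ∀ x ∈ s, ‖f x‖ ≤ M)
    (h0 : ∀ x ∉ s, f x = 0) : Integrable f μ :=
  (Measure.integrableOn_of_bounded hs.measure_lt_top.ne hf
    (ae_restrict_of_forall_mem hs.measurableSet hM)).integrable_of_forall_notMem_eq_zero h0

def conv (w F : ℝ → ℂ) (u : ℝ) : ℂ := ∫ t, w t * F (u - t)

structure IsCausal (F : ℝ → ℂ) : Prop where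
  measurable : Measurable F
  eq_zero_of_neg : ∀ v < 0, F v = 0
  bounded : ∀ U, ∃ M, ∀ v ≤ U, ‖F v‖ ≤ M

variable {c w F G : ℝ → ℂ}

namespace IsCausal

theorem zero : IsCausal 0 :=
  ⟨measurable_const, fun _ _ => rfl, fun _ => ⟨0, fun _ _ => by simp⟩⟩

theorem add (hF : IsCausal F) (hG : IsCausal G) : IsCausal (F + G) where
  measurable := hF.measurable.add hG.measurable
  eq_zero_of_neg v hv := by simp [hF.eq_zero_of_neg v hv, hG.eq_zero_of_neg v hv]
  bounded U := by
    obtain ⟨M, hM⟩ := hF.bounded U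
    obtain ⟨N, hN⟩ := hG.bounded U
    exact ⟨M + N, fun v hv => (norm_add_le _ _).trans (add_le_add (hM v hv) (hN v hv))⟩

theorem neg (hF : IsCausal F) : IsCausal (-F) where
  measurable := hF.measurable.neg
  eq_zero_of_neg v hv := by simp [hF.eq_zero_of_neg v hv]
  bounded U := by
    obtain ⟨M, hM⟩ := hF.bounded U
    exact ⟨M, fun v hv => by simpa using hM v hv⟩

theorem sub (hF : IsCausal F) (hG : IsCausal G) : IsCausal (F - G) := by
  simpa [sub_eq_add_neg] using hF.add hG.neg

theorem const_mul (hF : IsCausal F) (a : ℂ) : IsCausal (fun v => a * F v) where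
  measurable := measurable_const.mul hF.measurable
  eq_zero_of_neg v hv := by simp [hF.eq_zero_of_neg v hv]
  bounded U := by
    obtain ⟨M, hM⟩ := hF.bounded U
    exact ⟨‖a‖ * M, fun v hv => by
      rw [norm_mul]; exact mul_le_mul_of_nonneg_left (hM v hv) (norm_nonneg a)⟩

theorem finset_sum {ι : Type*} (s : Finset ι) {F : ι → ℝ → ℂ} (hF : ∀ i ∈ s, IsCausal (F i)) :
    IsCausal (fun v => ∑ i ∈ s, F i v) := by
  classical
  induction s using Finset.induction_on with
  | empty =>
    simp only [Finset.sum_empty]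
    exact zero
  | insert i s hi ih =>
    simp_rw [Finset.sum_insert hi]
    exact (hF i (Finset.mem_insert_self i s)).add
      (ih fun j hj => hF j (Finset.mem_insert_of_mem hj))

theorem id_mul (hF : IsCausal F) : IsCausal (fun v => (v : ℂ) * F v) where
  measurable := Complex.measurable_ofReal.mul hF.measurable
  eq_zero_of_neg v hv := by simp [hF.eq_zero_of_neg v hv]
  bounded U := by
    obtain ⟨M, hM⟩ := hF.bounded U
    refine ⟨max U 0 * M, fun v hv => ?_⟩
    rcases lt_or_ge v 0 with hv0 | hv0
    · simpa [hF.eq_zero_of_neg v hv0] using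
        mul_nonneg (le_max_right U 0) ((norm_nonneg _).trans (hM U le_rfl))
    · rw [norm_mul, Complex.norm_real, Real.norm_of_nonneg hv0]
      exact mul_le_mul (hv.trans (le_max_left U 0)) (hM v hv) (norm_nonneg _)
        (le_max_right U 0)

end IsCausal

theorem conv_eq_zero_of_lt {a b u : ℝ} (hw : ∀ t < a, w t = 0) (hF : ∀ s < b, F s = 0)
    (hu : u < a + b) : conv w F u = 0 := by
  have h : ∀ t, w t * F (u - t) = 0 := fun t => by
    rcases lt_or_ge t a with ht | ht
    · rw [hw t ht, zero_mul]
    · rw [hF (u - t) (by linarith), mul_zero]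
  simp [conv, h]

theorem mul_comp_sub_eq_zero_of_notMem (hw : ∀ t < 0, w t = 0) (hF : ∀ s < 0, F s = 0)
    {U v t : ℝ} (hv : v ≤ U) (ht : t ∉ Set.Icc 0 (max U 0)) : w t * F (v - t) = 0 := by
  rcases lt_or_ge t 0 with ht0 | ht0
  · rw [hw t ht0, zero_mul]
  · have : max U 0 < t := lt_of_not_ge fun h => ht ⟨ht0, h⟩
    rw [hF (v - t) (by linarith [le_max_left U 0]), mul_zero]

theorem IsCausal.norm_mul_comp_sub_le (hw : IsCausal w) (hF : IsCausal F) (U : ℝ) :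
    ∃ M, ∀ v ≤ U, ∀ t ∈ Set.Icc 0 (max U 0), ‖w t * F (v - t)‖ ≤ M := by
  obtain ⟨Bw, hBw⟩ := hw.bounded (max U 0)
  obtain ⟨BF, hBF⟩ := hF.bounded U
  refine ⟨Bw * BF, fun v hv t ht => ?_⟩
  rw [norm_mul]
  exact mul_le_mul (hBw t ht.2) (hBF _ (by linarith [ht.1])) (norm_nonneg _)
    ((norm_nonneg _).trans (hBw 0 (le_max_right U 0)))

theorem IsCausal.integrable_conv_integrand (hw : IsCausal w) (hF : IsCausal F) (u : ℝ) :
    Integrable (fun t => w t * F (u - t)) := by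
  obtain ⟨M, hM⟩ := hw.norm_mul_comp_sub_le hF u
  exact integrable_of_norm_le_of_eq_zero_off isCompact_Icc
    (hw.measurable.mul
      (hF.measurable.comp (measurable_const.sub measurable_id))).aestronglyMeasurable
    (hM u le_rfl) fun t ht =>
      mul_comp_sub_eq_zero_of_notMem hw.eq_zero_of_neg hF.eq_zero_of_neg le_rfl ht

theorem IsCausal.conv (hw : IsCausal w) (hF : IsCausal F) : IsCausal (conv w F) where
  measurable := (Measurable.stronglyMeasurable (f := Function.uncurry fun v t => w t * F (v - t))
    ((hw.measurable.comp measurable_snd).mul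
      (hF.measurable.comp (measurable_fst.sub measurable_snd)))).integral_prod_right.measurable
  eq_zero_of_neg v hv :=
    conv_eq_zero_of_lt hw.eq_zero_of_neg hF.eq_zero_of_neg (by linarith)
  bounded U := by
    obtain ⟨M, hM⟩ := hw.norm_mul_comp_sub_le hF U
    refine ⟨M * max U 0, fun v hv => ?_⟩
    rw [IntegralEquation.conv, ← setIntegral_eq_integral_of_forall_compl_eq_zero fun t ht =>
      mul_comp_sub_eq_zero_of_notMem hw.eq_zero_of_neg hF.eq_zero_of_neg hv ht]
    refine (norm_setIntegral_le_of_norm_le_const measure_Icc_lt_top (hM v hv)).trans_eq ?_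
    rw [Real.volume_real_Icc_of_le (le_max_right U 0), sub_zero]

theorem conv_add (hw : IsCausal w) (hF : IsCausal F) (hG : IsCausal G) (u : ℝ) :
    conv w (F + G) u = conv w F u + conv w G u := by
  simp only [conv, Pi.add_apply, mul_add]
  exact integral_add (hw.integrable_conv_integrand hF u) (hw.integrable_conv_integrand hG u)

theorem conv_sub (hw : IsCausal w) (hF : IsCausal F) (hG : IsCausal G) (u : ℝ) :
    conv w (F - G) u = conv w F u - conv w G u := by
  simp only [conv, Pi.sub_apply, mul_sub]
  exact integral_sub (hw.integrable_conv_integrand hF u) (hw.integrable_conv_integrand hG u)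

theorem conv_add_left (hw : IsCausal w) (hc : IsCausal c) (hF : IsCausal F) (u : ℝ) :
    conv (w + c) F u = conv w F u + conv c F u := by
  simp only [conv, Pi.add_apply, add_mul]
  exact integral_add (hw.integrable_conv_integrand hF u) (hc.integrable_conv_integrand hF u)

theorem conv_zero (u : ℝ) : conv w 0 u = 0 := by simp [conv]

theorem conv_const_mul (a : ℂ) (u : ℝ) :
    conv w (fun v => a * F v) u = a * conv w F u := by
  simp only [conv, mul_left_comm _ a]
  exact integral_const_mul a _

theorem mul_conv (hw : IsCausal w) (hF : IsCausal F) (u : ℝ) :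
    (u : ℂ) * conv w F u =
      conv (fun t => (t : ℂ) * w t) F u + conv w (fun v => (v : ℂ) * F v) u := by
  rw [conv, conv, conv, ← integral_add (hw.id_mul.integrable_conv_integrand hF u)
    (hw.integrable_conv_integrand hF.id_mul u), ← integral_const_mul]
  congr 1 with t
  push_cast
  ring

theorem IsCausal.integrable_conv_conv_integrand (hw : IsCausal w) (hc : IsCausal c)
    (hF : IsCausal F) (u : ℝ) :
    Integrable (Function.uncurry fun t s => w t * (c s * F (u - t - s))) (volume.prod volume) := by
  obtain ⟨Bw, hBw⟩ := hw.bounded (max u 0)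
  obtain ⟨M, hM⟩ := hc.norm_mul_comp_sub_le hF u
  have hmeas : Measurable (Function.uncurry fun t s => w t * (c s * F (u - t - s))) :=
    (hw.measurable.comp measurable_fst).mul ((hc.measurable.comp measurable_snd).mul
      (hF.measurable.comp ((measurable_const.sub measurable_fst).sub measurable_snd)))
  refine integrable_of_norm_le_of_eq_zero_off
    ((isCompact_Icc (a := 0) (b := max u 0)).prod (isCompact_Icc (a := 0) (b := max u 0)))
    hmeas.aestronglyMeasurable (M := Bw * M) ?_ ?_
  · rintro ⟨t, s⟩ ⟨ht, hs⟩
    rw [Function.uncurry_apply_pair, norm_mul]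
    exact mul_le_mul (hBw t ht.2) (hM (u - t) (by linarith [ht.1]) s hs) (norm_nonneg _)
      ((norm_nonneg _).trans (hBw 0 (le_max_right u 0)))
  · rintro ⟨t, s⟩ hts
    rcases lt_or_ge t 0 with ht | ht
    · simp [hw.eq_zero_of_neg t ht]
    rcases lt_or_ge s 0 with hs | hs
    · simp [hc.eq_zero_of_neg s hs]
    have : u - t - s < 0 := by
      simp only [Set.mem_prod, Set.mem_Icc, not_and_or, not_le] at hts
      rcases hts with (h | h) | (h | h) <;> linarith [le_max_left u 0]
    simp [hF.eq_zero_of_neg _ this]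

theorem conv_left_comm (hw : IsCausal w) (hc : IsCausal c) (hF : IsCausal F) (u : ℝ) :
    conv w (conv c F) u = conv c (conv w F) u := calc
  conv w (conv c F) u = ∫ t, ∫ s, w t * (c s * F (u - t - s)) := by
    simp only [conv, integral_const_mul]
  _ = ∫ s, ∫ t, w t * (c s * F (u - t - s)) :=
    integral_integral_swap (hw.integrable_conv_conv_integrand hc hF u)
  _ = conv c (conv w F) u := by
    simp only [conv, ← integral_const_mul]
    congr 1 with s
    congr 1 with t
    rw [sub_right_comm]
    ring

theorem IsCausal.iterate_conv (hw : IsCausal w) (hF : IsCausal F) (j : ℕ) :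
    IsCausal ((IntegralEquation.conv w)^[j] F) := by
  induction j with
  | zero => exact hF
  | succ j ih => rw [Function.iterate_succ_apply']; exact hw.conv ih

theorem iterate_conv_eq_zero_of_lt {a b : ℝ} (hw : ∀ t < a, w t = 0) (hF : ∀ s < b, F s = 0)
    (j : ℕ) : ∀ v < b + j * a, (conv w)^[j] F v = 0 := by
  induction j with
  | zero => simpa using hF
  | succ j ih =>
    intro v hv
    rw [Function.iterate_succ_apply']
    exact conv_eq_zero_of_lt hw ih (by push_cast at hv; linarith)

theorem mul_conv_eq_of_mul_eq {A : ℝ → ℂ} (hc : IsCausal c) (hw : IsCausal w) (hG : IsCausal G)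
    (hA : IsCausal A) (hGA : ∀ v : ℝ, (v : ℂ) * G v = conv c G v + A v) (u : ℝ) :
    (u : ℂ) * conv w G u =
      conv c (conv w G) u + conv (fun t => (t : ℂ) * w t) G u + conv w A u := by
  rw [mul_conv hw hG, show (fun v : ℝ => (v : ℂ) * G v) = conv c G + A from funext hGA,
    conv_add hw (hc.conv hG) hA, conv_left_comm hw hc hG]
  ring

theorem mul_iterate_conv (hc : IsCausal c) (hw : IsCausal w) (hF : IsCausal F)
    (hcF : ∀ v : ℝ, (v : ℂ) * F v = conv c F v) (j : ℕ) (u : ℝ) :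
    (u : ℂ) * (conv w)^[j + 1] F u = conv c ((conv w)^[j + 1] F) u +
      (j + 1) * conv (fun t => (t : ℂ) * w t) ((conv w)^[j] F) u := by
  induction j generalizing u with
  | zero =>
    simp [mul_conv_eq_of_mul_eq hc hw hF IsCausal.zero (by simpa using hcF) u, conv_zero]
  | succ j ih =>
    have hA := (hw.id_mul.conv (hw.iterate_conv hF j)).const_mul ((j : ℂ) + 1)
    rw [Function.iterate_succ_apply' _ (j + 1),
      mul_conv_eq_of_mul_eq hc hw (hw.iterate_conv hF _) hA ih, conv_const_mul,
      conv_left_comm hw hw.id_mul (hw.iterate_conv hF j),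
      ← Function.iterate_succ_apply' (conv w) j F]
    push_cast
    ring

def expConvSum (w F : ℝ → ℂ) (N : ℕ) (u : ℝ) : ℂ :=
  ∑ j ∈ Finset.range N, 1 / (j.factorial : ℂ) * (conv w)^[j] F u

theorem expConvSum_succ (N : ℕ) :
    expConvSum w F (N + 1) = expConvSum w F N + fun v => 1 / (N.factorial : ℂ) * (conv w)^[N] F v :=
  funext fun _ => Finset.sum_range_succ _ _

theorem IsCausal.expConvSum (hw : IsCausal w) (hF : IsCausal F) (N : ℕ) :
    IsCausal (IntegralEquation.expConvSum w F N) :=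
  IsCausal.finset_sum _ fun j _ => (hw.iterate_conv hF j).const_mul _

theorem conv_expConvSum_succ (hc : IsCausal c) (hw : IsCausal w) (hF : IsCausal F) (N : ℕ)
    (u : ℝ) : conv c (expConvSum w F (N + 1)) u =
      conv c (expConvSum w F N) u + 1 / (N.factorial : ℂ) * conv c ((conv w)^[N] F) u := by
  rw [expConvSum_succ, conv_add hc (hw.expConvSum hF N) ((hw.iterate_conv hF N).const_mul _),
    conv_const_mul]

theorem mul_expConvSum (hc : IsCausal c) (hw : IsCausal w) (hF : IsCausal F)
    (hcF : ∀ v : ℝ, (v : ℂ) * F v = conv c F v) (N : ℕ) (u : ℝ) :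
    (u : ℂ) * expConvSum w F (N + 1) u = conv c (expConvSum w F (N + 1)) u +
      conv (fun t => (t : ℂ) * w t) (expConvSum w F N) u := by
  induction N generalizing u with
  | zero =>
    have h1 : expConvSum w F 1 = F := funext fun v => by simp [expConvSum]
    have h0 : expConvSum w F 0 = 0 := funext fun v => by simp [expConvSum]
    rw [h1, h0, conv_zero, add_zero, hcF]
  | succ N ih =>
    have hfac : 1 / ((N + 1).factorial : ℂ) * ((N : ℂ) + 1) = 1 / (N.factorial : ℂ) := by
      rw [Nat.factorial_succ]
      push_cast
      field_simp
    rw [conv_expConvSum_succ hc hw hF, conv_expConvSum_succ hw.id_mul hw hF, expConvSum_succ,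
      Pi.add_apply, mul_add, ih, mul_left_comm, mul_iterate_conv hc hw hF hcF, ← hfac]
    ring

theorem mul_expConvSum_eq_conv (hc : IsCausal c) (hw : IsCausal w) (hF : IsCausal F)
    (hcF : ∀ v : ℝ, (v : ℂ) * F v = conv c F v) (hw1 : ∀ t < 1, w t = 0) {N : ℕ} {u : ℝ}
    (hu : u < N + 1) : (u : ℂ) * expConvSum w F (N + 1) u =
      conv (c + fun t : ℝ => (t : ℂ) * w t) (expConvSum w F (N + 1)) u := by
  have htw1 : ∀ t : ℝ, t < 1 → (t : ℂ) * w t = 0 := fun t ht => by rw [hw1 t ht, mul_zero]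
  rw [mul_expConvSum hc hw hF hcF, conv_add_left hc hw.id_mul (hw.expConvSum hF _),
    conv_expConvSum_succ hw.id_mul hw hF, conv_eq_zero_of_lt htw1
      (iterate_conv_eq_zero_of_lt hw1 hF.eq_zero_of_neg N) (by linarith), mul_zero, add_zero]

theorem expConvSum_eq_of_lt_one (hw1 : ∀ t < 1, w t = 0) (hF0 : ∀ s < 0, F s = 0) (N : ℕ)
    {v : ℝ} (hv : v < 1) : expConvSum w F (N + 1) v = F v := by
  rw [expConvSum, Finset.sum_range_succ', Finset.sum_eq_zero fun j _ => by
    rw [iterate_conv_eq_zero_of_lt hw1 hF0 (j + 1) v (by push_cast; linarith), mul_zero]]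
  simp

theorem IsCausal.integrable_iterate_conv_integrand (hw : IsCausal w) (hF : IsCausal F) (j : ℕ)
    (u : ℝ) :
    Integrable (fun t : Fin j → ℝ => (∏ i, w (t i)) * F (u - ∑ i, t i)) := by
  obtain ⟨Bw, hBw⟩ := hw.bounded (max u 0)
  obtain ⟨BF, hBF⟩ := hF.bounded u
  have hBw0 : 0 ≤ Bw := (norm_nonneg _).trans (hBw 0 (le_max_right u 0))
  have hmeas : Measurable fun t : Fin j → ℝ => (∏ i, w (t i)) * F (u - ∑ i, t i) :=
    (Finset.measurable_prod _ fun i _ => hw.measurable.comp (measurable_pi_apply i)).mul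
      (hF.measurable.comp (measurable_const.sub
        (Finset.measurable_sum _ fun i _ => measurable_pi_apply i)))
  refine integrable_of_norm_le_of_eq_zero_off
    (isCompact_univ_pi fun _ => isCompact_Icc (a := 0) (b := max u 0))
    hmeas.aestronglyMeasurable (M := Bw ^ j * BF) (fun t ht => ?_) (fun t ht => ?_)
  · rw [Set.mem_univ_pi] at ht
    have hsum : 0 ≤ ∑ i, t i := Finset.sum_nonneg fun i _ => (ht i).1
    rw [norm_mul, norm_prod]
    refine mul_le_mul ?_ (hBF _ (by linarith)) (norm_nonneg _) (pow_nonneg hBw0 j)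
    refine (Finset.prod_le_prod (fun i _ => norm_nonneg _) fun i _ => hBw _ (ht i).2).trans_eq ?_
    simp
  · by_cases hneg : ∃ i, t i < 0
    · obtain ⟨i, hi⟩ := hneg
      rw [Finset.prod_eq_zero (Finset.mem_univ i) (hw.eq_zero_of_neg _ hi), zero_mul]
    simp only [not_exists, not_lt] at hneg
    obtain ⟨i, hi⟩ : ∃ i, t i ∉ Set.Icc 0 (max u 0) := not_forall.mp (mt Set.mem_univ_pi.mpr ht)
    replace hi : max u 0 < t i := lt_of_not_ge fun h => hi ⟨hneg i, h⟩
    have : t i ≤ ∑ k, t k := Finset.single_le_sum (fun k _ => hneg k) (Finset.mem_univ i)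
    rw [hF.eq_zero_of_neg _ (by linarith [le_max_left u 0]), mul_zero]

theorem integral_prod_mul_eq_iterate_conv (hw : IsCausal w) (hF : IsCausal F) (j : ℕ) (u : ℝ) :
    ∫ t : Fin j → ℝ, (∏ i, w (t i)) * F (u - ∑ i, t i) = (conv w)^[j] F u := by
  induction j generalizing u with
  | zero => simp [measureReal_def, volume_pi]
  | succ j ih =>
    have he := volume_preserving_piFinSuccAbove (fun _ : Fin (j + 1) => ℝ) 0
    set G : ℝ × (Fin j → ℝ) → ℂ := fun p =>
      w p.1 * ((∏ i, w (p.2 i)) * F (u - p.1 - ∑ i, p.2 i))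
    have hcomp : (fun t : Fin (j + 1) → ℝ => (∏ i, w (t i)) * F (u - ∑ i, t i)) =
        G ∘ MeasurableEquiv.piFinSuccAbove (fun _ => ℝ) 0 := by
      funext t
      simp [G, Fin.tail, Fin.prod_univ_succ, Fin.sum_univ_succ, sub_add_eq_sub_sub, mul_assoc]
    have hG : Integrable G (volume.prod volume) :=
      (he.integrable_comp_emb (MeasurableEquiv.measurableEmbedding _)).mp
        (hcomp ▸ hw.integrable_iterate_conv_integrand hF (j + 1) u)
    rw [hcomp, Function.comp_def, he.integral_comp', Measure.volume_eq_prod, integral_prod G hG,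
      Function.iterate_succ_apply']
    simp only [G, integral_const_mul, ih]
    rfl

theorem norm_le_mul_of_mul_eq_conv {c D : ℝ → ℂ} {X M : ℝ} (hc : ∀ t, ‖c t‖ ≤ 1)
    (hc0 : ∀ t < 0, c t = 0) (hD1 : ∀ v < 1, D v = 0)
    (hDX : ∀ v : ℝ, 1 ≤ v → v ≤ X → (v : ℂ) * D v = conv c D v) (hX : 1 ≤ X)
    (hM : ∀ v ≤ X, ‖D v‖ ≤ M) : ∀ v ≤ X, ‖D v‖ ≤ (1 - X⁻¹) * M := by
  have hM0 : 0 ≤ M := (norm_nonneg _).trans (hM X le_rfl)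
  have hq : 0 ≤ 1 - X⁻¹ := sub_nonneg.mpr (inv_le_one_of_one_le₀ hX)
  intro v hv
  rcases lt_or_ge v 1 with hv1 | hv1
  · rw [hD1 v hv1, norm_zero]
    exact mul_nonneg hq hM0
  have hv0 : 0 < v := by linarith
  have hconv : ‖conv c D v‖ ≤ M * (v - 1) := by
    have hzero : ∀ t ∉ Set.Icc 0 (v - 1), c t * D (v - t) = 0 := fun t ht => by
      rcases lt_or_ge t 0 with ht0 | ht0
      · rw [hc0 t ht0, zero_mul]
      · have : v - 1 < t := lt_of_not_ge fun h => ht ⟨ht0, h⟩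
        rw [hD1 (v - t) (by linarith), mul_zero]
    rw [conv, ← setIntegral_eq_integral_of_forall_compl_eq_zero hzero]
    refine (norm_setIntegral_le_of_norm_le_const measure_Icc_lt_top fun t ht => ?_).trans_eq
      (by rw [Real.volume_real_Icc_of_le (by linarith), sub_zero])
    rw [norm_mul]
    exact (mul_le_mul (hc t) (hM _ (by linarith [ht.1])) (norm_nonneg _) zero_le_one).trans_eq
      (one_mul M)
  rw [← hDX v hv1 hv, norm_mul, Complex.norm_real, Real.norm_of_nonneg hv0.le] at hconv
  calc ‖D v‖ ≤ (1 - v⁻¹) * M := by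
        rw [show (1 - v⁻¹) * M = M * (v - 1) / v by field_simp, le_div_iff₀ hv0]
        linarith
    _ ≤ (1 - X⁻¹) * M := by gcongr

theorem eq_zero_of_mul_eq_conv {c D : ℝ → ℂ} {X : ℝ} (hc : ∀ t, ‖c t‖ ≤ 1)
    (hc0 : ∀ t < 0, c t = 0) (hD1 : ∀ v < 1, D v = 0)
    (hDX : ∀ v : ℝ, 1 ≤ v → v ≤ X → (v : ℂ) * D v = conv c D v)
    (hDb : ∃ M, ∀ v ≤ X, ‖D v‖ ≤ M) : ∀ v ≤ X, D v = 0 := by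
  intro v hv
  rcases lt_or_ge v 1 with hv1 | hv1
  · exact hD1 v hv1
  have hX : 1 ≤ X := hv1.trans hv
  obtain ⟨M, hM⟩ := hDb
  have hiter : ∀ n : ℕ, ∀ v ≤ X, ‖D v‖ ≤ (1 - X⁻¹) ^ n * M := by
    intro n
    induction n with
    | zero => simpa using hM
    | succ n ih =>
      simpa only [pow_succ', mul_assoc] using norm_le_mul_of_mul_eq_conv hc hc0 hD1 hDX hX ih
  have hlim : Tendsto (fun n : ℕ => (1 - X⁻¹) ^ n * M) atTop (nhds 0) := by
    simpa using (tendsto_pow_atTop_nhds_zero_of_lt_one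
      (sub_nonneg.mpr (inv_le_one_of_one_le₀ hX))
      (sub_lt_self 1 (inv_pos.mpr (by linarith)))).mul_const M
  exact norm_le_zero_iff.mp (ge_of_tendsto' hlim fun n => hiter n v hv)

theorem norm_indicator_Ici_le {f : ℝ → ℂ} {B : ℝ} (hB : ∀ t, 0 ≤ t → ‖f t‖ ≤ B) (t : ℝ) :
    ‖(Set.Ici 0).indicator f t‖ ≤ B := by
  by_cases ht : 0 ≤ t
  · rw [Set.indicator_of_mem (Set.mem_Ici.mpr ht)]
    exact hB t ht
  · rw [Set.indicator_of_notMem (mt Set.mem_Ici.mp ht), norm_zero]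
    exact (norm_nonneg _).trans (hB 0 le_rfl)

theorem indicator_Ici_eq_zero_of_neg (f : ℝ → ℂ) {t : ℝ} (ht : t < 0) :
    (Set.Ici 0).indicator f t = 0 :=
  Set.indicator_of_notMem (not_le.mpr ht) f

theorem isCausal_indicator_Ici_of_norm_le {f : ℝ → ℂ} (hf : Measurable f) {B : ℝ}
    (hB : ∀ t, 0 ≤ t → ‖f t‖ ≤ B) : IsCausal ((Set.Ici 0).indicator f) where
  measurable := hf.indicator measurableSet_Ici
  eq_zero_of_neg _ := indicator_Ici_eq_zero_of_neg f
  bounded _ := ⟨B, fun t _ => norm_indicator_Ici_le hB t⟩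

theorem isCausal_indicator_Ici_of_continuousOn {f : ℝ → ℂ} (hf : ContinuousOn f (Set.Ici 0)) :
    IsCausal ((Set.Ici 0).indicator f) where
  measurable := by
    classical
    rw [← Set.piecewise_eq_indicator]
    exact hf.measurable_piecewise continuousOn_const measurableSet_Ici
  eq_zero_of_neg _ := indicator_Ici_eq_zero_of_neg f
  bounded U := by
    obtain ⟨C, hC⟩ := (isCompact_Icc (a := 0) (b := max U 0)).exists_bound_of_continuousOn
      (hf.mono Set.Icc_subset_Ici_self)
    refine ⟨C, fun v hv => ?_⟩
    by_cases hv0 : 0 ≤ v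
    · rw [Set.indicator_of_mem (Set.mem_Ici.mpr hv0)]
      exact hC v ⟨hv0, hv.trans (le_max_left U 0)⟩
    · rw [Set.indicator_of_notMem (mt Set.mem_Ici.mp hv0), norm_zero]
      exact (norm_nonneg _).trans (hC 0 ⟨le_rfl, le_max_right U 0⟩)

theorem conv_indicator_Ici (f g : ℝ → ℂ) {u : ℝ} (hu : 0 ≤ u) :
    conv ((Set.Ici 0).indicator f) ((Set.Ici 0).indicator g) u =
      ∫ t in (0 : ℝ)..u, f t * g (u - t) := by
  have hzero : ∀ t ∉ Set.Icc 0 u,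
      (Set.Ici 0).indicator f t * (Set.Ici 0).indicator g (u - t) = 0 := fun t ht =>
    mul_comp_sub_eq_zero_of_notMem (fun _ => indicator_Ici_eq_zero_of_neg f)
      (fun _ => indicator_Ici_eq_zero_of_neg g) le_rfl (by rwa [max_eq_left hu])
  rw [intervalIntegral.integral_of_le hu, ← integral_Icc_eq_integral_Ioc, conv,
    ← setIntegral_eq_integral_of_forall_compl_eq_zero hzero]
  refine setIntegral_congr_fun measurableSet_Icc fun t ht => ?_
  rw [Set.indicator_of_mem (Set.mem_Ici.mpr ht.1),
    Set.indicator_of_mem (Set.mem_Ici.mpr (sub_nonneg.mpr ht.2))]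

end IntegralEquation

open IntegralEquation

def diffKernel (χ χh : ℝ → ℂ) (t : ℝ) : ℂ := if 1 ≤ t then (χh t - χ t) / t else 0

section

variable {χ χh σ σh : ℝ → ℂ}

theorem diffKernel_eq_zero_of_lt_one {t : ℝ} (ht : t < 1) : diffKernel χ χh t = 0 :=
  if_neg (not_le.mpr ht)

theorem norm_diffKernel_le (hχ : ChiOKC χ) (hχh : ChiOKC χh) (t : ℝ) :
    ‖diffKernel χ χh t‖ ≤ 2 := by
  unfold diffKernel
  split_ifs with ht
  · have ht0 : 0 ≤ t := zero_le_one.trans ht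
    rw [norm_div, Complex.norm_real, Real.norm_of_nonneg ht0]
    refine (div_le_self (norm_nonneg _) ht).trans ((norm_sub_le _ _).trans ?_)
    linarith [hχh.2.2 t ht0, hχ.2.2 t ht0]
  · norm_num

theorem isCausal_diffKernel (hχ : ChiOKC χ) (hχh : ChiOKC χh) : IsCausal (diffKernel χ χh) where
  measurable := Measurable.ite measurableSet_Ici
    ((hχh.1.sub hχ.1).div Complex.measurable_ofReal) measurable_const
  eq_zero_of_neg _ ht := diffKernel_eq_zero_of_lt_one (by linarith)
  bounded _ := ⟨2, fun t _ => norm_diffKernel_le hχ hχh t⟩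

theorem indicator_add_mul_diffKernel (hχ : ChiOKC χ) (hχh : ChiOKC χh) :
    ((Set.Ici 0).indicator χ + fun t : ℝ => (t : ℂ) * diffKernel χ χh t) =
      (Set.Ici 0).indicator χh := by
  funext t
  simp only [Pi.add_apply, diffKernel, Set.indicator_apply, Set.mem_Ici]
  split_ifs with h0 h1 h1
  · have : (t : ℂ) ≠ 0 := Complex.ofReal_ne_zero.mpr (by linarith)
    field_simp
    ring
  · rw [hχ.2.1 t h0 (le_of_not_ge h1), hχh.2.1 t h0 (le_of_not_ge h1), mul_zero, add_zero]
  · linarith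
  · simp

theorem IsSolnC.mul_eq_conv (hχ : ChiOKC χ) (hσ : IsSolnC χ σ) (u : ℝ) :
    (u : ℂ) * (Set.Ici 0).indicator σ u =
      conv ((Set.Ici 0).indicator χ) ((Set.Ici 0).indicator σ) u := by
  rcases lt_or_ge u 0 with hu | hu
  · rw [indicator_Ici_eq_zero_of_neg σ hu, mul_zero, conv_eq_zero_of_lt
      (fun _ => indicator_Ici_eq_zero_of_neg χ) (fun _ => indicator_Ici_eq_zero_of_neg σ)
      (by linarith)]
  rw [conv_indicator_Ici χ σ hu, Set.indicator_of_mem (Set.mem_Ici.mpr hu)]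
  rcases lt_or_ge 1 u with hu1 | hu1
  · exact hσ.2.2 u hu1
  rw [hσ.2.1 u hu hu1, intervalIntegral.integral_congr (g := fun _ => 1) fun t ht => ?_]
  · simp
  rw [Set.uIcc_of_le hu] at ht
  simp [hχ.2.1 t ht.1 (ht.2.trans hu1), hσ.2.1 (u - t) (by linarith [ht.2]) (by linarith [ht.1])]

theorem Jfn_eq_iterate_conv (hχ : ChiOKC χ) (hχh : ChiOKC χh) (hσ : ContinuousOn σ (Set.Ici 0))
    (j : ℕ) (u : ℝ) :
    Jfn χ χh σ j u = (conv (diffKernel χ χh))^[j] ((Set.Ici 0).indicator σ) u := by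
  rw [← integral_prod_mul_eq_iterate_conv (isCausal_diffKernel hχ hχh)
    (isCausal_indicator_Ici_of_continuousOn hσ), Jfn]
  set S := {t : Fin j → ℝ | (∀ i, 1 ≤ t i) ∧ ∑ i, t i ≤ u}
  have hS : MeasurableSet S := by measurability
  have hzero : ∀ t ∉ S, (∏ i, diffKernel χ χh (t i)) *
      (Set.Ici 0).indicator σ (u - ∑ i, t i) = 0 := fun t ht => by
    simp only [S, Set.mem_ofPred_eq, not_and_or, not_forall, not_le] at ht
    rcases ht with ⟨i, hi⟩ | h
    · rw [Finset.prod_eq_zero (Finset.mem_univ i) (diffKernel_eq_zero_of_lt_one hi), zero_mul]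
    · rw [indicator_Ici_eq_zero_of_neg σ (by linarith), mul_zero]
  rw [← setIntegral_eq_integral_of_forall_compl_eq_zero hzero]
  refine setIntegral_congr_fun hS fun t ht => ?_
  simp [diffKernel, ht.1, Set.indicator_of_mem (Set.mem_Ici.mpr (sub_nonneg.mpr ht.2))]

theorem IsSolnC.eq_expConvSum (hχ : ChiOKC χ) (hχh : ChiOKC χh) (hσ : IsSolnC χ σ)
    (hσh : IsSolnC χh σh) {N : ℕ} {u : ℝ} (hu0 : 0 ≤ u) (hu : u < N + 1) :
    σh u = expConvSum (diffKernel χ χh) ((Set.Ici 0).indicator σ) (N + 1) u := by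
  have hg := isCausal_diffKernel hχ hχh
  have hK := isCausal_indicator_Ici_of_continuousOn hσ.1
  have hKh := isCausal_indicator_Ici_of_continuousOn hσh.1
  have hT := hg.expConvSum hK (N + 1)
  suffices ((Set.Ici 0).indicator σh -
      expConvSum (diffKernel χ χh) ((Set.Ici 0).indicator σ) (N + 1)) u = 0 by
    rwa [Pi.sub_apply, sub_eq_zero, Set.indicator_of_mem (Set.mem_Ici.mpr hu0)] at this
  refine eq_zero_of_mul_eq_conv (norm_indicator_Ici_le hχh.2.2)
    (fun _ => indicator_Ici_eq_zero_of_neg χh) (fun v hv => ?_) (fun v _ hvu => ?_)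
    ((hKh.sub hT).bounded u) u le_rfl
  · rw [Pi.sub_apply, expConvSum_eq_of_lt_one (fun _ => diffKernel_eq_zero_of_lt_one)
      hK.eq_zero_of_neg N hv, sub_eq_zero]
    rcases lt_or_ge v 0 with hv0 | hv0
    · rw [indicator_Ici_eq_zero_of_neg σh hv0, indicator_Ici_eq_zero_of_neg σ hv0]
    · rw [Set.indicator_of_mem (Set.mem_Ici.mpr hv0), Set.indicator_of_mem (Set.mem_Ici.mpr hv0),
        hσh.2.1 v hv0 hv.le, hσ.2.1 v hv0 hv.le]
  · rw [conv_sub (isCausal_indicator_Ici_of_norm_le hχh.1 hχh.2.2) hKh hT, Pi.sub_apply, mul_sub,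
      hσh.mul_eq_conv hχh, mul_expConvSum_eq_conv (isCausal_indicator_Ici_of_norm_le hχ.1 hχ.2.2)
        hg hK (hσ.mul_eq_conv hχ) (fun _ => diffKernel_eq_zero_of_lt_one) (by linarith),
      indicator_add_mul_diffKernel hχ hχh]

end

/-- Lemma 2.5 of Granville–Soundararajan, "The number of unsieved integers up to x":
for measurable `χ, χ̂` equal to `1` on `[0,1]` and bounded by `1`, with corresponding
solutions `σ, σ̂`, one has for every `u ≥ 0`
`σ̂(u) = σ(u) + ∑_{j≥1} (1/j!) ∫_{t_1,…,t_j ≥ 1, ∑ t_i ≤ u}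
  ∏_i (χ̂(t_i)-χ(t_i))/t_i ⋅ σ(u-∑ t_i) dt`. -/
theorem lemma2_5 (χ χh : ℝ → ℂ) (σ σh : ℝ → ℂ)
    (hχ : ChiOKC χ) (hχh : ChiOKC χh)
    (hσ : IsSolnC χ σ) (hσh : IsSolnC χh σh)
    (u : ℝ) (hu : 0 ≤ u) :
    σh u = σ u +
      ∑' j : ℕ, (1 / ((j + 1).factorial : ℂ)) * Jfn χ χh σ (j + 1) u := by
  have hN : u < ⌊u⌋₊ + 1 := Nat.lt_floor_add_one u
  have htail : ∀ j ∉ Finset.range ⌊u⌋₊,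
      1 / ((j + 1).factorial : ℂ) * Jfn χ χh σ (j + 1) u = 0 := fun j hj => by
    have hj' : (⌊u⌋₊ : ℝ) ≤ j := by exact_mod_cast not_lt.mp (Finset.mem_range.not.mp hj)
    rw [Jfn_eq_iterate_conv hχ hχh hσ.1, iterate_conv_eq_zero_of_lt
      (fun _ => diffKernel_eq_zero_of_lt_one)
      (isCausal_indicator_Ici_of_continuousOn hσ.1).eq_zero_of_neg
      (j + 1) u (by push_cast; linarith), mul_zero]
  rw [tsum_eq_sum htail, hσ.eq_expConvSum hχ hχh hσh hu hN, expConvSum, Finset.sum_range_succ',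
    add_comm]
  simp [Jfn_eq_iterate_conv hχ hχh hσ.1, Set.indicator_of_mem (Set.mem_Ici.mpr hu)]
end
end

section
/- Let χ:[0,∞)→ℂ be measurable with χ(t)=1 for 0 ≤ t ≤ 1 and |χ(t)| ≤ 1 for all t, and let σ be the corresponding solution of the integral equation. Then for every complex s with Re(s) > 0, L(σ, s) = (1/s)·exp( −L( (1−χ(v))/v, s ) ), where L(g,s) := ∫_0^∞ g(t) e^{−st} dt denotes the Laplace transform. -/
open MeasureTheory Filter Real

noncomputable section

/-- The Laplace transform `L(g,s) = ∫_0^∞ g(t) e^{-st} dt`. -/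
def Laplace (g : ℝ → ℂ) (s : ℂ) : ℂ :=
  ∫ t in Set.Ioi (0:ℝ), g t * Complex.exp (-s * t)

/-!
Differentiating under the integral sign gives `L(σ)' = -L(u σ)`, and the integral equation
says that `u σ(u)` is the convolution of `χ` and `σ` on `[0, ∞)`, so `L(σ)' = -L(χ) L(σ)`.
In the same way `h(v) = (1 - χ(v)) / v` has `L(h)' = -L(1 - χ) = L(χ) - 1/s`. Hence
`s L(σ, s) exp (L(h, s))` has derivative zero on the half-plane `Re s > 0` and is constant
there. Letting `s → +∞` along the reals, `σ = 1` and `h = 0` on `(0, 1]` give `s L(σ, s) → 1`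
and `L(h, s) → 0`, so the constant is `1`. All these transforms converge because `|σ| ≤ 1`:
the inequality `u |σ(u)| ≤ ∫_0^u |σ|` makes the running mean `(1/u) ∫_0^u |σ|`
non-increasing for `u ≥ 1`.
-/

open Set Topology

section Laplace

variable {g : ℝ → ℂ} {s : ℂ} {C : ℝ}

lemma norm_cexp_neg_mul_ofReal (s : ℂ) (t : ℝ) :
    ‖Complex.exp (-s * t)‖ = Real.exp (-s.re * t) := by
  simp [Complex.norm_exp, Complex.mul_re]

lemma laplace_one (hs : 0 < s.re) : Laplace (fun _ => 1) s = 1 / s := by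
  have h := integral_exp_mul_complex_Ioi (a := -s) (by simpa using hs) 0
  simp only [Laplace, one_mul, h]
  simp [neg_div_neg_eq]

lemma integrableOn_laplace (hg : AEStronglyMeasurable g (volume.restrict (Ioi 0)))
    (hC : ∀ t, 0 < t → ‖g t‖ ≤ C) (hs : 0 < s.re) :
    IntegrableOn (fun t => g t * Complex.exp (-s * t)) (Ioi 0) := by
  have hexp : Continuous fun t : ℝ => Complex.exp (-s * t) := by fun_prop
  refine Integrable.mono'
    ((integrableOn_exp_mul_Ioi (a := -s.re) (by linarith) 0).const_mul C)
    (hg.mul hexp.aestronglyMeasurable) ?_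
  filter_upwards [ae_restrict_mem measurableSet_Ioi] with t ht
  rw [norm_mul, norm_cexp_neg_mul_ofReal]
  exact mul_le_mul_of_nonneg_right (hC t ht) (Real.exp_pos _).le

lemma laplace_sub {f : ℝ → ℂ} (hf : IntegrableOn (fun t => f t * Complex.exp (-s * t)) (Ioi 0))
    (hg : IntegrableOn (fun t => g t * Complex.exp (-s * t)) (Ioi 0)) :
    Laplace (fun t => f t - g t) s = Laplace f s - Laplace g s := by
  simp only [Laplace, sub_mul]
  exact integral_sub hf hg

lemma norm_laplace_le_of_eqOn_Ioc_zero (hg0 : EqOn g 0 (Ioc 0 1))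
    (hC : ∀ t, 0 < t → ‖g t‖ ≤ C) (hs : 0 < s.re) :
    ‖Laplace g s‖ ≤ C * (Real.exp (-s.re) / s.re) := by
  have hsplit : Laplace g s = ∫ t in Ioi 1, g t * Complex.exp (-s * t) :=
    setIntegral_eq_of_subset_of_forall_sdiff_eq_zero measurableSet_Ioi
      (Ioi_subset_Ioi zero_le_one) fun t ht => by
        simp [hg0 ⟨ht.1, not_lt.mp ht.2⟩]
  have hexp := integrableOn_exp_mul_Ioi (a := -s.re) (by linarith) 1
  calc ‖Laplace g s‖ ≤ ∫ t in Ioi 1, C * Real.exp (-s.re * t) := by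
        rw [hsplit]
        refine norm_integral_le_of_norm_le (hexp.const_mul C) ?_
        filter_upwards [ae_restrict_mem measurableSet_Ioi] with t ht
        rw [norm_mul, norm_cexp_neg_mul_ofReal]
        exact mul_le_mul_of_nonneg_right (hC t (one_pos.trans ht)) (Real.exp_pos _).le
    _ = C * (Real.exp (-s.re) / s.re) := by
        rw [integral_const_mul, integral_exp_mul_Ioi (by linarith)]
        simp [neg_div_neg_eq]

lemma tendsto_mul_laplace_of_eqOn_Ioc_zero (hg0 : EqOn g 0 (Ioc 0 1))
    (hC : ∀ t, 0 < t → ‖g t‖ ≤ C) :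
    Tendsto (fun x : ℝ => (x : ℂ) * Laplace g x) atTop (𝓝 0) := by
  refine squeeze_zero_norm' ?_ (by simpa using Real.tendsto_exp_neg_atTop_nhds_zero.const_mul C)
  filter_upwards [eventually_gt_atTop 0] with x hx
  have hbound := norm_laplace_le_of_eqOn_Ioc_zero hg0 hC (s := x) (by simpa using hx)
  rw [Complex.ofReal_re] at hbound
  calc ‖(x : ℂ) * Laplace g x‖ ≤ x * (C * (Real.exp (-x) / x)) := by
        rw [norm_mul, Complex.norm_real, Real.norm_of_nonneg hx.le]
        gcongr
    _ = C * Real.exp (-x) := by field_simp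

lemma hasDerivAt_laplace (hg : AEStronglyMeasurable g (volume.restrict (Ioi 0)))
    (hC : ∀ t, 0 < t → ‖g t‖ ≤ C) (hs : 0 < s.re) :
    HasDerivAt (Laplace g) (-Laplace (fun t => t * g t) s) s := by
  have hC0 : 0 ≤ C := (norm_nonneg _).trans (hC 1 one_pos)
  set b := s.re / 2 with hb
  have hb0 : 0 < b := by positivity
  have hdom := integrableOn_rpow_mul_exp_neg_mul_rpow (s := 1) (p := 1) (by norm_num) one_pos hb0
  simp only [Real.rpow_one] at hdom
  have key := hasDerivAt_integral_of_dominated_loc_of_deriv_le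
    (μ := volume.restrict (Ioi 0)) (x₀ := s) (s := Metric.ball s b)
    (F := fun z t => g t * Complex.exp (-z * t))
    (F' := fun z t => g t * (-t * Complex.exp (-z * t)))
    (bound := fun t => C * (t * Real.exp (-b * t)))
    (Metric.ball_mem_nhds s hb0)
    (Eventually.of_forall fun z =>
      hg.mul (by fun_prop : Continuous fun t : ℝ => Complex.exp (-z * t)).aestronglyMeasurable)
    (integrableOn_laplace hg hC hs)
    (hg.mul (by fun_prop : Continuous fun t : ℝ =>
      -(t : ℂ) * Complex.exp (-s * t)).aestronglyMeasurable)
    ?_ (hdom.const_mul C) ?_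
  · refine (key.2 : HasDerivAt (Laplace g) _ s).congr_deriv ?_
    rw [Laplace, ← integral_neg]
    congr 1 with t
    ring
  · filter_upwards [ae_restrict_mem measurableSet_Ioi] with t (ht : 0 < t) z hz
    have hzre : b ≤ z.re := by
      rw [Metric.mem_ball, Complex.dist_eq] at hz
      have := (abs_le.mp ((Complex.abs_re_le_norm (z - s)).trans hz.le)).1
      rw [Complex.sub_re] at this
      linarith
    rw [norm_mul, norm_mul, norm_neg, norm_cexp_neg_mul_ofReal, Complex.norm_real,
      Real.norm_of_nonneg ht.le]
    gcongr
    exact hC t ht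
  · filter_upwards with t z _
    have hlin : HasDerivAt (fun z : ℂ => -z * t) (-t) z := by
      simpa using (hasDerivAt_id z).neg.mul_const (t : ℂ)
    exact (((Complex.hasDerivAt_exp _).comp z hlin).const_mul (g t)).congr_deriv (by ring)

lemma laplace_intervalIntegral_mul {f : ℝ → ℂ}
    (hf : IntegrableOn (fun t => f t * Complex.exp (-s * t)) (Ioi 0))
    (hg : IntegrableOn (fun t => g t * Complex.exp (-s * t)) (Ioi 0)) :
    Laplace (fun u => ∫ t in (0:ℝ)..u, f t * g (u - t)) s = Laplace f s * Laplace g s := by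
  -- Extend both integrands by zero to `ℝ`; their convolution at `u` is the integrand on the
  -- left, `(∫_0^u f(t) g(u - t) dt) e^{-su}`, for `u > 0` and vanishes for `u ≤ 0`.
  have hconv := integral_convolution (ContinuousLinearMap.mul ℝ ℂ)
    ((integrable_indicator_iff measurableSet_Ioi).2 hf)
    ((integrable_indicator_iff measurableSet_Ioi).2 hg)
  simp only [integral_indicator measurableSet_Ioi, ContinuousLinearMap.mul_apply'] at hconv
  unfold Laplace
  rw [← hconv, ← integral_indicator measurableSet_Ioi]
  congr 1 with u
  rw [convolution_def]
  simp only [ContinuousLinearMap.mul_apply']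
  have hF : ∀ t, (Ioi 0).indicator (fun t => f t * Complex.exp (-s * t)) t *
      (Ioi 0).indicator (fun t => g t * Complex.exp (-s * t)) (u - t) =
      (Ioo 0 u).indicator (fun t => f t * g (u - t) * Complex.exp (-s * u)) t := by
    intro t
    by_cases ht : t ∈ Ioo 0 u
    · rw [indicator_of_mem ht, indicator_of_mem (mem_Ioi.2 ht.1),
        indicator_of_mem (mem_Ioi.2 (sub_pos.2 ht.2)), mul_mul_mul_comm, ← Complex.exp_add]
      push_cast
      ring_nf
    rw [indicator_of_notMem ht]
    rcases le_or_gt t 0 with h0 | h0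
    · rw [indicator_of_notMem (show t ∉ Ioi 0 from not_lt.2 h0), zero_mul]
    · have hu : u - t ∉ Ioi 0 := fun h => ht ⟨h0, sub_pos.1 h⟩
      rw [indicator_of_notMem hu, mul_zero]
  simp_rw [hF]
  rw [integral_indicator measurableSet_Ioo, ← integral_Ioc_eq_integral_Ioo, integral_mul_const]
  rcases le_or_gt u 0 with hu | hu
  · rw [indicator_of_notMem (show u ∉ Ioi 0 from not_lt.2 hu), Ioc_eq_empty (not_lt.2 hu),
      Measure.restrict_empty, integral_zero_measure, zero_mul]
  · rw [indicator_of_mem (mem_Ioi.2 hu), intervalIntegral.integral_of_le hu.le]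

end Laplace

lemma le_one_of_mul_le_intervalIntegral {φ : ℝ → ℝ} (hφ : Continuous φ)
    (h1 : ∫ t in (0:ℝ)..1, φ t ≤ 1) (hmul : ∀ v, 1 ≤ v → v * φ v ≤ ∫ t in (0:ℝ)..v, φ t)
    {v : ℝ} (hv : 1 ≤ v) : φ v ≤ 1 := by
  set I := fun v => ∫ t in (0:ℝ)..v, φ t
  have hI : ∀ x, HasDerivAt I (φ x) x := fun x => (hφ.integral_hasStrictDerivAt 0 x).hasDerivAt
  have hquot : ∀ x, 0 < x → HasDerivAt (fun v => I v / v) ((φ x * x - I x * 1) / x ^ 2) x :=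
    fun x hx => (hI x).div (hasDerivAt_id x) hx.ne'
  have hanti : AntitoneOn (fun v => I v / v) (Ici 1) := by
    refine antitoneOn_of_deriv_nonpos (convex_Ici 1) ?_ ?_ ?_
    · exact fun x hx => (hquot x (one_pos.trans_le hx)).continuousAt.continuousWithinAt
    · rw [interior_Ici]
      exact fun x hx => (hquot x (one_pos.trans hx)).differentiableAt.differentiableWithinAt
    · rw [interior_Ici]
      intro x (hx : 1 < x)
      rw [(hquot x (one_pos.trans hx)).deriv]
      have := hmul x hx.le
      exact div_nonpos_of_nonpos_of_nonneg (by linarith) (sq_nonneg x)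
  have hv0 : 0 < v := one_pos.trans_le hv
  calc φ v = v * φ v / v := by field_simp
    _ ≤ I v / v := by gcongr; exact hmul v hv
    _ ≤ I 1 / 1 := hanti self_mem_Ici hv hv
    _ ≤ 1 := by simpa [I] using h1

section Solution

variable {χ σ : ℝ → ℂ} {s : ℂ}

lemma IsSolnC.intervalIntegral_eq (hχ : ChiOKC χ) (hσ : IsSolnC χ σ) {u : ℝ} (hu : 0 < u) :
    ∫ t in (0:ℝ)..u, χ t * σ (u - t) = u * σ u := by
  rcases le_or_gt u 1 with hu1 | hu1
  · have hone : EqOn (fun t => χ t * σ (u - t)) 1 (uIcc 0 u) := by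
      intro t ht
      rw [uIcc_of_le hu.le] at ht
      simp [hχ.2.1 t ht.1 (ht.2.trans hu1),
        hσ.2.1 (u - t) (by linarith [ht.2]) (by linarith [ht.1])]
    rw [intervalIntegral.integral_congr hone, hσ.2.1 u hu.le hu1]
    simp
  · exact (hσ.2.2 u hu1).symm

lemma IsSolnC.norm_le_one (hχ : ChiOKC χ) (hσ : IsSolnC χ σ) {u : ℝ} (hu : 0 ≤ u) :
    ‖σ u‖ ≤ 1 := by
  rcases le_or_gt u 1 with hu1 | hu1
  · simp [hσ.2.1 u hu hu1]
  -- `σ` is only continuous on `[0, ∞)`; clamping the argument makes `‖σ‖` continuous on `ℝ`.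
  set φ := fun u : ℝ => ‖σ (max u 0)‖
  have hφ : Continuous φ :=
    (hσ.1.comp_continuous (continuous_id.max continuous_const) fun x => le_max_right x 0).norm
  have hφσ : ∀ u, 0 ≤ u → φ u = ‖σ u‖ := fun u hu => by simp only [φ, max_eq_left hu]
  have hφ1 : EqOn φ 1 (uIcc 0 1) := by
    intro t ht
    rw [uIcc_of_le zero_le_one] at ht
    simp [hφσ t ht.1, hσ.2.1 t ht.1 ht.2]
  have hmul : ∀ v, 1 ≤ v → v * φ v ≤ ∫ t in (0:ℝ)..v, φ t := by
    intro v hv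
    have hv0 : 0 < v := one_pos.trans_le hv
    have hχσ : ∀ t ∈ Ioc 0 v, ‖χ t * σ (v - t)‖ ≤ φ (v - t) := by
      intro t ht
      rw [norm_mul, hφσ _ (sub_nonneg.2 ht.2)]
      exact mul_le_of_le_one_left (norm_nonneg _) (hχ.2.2 t ht.1.le)
    calc v * φ v = ‖∫ t in (0:ℝ)..v, χ t * σ (v - t)‖ := by
          rw [hσ.intervalIntegral_eq hχ hv0, norm_mul, Complex.norm_real,
            Real.norm_of_nonneg hv0.le, hφσ v hv0.le]
      _ ≤ ∫ t in (0:ℝ)..v, φ (v - t) :=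
          intervalIntegral.norm_integral_le_of_norm_le hv0.le (Eventually.of_forall hχσ)
            ((hφ.comp (continuous_sub_left v)).intervalIntegrable 0 v)
      _ = ∫ t in (0:ℝ)..v, φ t := by simp
  simpa [hφσ u hu] using le_one_of_mul_le_intervalIntegral hφ
    (by rw [intervalIntegral.integral_congr hφ1]; simp) hmul hu1.le

lemma IsSolnC.aestronglyMeasurable (hσ : IsSolnC χ σ) :
    AEStronglyMeasurable σ (volume.restrict (Ioi 0)) :=
  (hσ.1.mono Ioi_subset_Ici_self).aestronglyMeasurable measurableSet_Ioi

lemma IsSolnC.hasDerivAt_laplace (hχ : ChiOKC χ) (hσ : IsSolnC χ σ) (hs : 0 < s.re) :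
    HasDerivAt (Laplace σ) (-(Laplace χ s * Laplace σ s)) s := by
  have hσC : ∀ t, 0 < t → ‖σ t‖ ≤ 1 := fun t ht => hσ.norm_le_one hχ ht.le
  have hχC : ∀ t, 0 < t → ‖χ t‖ ≤ 1 := fun t ht => hχ.2.2 t ht.le
  have hmul : Laplace (fun t => t * σ t) s = Laplace χ s * Laplace σ s := by
    rw [← laplace_intervalIntegral_mul
      (integrableOn_laplace hχ.1.aestronglyMeasurable.restrict hχC hs)
      (integrableOn_laplace hσ.aestronglyMeasurable hσC hs)]
    refine setIntegral_congr_fun measurableSet_Ioi fun u (hu : 0 < u) => ?_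
    dsimp only
    rw [hσ.intervalIntegral_eq hχ hu]
  simpa [hmul] using _root_.hasDerivAt_laplace hσ.aestronglyMeasurable hσC hs

lemma ChiOKC.norm_one_sub_div_le (hχ : ChiOKC χ) {t : ℝ} (ht : 0 < t) :
    ‖(1 - χ t) / t‖ ≤ 2 := by
  rcases le_or_gt t 1 with ht1 | ht1
  · simp [hχ.2.1 t ht.le ht1]
  rw [norm_div, Complex.norm_real, Real.norm_of_nonneg ht.le, div_le_iff₀ ht]
  calc ‖1 - χ t‖ ≤ ‖(1 : ℂ)‖ + ‖χ t‖ := norm_sub_le _ _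
    _ ≤ 2 * t := by rw [norm_one]; linarith [hχ.2.2 t ht.le]

lemma ChiOKC.hasDerivAt_laplace_one_sub_div (hχ : ChiOKC χ) (hs : 0 < s.re) :
    HasDerivAt (Laplace fun v => (1 - χ v) / v) (Laplace χ s - 1 / s) s := by
  have hmeas : AEStronglyMeasurable (fun v : ℝ => (1 - χ v) / v) (volume.restrict (Ioi 0)) :=
    ((measurable_const.sub hχ.1).div Complex.measurable_ofReal).aestronglyMeasurable
  have hmul : Laplace (fun t : ℝ => t * ((1 - χ t) / t)) s = 1 / s - Laplace χ s := by
    rw [← laplace_one hs, ← laplace_sub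
      (integrableOn_laplace aestronglyMeasurable_const (fun _ _ => le_refl ‖(1 : ℂ)‖) hs)
      (integrableOn_laplace hχ.1.aestronglyMeasurable.restrict (fun t ht => hχ.2.2 t ht.le) hs)]
    refine setIntegral_congr_fun measurableSet_Ioi fun t (ht : 0 < t) => ?_
    dsimp only
    rw [mul_div_cancel₀ _ (Complex.ofReal_ne_zero.2 ht.ne')]
  simpa [hmul] using hasDerivAt_laplace hmeas (fun t ht => hχ.norm_one_sub_div_le ht) hs

lemma IsSolnC.tendsto_mul_laplace (hχ : ChiOKC χ) (hσ : IsSolnC χ σ) :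
    Tendsto (fun x : ℝ => (x : ℂ) * Laplace σ x) atTop (𝓝 1) := by
  have hσ1 : EqOn (fun t => σ t - 1) 0 (Ioc 0 1) := fun t ht => by
    simp [hσ.2.1 t ht.1.le ht.2]
  have hσ1C : ∀ t, 0 < t → ‖σ t - 1‖ ≤ 2 := fun t ht => by
    linarith [norm_sub_le (σ t) 1, hσ.norm_le_one hχ ht.le, norm_one (α := ℂ)]
  have hsplit : ∀ᶠ x : ℝ in atTop,
      (x : ℂ) * Laplace (fun t => σ t - 1) x + 1 = x * Laplace σ x := by
    filter_upwards [eventually_gt_atTop 0] with x hx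
    have hxre : 0 < (x : ℂ).re := by simpa using hx
    rw [laplace_sub (integrableOn_laplace hσ.aestronglyMeasurable
      (fun t ht => hσ.norm_le_one hχ ht.le) hxre)
      (integrableOn_laplace aestronglyMeasurable_const (fun _ _ => le_refl ‖(1 : ℂ)‖) hxre),
      laplace_one hxre]
    field_simp [Complex.ofReal_ne_zero.2 hx.ne']
    ring
  simpa using ((tendsto_mul_laplace_of_eqOn_Ioc_zero hσ1 hσ1C).add_const 1).congr' hsplit

lemma ChiOKC.tendsto_laplace_one_sub_div (hχ : ChiOKC χ) :
    Tendsto (fun x : ℝ => Laplace (fun v => (1 - χ v) / v) x) atTop (𝓝 0) := by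
  have h0 : EqOn (fun v : ℝ => (1 - χ v) / v) 0 (Ioc 0 1) := fun t ht => by
    simp [hχ.2.1 t ht.1.le ht.2]
  have hinv : Tendsto (fun x : ℝ => ((x : ℂ))⁻¹) atTop (𝓝 0) := by
    simpa [Function.comp_def] using
      (Complex.continuous_ofReal.tendsto 0).comp tendsto_inv_atTop_zero
  have hprod := (tendsto_mul_laplace_of_eqOn_Ioc_zero h0
    fun t ht => hχ.norm_one_sub_div_le ht).mul hinv
  rw [zero_mul] at hprod
  refine hprod.congr' ?_
  filter_upwards [eventually_gt_atTop 0] with x hx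
  field_simp [Complex.ofReal_ne_zero.2 hx.ne']

lemma IsSolnC.hasDerivAt_mul_laplace_mul_exp (hχ : ChiOKC χ) (hσ : IsSolnC χ σ)
    (hs : 0 < s.re) :
    HasDerivAt (fun z => z * Laplace σ z * Complex.exp (Laplace (fun v => (1 - χ v) / v) z))
      0 s := by
  have hs0 : s ≠ 0 := fun h => by simp [h] at hs
  refine (((hasDerivAt_id' s).mul (hσ.hasDerivAt_laplace hχ hs)).mul
    (hχ.hasDerivAt_laplace_one_sub_div hs).cexp).congr_deriv ?_
  simp only [Pi.mul_apply]
  field_simp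
  ring

end Solution

/-- Identity (3.1) of Granville–Soundararajan, "The number of unsieved integers up
to x": for `Re s > 0`, `L(σ,s) = (1/s) exp(-L((1-χ(v))/v, s))`. -/
theorem laplace_identity (χ σ : ℝ → ℂ) (hχ : ChiOKC χ) (hσ : IsSolnC χ σ)
    (s : ℂ) (hs : 0 < s.re) :
    Laplace σ s =
      (1 / s) * Complex.exp (-(Laplace (fun v : ℝ => (1 - χ v) / ((v : ℝ) : ℂ)) s)) := by
  set Φ : ℂ → ℂ := fun z =>
    z * Laplace σ z * Complex.exp (Laplace (fun v => (1 - χ v) / v) z)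
  have hΦ' : ∀ z : ℂ, 0 < z.re → HasDerivAt Φ 0 z := fun z hz =>
    hσ.hasDerivAt_mul_laplace_mul_exp hχ hz
  have hconst : ∀ z : ℂ, 0 < z.re → Φ z = Φ s := fun z hz =>
    (isOpen_lt continuous_const Complex.continuous_re).is_const_of_deriv_eq_zero
      (convex_halfSpace_re_gt 0).isPreconnected
      (fun w hw => (hΦ' w hw).differentiableAt.differentiableWithinAt)
      (fun w hw => (hΦ' w hw).deriv) hz hs
  have hlim : Tendsto (fun x : ℝ => Φ x) atTop (𝓝 1) := by
    simpa using (hσ.tendsto_mul_laplace hχ).mul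
      ((Complex.continuous_exp.tendsto 0).comp hχ.tendsto_laplace_one_sub_div)
  have hΦs : Φ s = 1 := by
    refine tendsto_nhds_unique (tendsto_const_nhds.congr' ?_) hlim
    filter_upwards [eventually_gt_atTop 0] with x hx
    exact (hconst x (by simpa using hx)).symm
  have hs0 : s ≠ 0 := fun h => by simp [h] at hs
  rw [Complex.exp_neg]
  field_simp
  linear_combination hΦs
end
end

section
/- Let a ≤ b be real numbers, let f:[a,b]→[0,1] be measurable, and let g:[a,b]→ℝ be integrable and non-decreasing on [a,b]. Put A := ∫_a^b f(t) dt. Then ∫_a^{a+A} g(t) dt ≤ ∫_a^b f(t) g(t) dt ≤ ∫_{b−A}^{b} g(t) dt. -/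
/-!
Bathtub principle. If `h` changes sign from `≤ 0` to `≥ 0` at a point `c` and `∫ h = 0`, then
`∫ h g = ∫ h (g - g c) ≥ 0` for every non-decreasing `g`, the integrand being pointwise
nonnegative. With `c = a + A` and `h = f - 𝟙_{(-∞, c]}` this is the lower bound; the upper bound
is the lower bound for `1 - f`.
-/

open MeasureTheory Real Set intervalIntegral

theorem integral_mul_nonneg_of_sign_change {μ : Measure ℝ} {a b c : ℝ} {h g : ℝ → ℝ}
    (hab : a ≤ b) (hc : c ∈ Icc a b) (hg : MonotoneOn g (Icc a b))
    (hh : IntervalIntegrable h μ a b) (hhg : IntervalIntegrable (fun t => h t * g t) μ a b)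
    (hneg : ∀ t ∈ Ico a c, h t ≤ 0) (hpos : ∀ t ∈ Ioc c b, 0 ≤ h t)
    (hzero : ∫ t in a..b, h t ∂μ = 0) :
    0 ≤ ∫ t in a..b, h t * g t ∂μ := by
  have hsign : ∀ t ∈ Icc a b, 0 ≤ h t * (g t - g c) := by
    intro t ht
    rcases lt_trichotomy t c with htc | rfl | hct
    · exact mul_nonneg_of_nonpos_of_nonpos (hneg t ⟨ht.1, htc⟩)
        (sub_nonpos.2 (hg ht hc htc.le))
    · simp
    · exact mul_nonneg (hpos t ⟨hct, ht.2⟩) (sub_nonneg.2 (hg hc ht hct.le))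
  calc 0 ≤ ∫ t in a..b, h t * (g t - g c) ∂μ := integral_nonneg hab hsign
    _ = (∫ t in a..b, h t * g t ∂μ) - (∫ t in a..b, h t ∂μ) * g c := by
      simp only [mul_sub]
      rw [integral_sub hhg (hh.mul_const _), intervalIntegral.integral_mul_const]
    _ = ∫ t in a..b, h t * g t ∂μ := by rw [hzero, zero_mul, sub_zero]

section UnitIntervalValued

variable {μ : Measure ℝ} {a b : ℝ} {f g : ℝ → ℝ}

theorem ae_restrict_Ioc_norm_le_one_of_mem_Icc_zero_one (hf01 : ∀ t ∈ Icc a b, f t ∈ Icc (0 : ℝ) 1) :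
    ∀ᵐ t ∂μ.restrict (Ioc a b), ‖f t‖ ≤ 1 := by
  filter_upwards [ae_restrict_mem measurableSet_Ioc] with t ht
  obtain ⟨hf0, hf1⟩ := hf01 t (Ioc_subset_Icc_self ht)
  rw [norm_eq_abs, abs_le]
  exact ⟨by linarith, hf1⟩

theorem intervalIntegrable_of_mem_Icc_zero_one (hab : a ≤ b)
    (hf : AEStronglyMeasurable f (volume.restrict (Ioc a b)))
    (hf01 : ∀ t ∈ Icc a b, f t ∈ Icc (0 : ℝ) 1) : IntervalIntegrable f volume a b :=
  (intervalIntegrable_iff_integrableOn_Ioc_of_le hab).2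
    (Integrable.of_bound hf 1 (ae_restrict_Ioc_norm_le_one_of_mem_Icc_zero_one hf01))

theorem IntervalIntegrable.mul_of_mem_Icc_zero_one (hg : IntervalIntegrable g μ a b)
    (hab : a ≤ b) (hf : AEStronglyMeasurable f (μ.restrict (Ioc a b)))
    (hf01 : ∀ t ∈ Icc a b, f t ∈ Icc (0 : ℝ) 1) :
    IntervalIntegrable (fun t => f t * g t) μ a b :=
  (intervalIntegrable_iff_integrableOn_Ioc_of_le hab).2
    (hg.1.bdd_mul hf (ae_restrict_Ioc_norm_le_one_of_mem_Icc_zero_one hf01))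

theorem add_integral_mem_Icc_of_mem_Icc_zero_one (hab : a ≤ b)
    (hf : AEStronglyMeasurable f (volume.restrict (Ioc a b)))
    (hf01 : ∀ t ∈ Icc a b, f t ∈ Icc (0 : ℝ) 1) :
    a + ∫ t in a..b, f t ∈ Icc a b := by
  have hA0 : 0 ≤ ∫ t in a..b, f t := integral_nonneg hab fun t ht => (hf01 t ht).1
  have hA1 : ∫ t in a..b, f t ≤ ∫ _ in a..b, (1 : ℝ) :=
    integral_mono_on hab (intervalIntegrable_of_mem_Icc_zero_one hab hf hf01)
      intervalIntegrable_const fun t ht => (hf01 t ht).2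
  rw [integral_one] at hA1
  constructor <;> linarith

theorem integral_left_end_le_integral_mul (hab : a ≤ b)
    (hf : AEStronglyMeasurable f (volume.restrict (Ioc a b)))
    (hf01 : ∀ t ∈ Icc a b, f t ∈ Icc (0 : ℝ) 1)
    (hg : IntervalIntegrable g volume a b) (hgmono : MonotoneOn g (Icc a b)) :
    ∫ t in a..a + ∫ t in a..b, f t, g t ≤ ∫ t in a..b, f t * g t := by
  set c := a + ∫ t in a..b, f t with hc_def
  have hc : c ∈ Icc a b := add_integral_mem_Icc_of_mem_Icc_zero_one hab hf hf01
  have hfi := intervalIntegrable_of_mem_Icc_zero_one hab hf hf01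
  have hfg := hg.mul_of_mem_Icc_zero_one hab hf hf01
  set s := {x : ℝ | x ≤ c}
  have hs : MeasurableSet s := measurableSet_Iic
  have h1i : IntervalIntegrable (s.indicator 1) volume a b :=
    ⟨(intervalIntegrable_const (c := (1 : ℝ))).1.indicator hs,
      (intervalIntegrable_const (c := (1 : ℝ))).2.indicator hs⟩
  have hgi : IntervalIntegrable (s.indicator g) volume a b :=
    ⟨hg.1.indicator hs, hg.2.indicator hs⟩
  have hprod : (fun t => (f t - s.indicator 1 t) * g t) = fun t => f t * g t - s.indicator g t := by
    ext t
    by_cases ht : t ∈ s <;> simp [ht, sub_mul]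
  have key := integral_mul_nonneg_of_sign_change hab hc hgmono (hfi.sub h1i)
    (by rw [hprod]; exact hfg.sub hgi)
    (fun t ht => by
      have := (hf01 t ⟨ht.1, ht.2.le.trans hc.2⟩).2
      simp [s, ht.2.le]; linarith)
    (fun t ht => by
      have := (hf01 t ⟨hc.1.trans ht.1.le, ht.2⟩).1
      simp [s, not_le.2 ht.1]; linarith)
    (by rw [integral_sub hfi h1i, integral_indicator hc]; simp [hc_def])
  rw [hprod, integral_sub hfg hgi, integral_indicator hc] at key
  linarith

theorem integral_mul_le_integral_right_end (hab : a ≤ b)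
    (hf : AEStronglyMeasurable f (volume.restrict (Ioc a b)))
    (hf01 : ∀ t ∈ Icc a b, f t ∈ Icc (0 : ℝ) 1)
    (hg : IntervalIntegrable g volume a b) (hgmono : MonotoneOn g (Icc a b)) :
    ∫ t in a..b, f t * g t ≤ ∫ t in b - ∫ t in a..b, f t..b, g t := by
  have hf' : AEStronglyMeasurable (fun t => 1 - f t) (volume.restrict (Ioc a b)) :=
    aestronglyMeasurable_const.sub hf
  have hf01' : ∀ t ∈ Icc a b, 1 - f t ∈ Icc (0 : ℝ) 1 := fun t ht => by
    obtain ⟨h0, h1⟩ := hf01 t ht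
    constructor <;> linarith
  have hfi := intervalIntegrable_of_mem_Icc_zero_one hab hf hf01
  have hfg := hg.mul_of_mem_Icc_zero_one hab hf hf01
  have hd := add_integral_mem_Icc_of_mem_Icc_zero_one hab hf' hf01'
  have key := integral_left_end_le_integral_mul hab hf' hf01' hg hgmono
  rw [integral_sub intervalIntegrable_const hfi, integral_one] at hd key
  simp only [sub_mul, one_mul] at key
  rw [integral_sub hg hfg] at key
  have hsplit := integral_add_adjacent_intervals
    (hg.mono_set (by rw [uIcc_of_le hd.1, uIcc_of_le hab]; exact Icc_subset_Icc le_rfl hd.2))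
    (hg.mono_set (by rw [uIcc_of_le hd.2, uIcc_of_le hab]; exact Icc_subset_Icc hd.1 le_rfl))
  rw [show a + (b - a - ∫ t in a..b, f t) = b - ∫ t in a..b, f t by ring] at hsplit key
  linarith

end UnitIntervalValued

/-- Lemma 5.1 of Granville–Soundararajan, "The number of unsieved integers up to x":
if `f : [a,b] → [0,1]` is measurable, `g` is integrable and non-decreasing on `[a,b]`,
and `A = ∫_a^b f(t) dt`, then
`∫_a^{a+A} g(t) dt ≤ ∫_a^b f(t)g(t) dt ≤ ∫_{b-A}^b g(t) dt`. -/
theorem lemma5_1 (a b : ℝ) (hab : a ≤ b) (f g : ℝ → ℝ)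
    (hf : Measurable f) (hf01 : ∀ t ∈ Set.Icc a b, f t ∈ Set.Icc (0:ℝ) 1)
    (hg : IntervalIntegrable g volume a b) (hgmono : MonotoneOn g (Set.Icc a b))
    (A : ℝ) (hA : A = ∫ t in a..b, f t) :
    (∫ t in a..(a + A), g t) ≤ (∫ t in a..b, f t * g t) ∧
    (∫ t in a..b, f t * g t) ≤ ∫ t in (b - A)..b, g t := by
  subst hA
  exact ⟨integral_left_end_le_integral_mul hab hf.aestronglyMeasurable hf01 hg hgmono,
    integral_mul_le_integral_right_end hab hf.aestronglyMeasurable hf01 hg hgmono⟩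
end

section
/- Let χ:[0,∞)→ℝ be measurable with χ(t)=1 for 0 ≤ t ≤ 1 and 0 ≤ χ(t) ≤ 1 for all t. Then for all 0 ≤ t ≤ y: y·E(t)/E(y) − t ≤ B(y) − B(t) ≤ y − t·E(y)/E(t); equivalently, E(t) ≤ (E(y)/y)·( t + B(y) − B(t) ) and E(y) ≤ (E(t)/t)·( y − B(y) + B(t) ). -/
open MeasureTheory Filter Real

noncomputable section

/-- `B(u) = ∫_0^u χ(v) dv`. -/
def Bfn (χ : ℝ → ℝ) (u : ℝ) : ℝ := ∫ v in (0:ℝ)..u, χ v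

/-- Measurable + bounded on `uIoc` implies interval integrable. -/
lemma II_of_bounded (f : ℝ → ℝ) (hf : Measurable f) (a b C : ℝ)
    (h : ∀ u ∈ Set.uIoc a b, ‖f u‖ ≤ C) : IntervalIntegrable f volume a b := by
  apply (intervalIntegrable_const (c := C)).mono_fun' hf.aestronglyMeasurable
  exact ae_restrict_of_forall_mem measurableSet_uIoc h

lemma chi_II (χ : ℝ → ℝ) (hχ : ChiOK χ) (a b : ℝ) (ha : 0 ≤ a) (hb : 0 ≤ b) :
    IntervalIntegrable χ volume a b := by
  obtain ⟨hm, h1, hbd⟩ := hχ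
  refine II_of_bounded χ hm a b 1 ?_
  intro u hu
  have hu0 : 0 ≤ u := le_of_lt ((le_min ha hb).trans_lt hu.1)
  have := hbd u hu0
  rw [Real.norm_eq_abs, abs_le]
  constructor <;> linarith [this.1, this.2]

lemma g_II (χ : ℝ → ℝ) (hχ : ChiOK χ) (a b : ℝ) (ha : 0 ≤ a) (hb : 0 ≤ b) :
    IntervalIntegrable (fun u => (1 - χ u) / u) volume a b := by
  obtain ⟨hm, h1, hbd⟩ := hχ
  refine II_of_bounded _ (by fun_prop) a b 1 ?_
  intro u hu
  have hu0 : 0 < u := (le_min ha hb).trans_lt hu.1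
  rcases le_or_gt u 1 with h | h
  · rw [h1 u hu0.le h]; simp
  · have hb1 := hbd u hu0.le
    rw [Real.norm_eq_abs, abs_div, abs_of_pos hu0, abs_of_nonneg (by linarith [hb1.2])]
    rw [div_le_one hu0]
    linarith [hb1.1]

lemma chi_over_u_II (χ : ℝ → ℝ) (hχ : ChiOK χ) (a b : ℝ) (ha : 0 < a) (hb : 0 < b) :
    IntervalIntegrable (fun u => χ u / u) volume a b := by
  obtain ⟨hm, h1, hbd⟩ := hχ
  refine II_of_bounded _ (by fun_prop) a b ((min a b)⁻¹) ?_
  intro u hu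
  have hmin : 0 < min a b := lt_min ha hb
  have hu0 : 0 < u := hmin.trans hu.1
  have hb1 := hbd u hu0.le
  rw [Real.norm_eq_abs, abs_div, abs_of_pos hu0, abs_of_nonneg hb1.1]
  calc χ u / u ≤ 1 / u := by gcongr; exact hb1.2
    _ ≤ (min a b)⁻¹ := by rw [one_div]; exact inv_anti₀ hmin hu.1.le

lemma inv_II (a b : ℝ) (ha : 0 < a) (hb : 0 < b) :
    IntervalIntegrable (fun u : ℝ => u⁻¹) volume a b := by
  apply intervalIntegral.intervalIntegrable_inv (f := fun x : ℝ => x) ?_ continuousOn_id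
  intro x hx
  have : 0 < x := (lt_min ha hb).trans_le (by simpa using hx.1)
  exact ne_of_gt this

/-- `B(y) - B(t) = ∫_t^y χ`. -/
lemma Bfn_sub (χ : ℝ → ℝ) (hχ : ChiOK χ) (t y : ℝ) (ht : 0 ≤ t) (hy : 0 ≤ y) :
    Bfn χ y - Bfn χ t = ∫ u in t..y, χ u :=
  intervalIntegral.integral_interval_sub_left (chi_II χ hχ 0 y le_rfl hy)
    (chi_II χ hχ 0 t le_rfl ht)

/-- `E(t)/E(y) = exp(-∫_t^y (1-χ)/u)`. -/
lemma Efn_ratio (χ : ℝ → ℝ) (hχ : ChiOK χ) (t y : ℝ) (ht : 0 ≤ t) (hy : 0 ≤ y) :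
    Efn χ t / Efn χ y = Real.exp (-(∫ u in t..y, (1 - χ u) / u)) := by
  rw [Efn, Efn, ← Real.exp_sub, ← intervalIntegral.integral_interval_sub_left
    (g_II χ hχ 0 y le_rfl hy) (g_II χ hχ 0 t le_rfl ht), neg_sub]

lemma S_nonneg (χ : ℝ → ℝ) (hχ : ChiOK χ) (t y : ℝ) (ht : 0 ≤ t) (hty : t ≤ y) :
    0 ≤ ∫ u in t..y, χ u := by
  apply intervalIntegral.integral_nonneg hty
  intro u hu
  exact (hχ.2.2 u (ht.trans hu.1)).1

lemma S_le (χ : ℝ → ℝ) (hχ : ChiOK χ) (t y : ℝ) (ht : 0 ≤ t) (hty : t ≤ y) :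
    (∫ u in t..y, χ u) ≤ y - t := by
  have : (∫ u in t..y, χ u) ≤ ∫ u in t..y, (1:ℝ) := by
    apply intervalIntegral.integral_mono_on hty
      (chi_II χ hχ t y ht (ht.trans hty)) intervalIntegrable_const
    intro u hu
    exact (hχ.2.2 u (ht.trans hu.1)).2
  simpa using this

/-- key lower bound: `y E(t)/E(y) ≤ t + (B(y)-B(t))`. -/
lemma key_low (χ : ℝ → ℝ) (hχ : ChiOK χ) (t y : ℝ) (ht : 0 ≤ t) (hty : t ≤ y)
    (hy : 0 < y) : y * (Efn χ t / Efn χ y) ≤ t + (Bfn χ y - Bfn χ t) := by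
  have hOK := hχ
  obtain ⟨hm, h1, hbd⟩ := hχ
  set S := ∫ u in t..y, χ u with hS
  set m := t + S with hmdef
  have hS0 : 0 ≤ S := S_nonneg χ hOK t y ht hty
  have hSle : S ≤ y - t := S_le χ hOK t y ht hty
  have hmy : m ≤ y := by rw [hmdef]; linarith
  have hy0 : 0 ≤ y := hy.le
  have hm0 : 0 < m := by
    rcases lt_or_eq_of_le ht with h | h
    · rw [hmdef]; linarith
    · -- t = 0
      rw [hmdef, ← h, zero_add]
      set c := min 1 y with hc
      have hc0 : 0 < c := lt_min one_pos hy
      have hcy : c ≤ y := min_le_right _ _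
      have hsplit : S = (∫ u in (0:ℝ)..c, χ u) + ∫ u in c..y, χ u := by
        rw [hS, ← h, ← intervalIntegral.integral_add_adjacent_intervals
          (chi_II χ hOK 0 c le_rfl hc0.le) (chi_II χ hOK c y hc0.le hy0)]
      have h1c : (∫ u in (0:ℝ)..c, χ u) = c := by
        rw [intervalIntegral.integral_congr (g := fun _ => (1:ℝ)) ?_]
        · simp
        · intro u hu
          rw [Set.uIcc_of_le hc0.le] at hu
          exact h1 u hu.1 (hu.2.trans (min_le_left _ _))
      have h2c : 0 ≤ ∫ u in c..y, χ u := S_nonneg χ hOK c y hc0.le hcy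
      rw [hsplit, h1c]; linarith
  have htm : t ≤ m := by rw [hmdef]; linarith
  -- split D
  have hD : (∫ u in t..y, (1 - χ u) / u)
      = (∫ u in t..m, (1 - χ u) / u) + ∫ u in m..y, (1 - χ u) / u := by
    rw [intervalIntegral.integral_add_adjacent_intervals
      (g_II χ hOK t m ht hm0.le) (g_II χ hOK m y hm0.le hy0)]
  -- split S
  have hSsplit : S = (∫ u in t..m, χ u) + ∫ u in m..y, χ u := by
    rw [hS, ← intervalIntegral.integral_add_adjacent_intervals
      (chi_II χ hOK t m ht hm0.le) (chi_II χ hOK m y hm0.le hy0)]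
  -- on [m,y] : (1-χ u)/u = u⁻¹ - χ u / u
  have hmy2 : (∫ u in m..y, (1 - χ u) / u)
      = (Real.log y - Real.log m) - ∫ u in m..y, χ u / u := by
    have heq : (∫ u in m..y, (1 - χ u) / u) = ∫ u in m..y, (u⁻¹ - χ u / u) := by
      apply intervalIntegral.integral_congr
      intro u hu
      rw [Set.uIcc_of_le hmy] at hu
      have hu0 : 0 < u := hm0.trans_le hu.1
      field_simp
    rw [heq, intervalIntegral.integral_sub (inv_II m y hm0 hy)
      (chi_over_u_II χ hOK m y hm0 hy), integral_inv_of_pos hm0 hy,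
      Real.log_div (ne_of_gt hy) (ne_of_gt hm0)]
  -- bound ∫_m^y χ u / u ≤ (∫_m^y χ)/m
  have hbound1 : (∫ u in m..y, χ u / u) ≤ (∫ u in m..y, χ u) / m := by
    have : (∫ u in m..y, χ u / u) ≤ ∫ u in m..y, χ u / m := by
      apply intervalIntegral.integral_mono_on hmy (chi_over_u_II χ hOK m y hm0 hy)
        ((chi_II χ hOK m y hm0.le hy0).div_const m)
      intro u hu
      have hu0 : 0 < u := hm0.trans_le hu.1
      have hb1 := hbd u hu0.le
      gcongr
      · exact hb1.1
      · exact hu.1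
    rwa [intervalIntegral.integral_div] at this
  -- bound ∫_t^m (1-χ u)/m ≤ ∫_t^m (1-χ u)/u
  have hbound2 : ((m - t) - ∫ u in t..m, χ u) / m ≤ ∫ u in t..m, (1 - χ u) / u := by
    have h2 : (∫ u in t..m, (1 - χ u) / m) ≤ ∫ u in t..m, (1 - χ u) / u := by
      apply intervalIntegral.integral_mono_on htm
        (((intervalIntegrable_const (c := (1:ℝ))).sub
          (chi_II χ hOK t m ht hm0.le)).div_const m)
        (g_II χ hOK t m ht hm0.le)
      intro u hu
      have hu0 : 0 ≤ u := ht.trans hu.1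
      rcases eq_or_lt_of_le hu0 with h | h
      · rw [h1 u hu0 (by rw [← h]; norm_num)]
        simp
      · have hb1 := hbd u hu0
        gcongr
        · linarith [hb1.2]
        · exact hu.2
    have h3 : (∫ u in t..m, (1 - χ u) / m) = ((m - t) - ∫ u in t..m, χ u) / m := by
      rw [intervalIntegral.integral_div, intervalIntegral.integral_sub
        intervalIntegrable_const (chi_II χ hOK t m ht hm0.le)]
      simp
    rwa [h3] at h2
  -- combine: D ≥ log y - log m
  have hkey : Real.log y - Real.log m ≤ ∫ u in t..y, (1 - χ u) / u := by
    rw [hD, hmy2]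
    have hmt : m - t = S := by rw [hmdef]; ring
    have heqnum : ((m - t) - ∫ u in t..m, χ u) = ∫ u in m..y, χ u := by
      rw [hmt]; linarith [hSsplit]
    rw [heqnum] at hbound2
    linarith [hbound1, hbound2]
  -- finish
  rw [Bfn_sub χ hOK t y ht hy0, ← hS, Efn_ratio χ hOK t y ht hy0, ← hmdef]
  calc y * Real.exp (-(∫ u in t..y, (1 - χ u) / u))
      ≤ y * Real.exp (-(Real.log y - Real.log m)) :=
        mul_le_mul_of_nonneg_left (Real.exp_le_exp.2 (by linarith)) hy0
    _ = m := by
        rw [neg_sub, Real.exp_sub, Real.exp_log hm0, Real.exp_log hy]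
        field_simp

/-- key upper bound: `t E(y)/E(t) ≤ y - (B(y)-B(t))` for `t > 0`. -/
lemma key_high (χ : ℝ → ℝ) (hχ : ChiOK χ) (t y : ℝ) (ht : 0 < t) (hty : t ≤ y) :
    t * (Efn χ y / Efn χ t) ≤ y - (Bfn χ y - Bfn χ t) := by
  have hOK := hχ
  obtain ⟨hm, h1, hbd⟩ := hχ
  have ht0 : 0 ≤ t := ht.le
  have hy0 : 0 ≤ y := ht0.trans hty
  have hy : 0 < y := ht.trans_le hty
  set S := ∫ u in t..y, χ u with hS
  set m := y - S with hmdef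
  have hS0 : 0 ≤ S := S_nonneg χ hOK t y ht0 hty
  have hSle : S ≤ y - t := S_le χ hOK t y ht0 hty
  have htm : t ≤ m := by rw [hmdef]; linarith
  have hmy : m ≤ y := by rw [hmdef]; linarith
  have hm0 : 0 < m := ht.trans_le htm
  -- split D
  have hD : (∫ u in t..y, (1 - χ u) / u)
      = (∫ u in t..m, (1 - χ u) / u) + ∫ u in m..y, (1 - χ u) / u := by
    rw [intervalIntegral.integral_add_adjacent_intervals
      (g_II χ hOK t m ht0 hm0.le) (g_II χ hOK m y hm0.le hy0)]
  have hSsplit : S = (∫ u in t..m, χ u) + ∫ u in m..y, χ u := by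
    rw [hS, ← intervalIntegral.integral_add_adjacent_intervals
      (chi_II χ hOK t m ht0 hm0.le) (chi_II χ hOK m y hm0.le hy0)]
  -- on [t,m] : (1-χ u)/u = u⁻¹ - χ u / u, and χ u / m ≤ χ u / u
  have htm2 : (∫ u in t..m, (1 - χ u) / u)
      ≤ (Real.log m - Real.log t) - (∫ u in t..m, χ u) / m := by
    have heq : (∫ u in t..m, (1 - χ u) / u) = ∫ u in t..m, (u⁻¹ - χ u / u) := by
      apply intervalIntegral.integral_congr
      intro u hu
      rw [Set.uIcc_of_le htm] at hu
      have hu0 : 0 < u := ht.trans_le hu.1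
      field_simp
    rw [heq, intervalIntegral.integral_sub (inv_II t m ht hm0)
      (chi_over_u_II χ hOK t m ht hm0), integral_inv_of_pos ht hm0,
      Real.log_div (ne_of_gt hm0) (ne_of_gt ht)]
    have hmono : (∫ u in t..m, χ u / m) ≤ ∫ u in t..m, χ u / u := by
      apply intervalIntegral.integral_mono_on htm
        ((chi_II χ hOK t m ht0 hm0.le).div_const m)
        (chi_over_u_II χ hOK t m ht hm0)
      intro u hu
      have hu0 : 0 < u := ht.trans_le hu.1
      have hb1 := hbd u hu0.le
      gcongr
      · exact hb1.1
      · exact hu.2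
    rw [intervalIntegral.integral_div] at hmono
    linarith
  -- on [m,y] : (1-χ u)/u ≤ (1-χ u)/m
  have hmy2 : (∫ u in m..y, (1 - χ u) / u) ≤ ((y - m) - ∫ u in m..y, χ u) / m := by
    have h2 : (∫ u in m..y, (1 - χ u) / u) ≤ ∫ u in m..y, (1 - χ u) / m := by
      apply intervalIntegral.integral_mono_on hmy (g_II χ hOK m y hm0.le hy0)
        (((intervalIntegrable_const (c := (1:ℝ))).sub
          (chi_II χ hOK m y hm0.le hy0)).div_const m)
      intro u hu
      have hu0 : 0 < u := hm0.trans_le hu.1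
      have hb1 := hbd u hu0.le
      gcongr
      · linarith [hb1.2]
      · exact hu.1
    have h3 : (∫ u in m..y, (1 - χ u) / m) = ((y - m) - ∫ u in m..y, χ u) / m := by
      rw [intervalIntegral.integral_div, intervalIntegral.integral_sub
        intervalIntegrable_const (chi_II χ hOK m y hm0.le hy0)]
      simp
    linarith
  -- combine: D ≤ log m - log t
  have hkey : (∫ u in t..y, (1 - χ u) / u) ≤ Real.log m - Real.log t := by
    rw [hD]
    have hym : y - m = S := by rw [hmdef]; ring
    have : ((y - m) - ∫ u in m..y, χ u) / m = ((∫ u in t..m, χ u)) / m := by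
      congr 1
      linarith [hSsplit, hym]
    linarith [htm2, hmy2, this.le, this.ge]
  -- finish
  have hratio : Efn χ y / Efn χ t = Real.exp (∫ u in t..y, (1 - χ u) / u) := by
    rw [Efn_ratio χ hOK y t hy0 ht0, intervalIntegral.integral_symm t y, neg_neg]
  rw [Bfn_sub χ hOK t y ht0 hy0, ← hS, hratio]
  calc t * Real.exp (∫ u in t..y, (1 - χ u) / u)
      ≤ t * Real.exp (Real.log m - Real.log t) :=
        mul_le_mul_of_nonneg_left (Real.exp_le_exp.2 hkey) ht0
    _ = m := by
        rw [Real.exp_sub, Real.exp_log hm0, Real.exp_log ht]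
        field_simp
    _ = y - S := by rw [hmdef]

/-- Lemma 5.2 of Granville–Soundararajan, "The number of unsieved integers up to x":
for `0 ≤ t ≤ y`, `y E(t)/E(y) - t ≤ B(y) - B(t) ≤ y - t E(y)/E(t)`; equivalently
(when the divisions make sense), `E(t) ≤ (E(y)/y)(t + B(y) - B(t))` and
`E(y) ≤ (E(t)/t)(y - B(y) + B(t))`. -/
theorem lemma5_2 (χ : ℝ → ℝ) (hχ : ChiOK χ)
    (t y : ℝ) (ht : 0 ≤ t) (hty : t ≤ y) :
    (y * Efn χ t / Efn χ y - t ≤ Bfn χ y - Bfn χ t ∧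
      Bfn χ y - Bfn χ t ≤ y - t * Efn χ y / Efn χ t) ∧
    (0 < y → Efn χ t ≤ Efn χ y / y * (t + Bfn χ y - Bfn χ t)) ∧
    (0 < t → Efn χ y ≤ Efn χ t / t * (y - Bfn χ y + Bfn χ t)) := by
  have hy0 : 0 ≤ y := ht.trans hty
  have hEy : 0 < Efn χ y := Real.exp_pos _
  have hEt : 0 < Efn χ t := Real.exp_pos _
  have hlow : ∀ hy : 0 < y, y * Efn χ t / Efn χ y - t ≤ Bfn χ y - Bfn χ t := by
    intro hy
    have := key_low χ hχ t y ht hty hy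
    rw [mul_div_assoc]
    linarith
  have hhigh : Bfn χ y - Bfn χ t ≤ y - t * Efn χ y / Efn χ t := by
    rcases lt_or_eq_of_le ht with h | h
    · have := key_high χ hχ t y h hty
      rw [mul_div_assoc]
      linarith
    · -- t = 0
      rw [← h]
      simp only [zero_mul, zero_div, sub_zero]
      have h1 : Bfn χ y - Bfn χ 0 = ∫ u in (0:ℝ)..y, χ u := Bfn_sub χ hχ 0 y le_rfl hy0
      have h2 := S_le χ hχ 0 y le_rfl (h ▸ hty)
      rw [← h] at *
      rw [h1]
      linarith [h2]
  refine ⟨⟨?_, hhigh⟩, ?_, ?_⟩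
  · rcases lt_or_eq_of_le hy0 with hy | hy
    · exact hlow hy
    · -- y = 0, hence t = 0
      have ht0 : t = 0 := le_antisymm (hty.trans hy.symm.le) ht
      rw [← hy, ht0]
      simp
  · intro hy
    have h := key_low χ hχ t y ht hty hy
    have : Efn χ t = y * (Efn χ t / Efn χ y) * (Efn χ y / y) := by
      field_simp
    rw [this]
    calc y * (Efn χ t / Efn χ y) * (Efn χ y / y)
        ≤ (t + (Bfn χ y - Bfn χ t)) * (Efn χ y / y) := by
          apply mul_le_mul_of_nonneg_right h (by positivity)
      _ = Efn χ y / y * (t + Bfn χ y - Bfn χ t) := by ring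
  · intro htpos
    have h := key_high χ hχ t y htpos hty
    have : Efn χ y = t * (Efn χ y / Efn χ t) * (Efn χ t / t) := by
      field_simp
    rw [this]
    calc t * (Efn χ y / Efn χ t) * (Efn χ t / t)
        ≤ (y - (Bfn χ y - Bfn χ t)) * (Efn χ t / t) := by
          apply mul_le_mul_of_nonneg_right h (by positivity)
      _ = Efn χ t / t * (y - Bfn χ y + Bfn χ t) := by ring
end
end

section
/- Let χ:[0,∞)→ℝ be measurable with χ(t)=1 for 0 ≤ t ≤ 1 and 0 ≤ χ(t) ≤ 1 for all t, and let σ be the corresponding solution of the integral equation. Suppose u ≥ 1 is a champion for σ, that is, σ(u) − ρ(E(u)) ≤ σ(v) − ρ(E(v)) for all 0 ≤ v ≤ u. If u·ρ(E(u)) ≤ ∫_0^u χ(t) ρ(E(u−t)) dt, then σ(u) ≥ ρ(E(u)); and if the strict inequality u·ρ(E(u)) < ∫_0^u χ(t) ρ(E(u−t)) dt holds, then σ(u) > ρ(E(u)). -/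
open MeasureTheory Filter Real

noncomputable section

/-- The Dickman–de Bruijn function: continuous on `[0,∞)`, `ρ = 1` on `[0,1]`,
and `w ρ'(w) = -ρ(w-1)` for `w > 1`. -/
def IsDickman (ρ : ℝ → ℝ) : Prop :=
  ContinuousOn ρ (Set.Ici 0) ∧ (∀ w, 0 ≤ w → w ≤ 1 → ρ w = 1) ∧
    ∀ w, 1 < w → HasDerivAt ρ (-ρ (w - 1) / w) w

lemma aux_ii {f : ℝ → ℝ} {u C : ℝ} (hu : 0 ≤ u)
    (hm : AEMeasurable f (volume.restrict (Set.Ioc 0 u)))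
    (hb : ∀ t ∈ Set.Ioc (0:ℝ) u, |f t| ≤ C) :
    IntervalIntegrable f volume 0 u := by
  rw [intervalIntegrable_iff_integrableOn_Ioc_of_le hu]
  refine Integrable.mono' (integrable_const C) hm.aestronglyMeasurable ?_
  filter_upwards [ae_restrict_mem measurableSet_Ioc] with t ht
  simpa [Real.norm_eq_abs] using hb t ht

lemma aux_comp_ae {h : ℝ → ℝ} {u : ℝ} (hc : ContinuousOn h (Set.Icc 0 u)) :
    AEMeasurable (fun t => h (u - t)) (volume.restrict (Set.Ioc 0 u)) := by
  have h1 : ContinuousOn (fun t => h (u - t)) (Set.Icc 0 u) := by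
    refine hc.comp (Continuous.continuousOn (by continuity)) ?_
    intro t ht
    exact ⟨sub_nonneg.mpr ht.2, sub_le_self u ht.1⟩
  exact (h1.aemeasurable measurableSet_Icc).mono_measure
    (Measure.restrict_mono Set.Ioc_subset_Icc_self le_rfl)

lemma aux_ii2 {χ h : ℝ → ℝ} {u C : ℝ} (hu : 0 ≤ u) (hχ : Measurable χ)
    (hh : ContinuousOn h (Set.Icc 0 u))
    (hb : ∀ t ∈ Set.Ioc (0:ℝ) u, |χ t * h (u - t)| ≤ C) :
    IntervalIntegrable (fun t => χ t * h (u - t)) volume 0 u :=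
  aux_ii hu (hχ.aemeasurable.mul (aux_comp_ae hh)) hb

set_option maxHeartbeats 1000000 in
/-- Proposition 7.1 of Granville–Soundararajan, "The number of unsieved integers up
to x": if `u` is a champion for `σ` (i.e. `σ(u) - ρ(E(u)) ≤ σ(v) - ρ(E(v))` for all
`0 ≤ v ≤ u`) and `u ρ(E(u)) ≤ ∫_0^u χ(t) ρ(E(u-t)) dt`, then `σ(u) ≥ ρ(E(u))`;
if the inequality is strict then `σ(u) > ρ(E(u))`. -/
theorem proposition7_1 (χ σ ρ : ℝ → ℝ)
    (hχ : ChiOK χ) (hσ : IsSoln χ σ) (hρ : IsDickman ρ)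
    (u : ℝ) (hu : 1 ≤ u)
    (hchampion : ∀ v : ℝ, 0 ≤ v → v ≤ u →
      σ u - ρ (Efn χ u) ≤ σ v - ρ (Efn χ v)) :
    (u * ρ (Efn χ u) ≤ (∫ t in (0:ℝ)..u, χ t * ρ (Efn χ (u - t))) →
      ρ (Efn χ u) ≤ σ u) ∧
    (u * ρ (Efn χ u) < (∫ t in (0:ℝ)..u, χ t * ρ (Efn χ (u - t))) →
      ρ (Efn χ u) < σ u) := by
  obtain ⟨hχm, hχ1, hχ01⟩ := hχ
  obtain ⟨hσc, hσ1, hσeq⟩ := hσ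
  obtain ⟨hρc, hρ1, -⟩ := hρ
  have hu0 : (0:ℝ) ≤ u := le_trans zero_le_one hu
  -- continuity of the primitive of (1 - χ t)/t, hence of ρ ∘ Efn
  set g : ℝ → ℝ := fun t => (1 - χ t) / t with hg
  have hgm : Measurable g := (measurable_const.sub hχm).div measurable_id
  have hgb : ∀ t ∈ Set.Icc (0:ℝ) u, |g t| ≤ 1 := by
    intro t ht
    rcases le_or_gt t 1 with h1 | h1
    · have : χ t = 1 := hχ1 t ht.1 h1
      simp [hg, this]
    · have ht0 : (0:ℝ) < t := lt_trans zero_lt_one h1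
      have h01 := hχ01 t ht.1
      rw [abs_div, abs_of_nonneg (by linarith [h01.2] : (0:ℝ) ≤ 1 - χ t),
        abs_of_pos ht0, div_le_one ht0]
      linarith [h01.1]
  have hgInt : IntegrableOn g (Set.Icc 0 u) volume := by
    refine Integrable.mono' (integrable_const 1) hgm.aestronglyMeasurable.restrict ?_
    filter_upwards [ae_restrict_mem measurableSet_Icc] with t ht
    simpa [Real.norm_eq_abs] using hgb t ht
  have hPc : ContinuousOn (fun s => ∫ t in (0:ℝ)..s, g t) (Set.Icc 0 u) := by
    have := intervalIntegral.continuousOn_primitive_interval (a := 0) (b := u)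
      (f := g) (μ := volume) (by rwa [Set.uIcc_of_le hu0])
    rwa [Set.uIcc_of_le hu0] at this
  have hEc : ContinuousOn (fun s => Efn χ s) (Set.Icc 0 u) :=
    Real.continuous_exp.comp_continuousOn hPc
  have hρEc : ContinuousOn (fun s => ρ (Efn χ s)) (Set.Icc 0 u) :=
    hρc.comp hEc (fun s _ => (Real.exp_pos _).le)
  -- bounds
  obtain ⟨Cσ, hCσ⟩ := isCompact_Icc.exists_bound_of_continuousOn
    (hσc.mono (fun x (hx : x ∈ Set.Icc (0:ℝ) u) => hx.1))
  obtain ⟨Cρ, hCρ⟩ := isCompact_Icc.exists_bound_of_continuousOn hρEc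
  have hχb : ∀ t ∈ Set.Ioc (0:ℝ) u, |χ t| ≤ 1 := by
    intro t ht
    have := hχ01 t ht.1.le
    rw [abs_of_nonneg this.1]; exact this.2
  -- integrability
  have hIntχ : IntervalIntegrable χ volume 0 u :=
    aux_ii hu0 hχm.aemeasurable hχb
  have hIntσ : IntervalIntegrable (fun t => χ t * σ (u - t)) volume 0 u := by
    refine aux_ii2 (h := σ) (C := Cσ) hu0 hχm
      (hσc.mono (fun x (hx : x ∈ Set.Icc (0:ℝ) u) => hx.1)) ?_
    intro t ht
    rw [abs_mul]
    calc |χ t| * |σ (u - t)| ≤ 1 * Cσ := by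
          refine mul_le_mul (hχb t ht) ?_ (abs_nonneg _) zero_le_one
          simpa [Real.norm_eq_abs] using
            hCσ (u - t) ⟨sub_nonneg.mpr ht.2, by linarith [ht.1]⟩
      _ = Cσ := one_mul _
  have hIntρE : IntervalIntegrable (fun t => χ t * ρ (Efn χ (u - t))) volume 0 u := by
    refine aux_ii2 (h := fun s => ρ (Efn χ s)) (C := Cρ) hu0 hχm hρEc ?_
    intro t ht
    rw [abs_mul]
    calc |χ t| * |ρ (Efn χ (u - t))| ≤ 1 * Cρ := by
          refine mul_le_mul (hχb t ht) ?_ (abs_nonneg _) zero_le_one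
          simpa [Real.norm_eq_abs] using
            hCρ (u - t) ⟨sub_nonneg.mpr ht.2, by linarith [ht.1]⟩
      _ = Cρ := one_mul _
  -- the integral equation, for all u ≥ 1
  have hEq : u * σ u = ∫ t in (0:ℝ)..u, χ t * σ (u - t) := by
    rcases eq_or_lt_of_le hu with h1 | h1
    · subst h1
      rw [hσ1 1 zero_le_one le_rfl,
        intervalIntegral.integral_congr (g := fun _ => (1:ℝ)) ?_]
      · simp
      · intro t ht
        rw [Set.uIcc_of_le zero_le_one] at ht
        show χ t * σ (1 - t) = 1
        rw [hχ1 t ht.1 ht.2, hσ1 (1 - t) (by linarith [ht.2]) (by linarith [ht.1])]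
        norm_num
    · exact hσeq u h1
  set Iχ := ∫ t in (0:ℝ)..u, χ t with hIχ
  set R := ∫ t in (0:ℝ)..u, χ t * ρ (Efn χ (u - t)) with hR
  set D := σ u - ρ (Efn χ u) with hD
  -- key inequality: Iχ * D ≤ u * σ u - R
  have key : Iχ * D ≤ u * σ u - R := by
    have hmono : (∫ t in (0:ℝ)..u, χ t * D) ≤
        ∫ t in (0:ℝ)..u, (χ t * σ (u - t) - χ t * ρ (Efn χ (u - t))) := by
      refine intervalIntegral.integral_mono_on hu0 (hIntχ.mul_const _)
        (hIntσ.sub hIntρE) ?_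
      intro t ht
      have hch := hchampion (u - t) (sub_nonneg.mpr ht.2) (by linarith [ht.1])
      have hχt := (hχ01 t ht.1).1
      calc χ t * D ≤ χ t * (σ (u - t) - ρ (Efn χ (u - t))) :=
            mul_le_mul_of_nonneg_left hch hχt
        _ = χ t * σ (u - t) - χ t * ρ (Efn χ (u - t)) := mul_sub _ _ _
    rw [intervalIntegral.integral_mul_const,
      intervalIntegral.integral_sub hIntσ hIntρE, ← hEq] at hmono
    exact hmono
  have hIle : Iχ ≤ u := by
    have := intervalIntegral.integral_mono_on hu0 hIntχ intervalIntegrable_const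
      (g := fun _ => (1:ℝ)) (fun t ht => (hχ01 t ht.1).2)
    simpa using this
  constructor
  · -- weak inequality
    intro hle
    by_contra hcon
    push_neg at hcon
    have hDneg : D < 0 := by rw [hD]; linarith
    -- Iχ * D ≤ u * σ u - R ≤ u * σ u - u * ρ(E u) = u * D
    have h2 : Iχ * D ≤ u * D := by
      have : u * σ u - R ≤ u * D := by rw [hD]; nlinarith
      linarith
    have hIeq : Iχ = u := by nlinarith
    -- hence χ = 1 a.e. on (0, u]
    have hzero : (∫ t in (0:ℝ)..u, (1 - χ t)) = 0 := by
      rw [intervalIntegral.integral_sub intervalIntegrable_const hIntχ]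
      simp [← hIχ, hIeq]
    have hae : (fun t => 1 - χ t) =ᵐ[volume.restrict (Set.Ioc 0 u)] 0 := by
      rw [← intervalIntegral.integral_eq_zero_iff_of_le_of_nonneg_ae hu0 ?_
        (intervalIntegrable_const.sub hIntχ)]
      · exact hzero
      · filter_upwards [ae_restrict_mem measurableSet_Ioc] with t ht
        simpa using (hχ01 t ht.1.le).2
    -- all relevant Efn values are 1
    have hE1 : ∀ s, 0 ≤ s → s ≤ u → Efn χ s = 1 := by
      intro s hs0 hsu
      have haes : (fun t => (1 - χ t) / t) =ᵐ[volume.restrict (Set.Ioc 0 s)] 0 := by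
        have := hae.filter_mono (ae_mono (Measure.restrict_mono
          (Set.Ioc_subset_Ioc_right hsu) le_rfl))
        filter_upwards [this] with t ht
        simp only [Pi.zero_apply] at ht ⊢
        rw [ht, zero_div]
      have : (∫ t in (0:ℝ)..s, (1 - χ t) / t) = 0 := by
        rw [intervalIntegral.integral_of_le hs0, integral_congr_ae haes]
        simp
      simp [Efn, this]
    have hρ1' : ∀ s, 0 ≤ s → s ≤ u → ρ (Efn χ s) = 1 := by
      intro s hs0 hsu
      rw [hE1 s hs0 hsu]
      exact hρ1 1 zero_le_one le_rfl
    have hσu1 : σ u < 1 := by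
      have := hρ1' u hu0 le_rfl
      rw [this] at hcon; exact hcon
    -- σ u is a minimum of σ on [0,u]
    have hmin : ∀ v, 0 ≤ v → v ≤ u → σ u ≤ σ v := by
      intro v hv0 hvu
      have hv := hchampion v hv0 hvu
      rw [hρ1' v hv0 hvu] at hv
      linarith [hρ1' u hu0 le_rfl, hD]
    -- u σ(u) = ∫_0^u σ(s) ds
    have hEq2 : u * σ u = ∫ s in (0:ℝ)..u, σ s := by
      rw [hEq]
      have h1 : (∫ t in (0:ℝ)..u, χ t * σ (u - t)) = ∫ t in (0:ℝ)..u, σ (u - t) := by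
        rw [intervalIntegral.integral_of_le hu0, intervalIntegral.integral_of_le hu0]
        apply integral_congr_ae
        filter_upwards [hae] with t ht
        simp only [Pi.zero_apply] at ht
        have : χ t = 1 := by linarith
        rw [this, one_mul]
      rw [h1, intervalIntegral.integral_comp_sub_left (fun s => σ s) u]
      norm_num
    have hσInt : ∀ a b, 0 ≤ a → a ≤ b → b ≤ u → IntervalIntegrable σ volume a b := by
      intro a b ha hab hbu
      apply ContinuousOn.intervalIntegrable
      apply hσc.mono
      intro x hx
      rw [Set.uIcc_of_le hab] at hx
      exact le_trans ha hx.1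
    have hsplit : (∫ s in (0:ℝ)..u, σ s) =
        (∫ s in (0:ℝ)..1, σ s) + ∫ s in (1:ℝ)..u, σ s :=
      (intervalIntegral.integral_add_adjacent_intervals
        (hσInt 0 1 le_rfl zero_le_one hu) (hσInt 1 u zero_le_one hu le_rfl)).symm
    have h01 : (∫ s in (0:ℝ)..1, σ s) = 1 := by
      rw [intervalIntegral.integral_congr (g := fun _ => (1:ℝ)) ?_]
      · simp
      · intro s hs
        rw [Set.uIcc_of_le zero_le_one] at hs
        exact hσ1 s hs.1 hs.2
    have h1u : (u - 1) * σ u ≤ ∫ s in (1:ℝ)..u, σ s := by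
      have := intervalIntegral.integral_mono_on hu
        (intervalIntegrable_const (c := σ u)) (hσInt 1 u zero_le_one hu le_rfl)
        (g := σ) (fun s hs => hmin s (le_trans zero_le_one hs.1) hs.2)
      simpa [smul_eq_mul] using this
    nlinarith
  · -- strict inequality
    intro hlt
    by_contra hcon
    push_neg at hcon
    have hDle : D ≤ 0 := by rw [hD]; linarith
    have h2 : u * D ≤ Iχ * D := mul_le_mul_of_nonpos_right hIle hDle
    have h3 : u * σ u - R < u * D := by rw [hD]; nlinarith
    linarith
end
end
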